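/- arXiv:1209.6156 — 6 statements merged into one kernel-verified Lean document; each statement's English description precedes it below -/
import Mathlib

section
/- Let β, c0 > 0, δ > 0 and α0 ∈ ℝ, and let K = {b ∈ H : Σ_{k=1}^∞ b_k² (1+k²)^{α0 + δ + 1/2} e^{2 c0 k^β} ≤ 1}, where b_k denote the coordinates of b in a fixed orthonormal basis {g_k} of a real separable Hilbert space H. Then there exist constants C > 0 and ε0 > 0 such that for all 0 < ε < ε0 the covering number of K by balls of radius ε in the Hilbert space norm satisfies log N(K, ‖·‖_H, ε) ≤ C (log(1/ε))^{1 + 1/β}. -/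
open MeasureTheory ProbabilityTheory Real Filter
open scoped ENNReal NNReal RealInnerProductSpace

set_option maxHeartbeats 2000000 in
/-- metric entropy of the RKHS unit ball in the severely ill-posed case.
For `K = {b : Σ_k b_k² (1+k²)^{α0+δ+1/2} e^{2c0 k^β} ≤ 1}` one has
`log N(K, ‖·‖, ε) ≤ C (log(1/ε))^{1+1/β}` for all sufficiently small `ε > 0`. -/
theorem rkhs_unit_ball_covering
    {H : Type*} [NormedAddCommGroup H] [InnerProductSpace ℝ H] [CompleteSpace H]
    (G : HilbertBasis ℕ ℝ H)
    (β c0 δ : ℝ) (hβ : 0 < β) (hc0 : 0 < c0) (hδ : 0 < δ) (α0 : ℝ) :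
    ∃ C ε0 : ℝ, 0 < C ∧ 0 < ε0 ∧ ∀ ε : ℝ, 0 < ε → ε < ε0 →
      ∃ s : Finset H,
        ({b : H | ∑' k : ℕ, ENNReal.ofReal
            (⟪b, G k⟫ ^ 2 * (1 + (k : ℝ) ^ 2) ^ (α0 + δ + 1 / 2)
              * Real.exp (2 * c0 * (k : ℝ) ^ β)) ≤ 1}
          ⊆ ⋃ x ∈ s, Metric.closedBall x ε) ∧
        (s.card : ℝ) ≤ Real.exp (C * Real.log (1 / ε) ^ (1 + 1 / β)) := by
  classical
  set p : ℝ := α0 + δ + 1 / 2 with hp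
  clear_value p
  set w : ℕ → ℝ := fun k => (1 + (k : ℝ) ^ 2) ^ p * Real.exp (2 * c0 * (k : ℝ) ^ β)
    with hwdef
  clear_value w
  have hbase : ∀ k : ℕ, (0 : ℝ) < 1 + (k : ℝ) ^ 2 := fun k => by positivity
  have hwpos : ∀ k, 0 < w k := by
    intro k
    simp only [hwdef]
    exact mul_pos (Real.rpow_pos_of_pos (hbase k) p) (Real.exp_pos _)
  -- Eventually `exp (c0 k^β) ≤ w k`.
  have hev : ∀ᶠ k : ℕ in atTop, Real.exp (c0 * (k : ℝ) ^ β) ≤ w k := by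
    have h1 : Tendsto (fun k : ℕ => (k : ℝ) ^ (β / 2)) atTop atTop :=
      (tendsto_rpow_atTop (by positivity)).comp tendsto_natCast_atTop_atTop
    filter_upwards [h1.eventually_ge_atTop ((|p| * (2 ^ (β / 4) / (β / 4))) / c0),
      eventually_ge_atTop 1] with k hk hk1
    have hk1' : (1 : ℝ) ≤ (k : ℝ) := by exact_mod_cast hk1
    have hkpos : (0 : ℝ) < (k : ℝ) := by linarith
    -- key: -p * log (1+k²) ≤ c0 * k^β
    have hlog : |p| * Real.log (1 + (k : ℝ) ^ 2) ≤ c0 * (k : ℝ) ^ β := by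
      have h2 : Real.log (1 + (k : ℝ) ^ 2) ≤ (1 + (k : ℝ) ^ 2) ^ (β / 4) / (β / 4) :=
        Real.log_le_rpow_div (le_of_lt (hbase k)) (by positivity)
      have h3 : (1 + (k : ℝ) ^ 2) ^ (β / 4) ≤ (2 * (k : ℝ) ^ 2) ^ (β / 4) := by
        apply Real.rpow_le_rpow (le_of_lt (hbase k)) _ (by positivity)
        nlinarith [sq_nonneg ((k : ℝ) - 1)]
      have h4 : (2 * (k : ℝ) ^ 2) ^ (β / 4) = 2 ^ (β / 4) * (k : ℝ) ^ (β / 2) := by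
        rw [Real.mul_rpow (by norm_num) (by positivity)]
        congr 1
        rw [← Real.rpow_natCast (k : ℝ) 2, ← Real.rpow_mul (le_of_lt hkpos)]
        congr 1
        push_cast
        ring
      have h5 : (k : ℝ) ^ (β / 2) * (k : ℝ) ^ (β / 2) = (k : ℝ) ^ β := by
        rw [← Real.rpow_add hkpos]; ring_nf
      have hA : |p| * (2 ^ (β / 4) / (β / 4)) ≤ c0 * (k : ℝ) ^ (β / 2) := by
        rw [div_le_iff₀ hc0] at hk
        linarith [hk]
      have htpos : (0 : ℝ) < (k : ℝ) ^ (β / 2) := Real.rpow_pos_of_pos hkpos _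
      have h6 : |p| * Real.log (1 + (k : ℝ) ^ 2)
          ≤ |p| * ((2 ^ (β / 4) * (k : ℝ) ^ (β / 2)) / (β / 4)) := by
        apply mul_le_mul_of_nonneg_left _ (abs_nonneg p)
        calc Real.log (1 + (k : ℝ) ^ 2) ≤ (1 + (k : ℝ) ^ 2) ^ (β / 4) / (β / 4) := h2
          _ ≤ (2 * (k : ℝ) ^ 2) ^ (β / 4) / (β / 4) := by gcongr
          _ = (2 ^ (β / 4) * (k : ℝ) ^ (β / 2)) / (β / 4) := by rw [h4]
      have h7 : |p| * ((2 ^ (β / 4) * (k : ℝ) ^ (β / 2)) / (β / 4))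
          = (|p| * (2 ^ (β / 4) / (β / 4))) * (k : ℝ) ^ (β / 2) := by ring
      calc |p| * Real.log (1 + (k : ℝ) ^ 2)
          ≤ (|p| * (2 ^ (β / 4) / (β / 4))) * (k : ℝ) ^ (β / 2) := by rw [← h7]; exact h6
        _ ≤ (c0 * (k : ℝ) ^ (β / 2)) * (k : ℝ) ^ (β / 2) := by
            apply mul_le_mul_of_nonneg_right hA (le_of_lt htpos)
        _ = c0 * (k : ℝ) ^ β := by rw [mul_assoc, h5]
    have hexp : w k = Real.exp (p * Real.log (1 + (k : ℝ) ^ 2) + 2 * c0 * (k : ℝ) ^ β) := by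
      simp only [hwdef, Real.exp_add]
      congr 1
      rw [Real.rpow_def_of_pos (hbase k), mul_comm]
    rw [hexp]
    apply Real.exp_le_exp.mpr
    have hthis : -(|p| * Real.log (1 + (k : ℝ) ^ 2)) ≤ p * Real.log (1 + (k : ℝ) ^ 2) := by
      have hlognn : 0 ≤ Real.log (1 + (k : ℝ) ^ 2) :=
        Real.log_nonneg (by nlinarith [sq_nonneg (k : ℝ)])
      have := neg_abs_le p
      nlinarith [abs_nonneg p]
    linarith
  obtain ⟨N0, hN0⟩ := eventually_atTop.mp hev
  -- Uniform bound on `1 / w k`.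
  set B : ℝ := 1 + ∑ k ∈ Finset.range N0, 1 / w k with hBdef
  clear_value B
  have hsumnn : (0 : ℝ) ≤ ∑ k ∈ Finset.range N0, 1 / w k :=
    Finset.sum_nonneg fun k _ => le_of_lt (one_div_pos.mpr (hwpos k))
  have hB1 : (1 : ℝ) ≤ B := by rw [hBdef]; linarith
  have hBpos : 0 < B := lt_of_lt_of_le one_pos hB1
  have hwB : ∀ k, 1 / w k ≤ B := by
    intro k
    rcases lt_or_ge k N0 with hk | hk
    · have h1 : 1 / w k ≤ ∑ j ∈ Finset.range N0, 1 / w j :=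
        Finset.single_le_sum (fun j _ => le_of_lt (one_div_pos.mpr (hwpos j)))
          (Finset.mem_range.mpr hk)
      rw [hBdef]
      linarith
    · have h1 : Real.exp (c0 * (k : ℝ) ^ β) ≤ w k := hN0 k hk
      have h2 : (1 : ℝ) ≤ Real.exp (c0 * (k : ℝ) ^ β) :=
        Real.one_le_exp (by positivity)
      have h3 : 1 / w k ≤ 1 := by
        rw [div_le_one (hwpos k)]; linarith
      linarith
  set R : ℝ := Real.sqrt B with hRdef
  clear_value R
  have hRpos : 0 < R := by rw [hRdef]; exact Real.sqrt_pos.mpr hBpos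
  -- Constants
  set C1 : ℝ := (N0 : ℝ) + 2 + (3 / c0) ^ (1 / β) with hC1def
  clear_value C1
  have hC1pos : 0 < C1 := by
    rw [hC1def]; positivity
  set A : ℝ := 2 * R * C1 + 7 with hAdef
  clear_value A
  have hApos : (0 : ℝ) < A := by
    rw [hAdef]; positivity
  set C2 : ℝ := |Real.log A| + 1 / β + 1 with hC2def
  clear_value C2
  have hC2pos : 0 < C2 := by
    rw [hC2def]; positivity
  refine ⟨C1 * C2, Real.exp (-1), mul_pos hC1pos hC2pos, Real.exp_pos _, ?_⟩
  intro ε hε hεlt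
  -- Basic facts about ε and L
  have hεhalf : ε < 1 / 2 := by
    have h2 : (2 : ℝ) ≤ Real.exp 1 := by
      have := Real.add_one_le_exp (1 : ℝ); linarith
    have h3 : Real.exp (-1) ≤ 1 / 2 := by
      rw [Real.exp_neg, one_div]
      exact inv_anti₀ (by norm_num) h2
    linarith
  set L : ℝ := Real.log (1 / ε) with hLdef
  clear_value L
  have hεinv : Real.exp L = 1 / ε := by
    rw [hLdef]
    exact Real.exp_log (by positivity)
  have hL1 : 1 < L := by
    rw [hLdef]
    have h1 : Real.exp 1 < 1 / ε := by
      have hthis : ε < 1 / Real.exp 1 := by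
        rw [one_div, ← Real.exp_neg]
        exact hεlt
      calc Real.exp 1 = 1 / (1 / Real.exp 1) := by field_simp
        _ < 1 / ε := div_lt_div_of_pos_left one_pos hε hthis
    calc (1 : ℝ) = Real.log (Real.exp 1) := (Real.log_exp 1).symm
      _ < Real.log (1 / ε) := Real.log_lt_log (Real.exp_pos 1) h1
  have hLpos : 0 < L := by linarith
  have hLβ : (1 : ℝ) ≤ L ^ (1 / β) := by
    calc (1 : ℝ) = 1 ^ (1 / β) := (Real.one_rpow _).symm
      _ ≤ L ^ (1 / β) := Real.rpow_le_rpow zero_le_one hL1.le (by positivity)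
  -- Choose truncation level N
  set N : ℕ := N0 + 1 + ⌈(3 * L / c0) ^ (1 / β)⌉₊ with hNdef
  clear_value N
  have hN1 : 1 ≤ N := by rw [hNdef]; omega
  have hNN0 : N0 ≤ N := by rw [hNdef]; omega
  have hNposR : (0 : ℝ) < (N : ℝ) := by exact_mod_cast hN1
  have hN1R : (1 : ℝ) ≤ (N : ℝ) := by exact_mod_cast hN1
  have hNne : (N : ℝ) ≠ 0 := ne_of_gt hNposR
  have hxnn : (0 : ℝ) ≤ 3 * L / c0 := by positivity
  have hNge : (3 * L / c0) ^ (1 / β) ≤ (N : ℝ) := by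
    calc (3 * L / c0) ^ (1 / β) ≤ (⌈(3 * L / c0) ^ (1 / β)⌉₊ : ℝ) := Nat.le_ceil _
      _ ≤ (N : ℝ) := by rw [hNdef]; push_cast; linarith
  have hNβ : 3 * L ≤ c0 * (N : ℝ) ^ β := by
    have h1 : 3 * L / c0 ≤ (N : ℝ) ^ β := by
      have h2 : ((3 * L / c0) ^ (1 / β)) ^ β ≤ (N : ℝ) ^ β :=
        Real.rpow_le_rpow (Real.rpow_nonneg hxnn _) hNge hβ.le
      rwa [← Real.rpow_mul hxnn, one_div, inv_mul_cancel₀ (ne_of_gt hβ),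
        Real.rpow_one] at h2
    rw [div_le_iff₀ hc0] at h1
    linarith
  have hNup : (N : ℝ) ≤ C1 * L ^ (1 / β) := by
    have h1 : (⌈(3 * L / c0) ^ (1 / β)⌉₊ : ℝ) < (3 * L / c0) ^ (1 / β) + 1 :=
      Nat.ceil_lt_add_one (Real.rpow_nonneg hxnn _)
    have h2 : (3 * L / c0) ^ (1 / β) = (3 / c0) ^ (1 / β) * L ^ (1 / β) := by
      rw [← Real.mul_rpow (by positivity) hLpos.le]
      congr 1; ring
    have h3 : (N : ℝ) = (N0 : ℝ) + 1 + (⌈(3 * L / c0) ^ (1 / β)⌉₊ : ℝ) := by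
      rw [hNdef]; push_cast; ring
    rw [h3, hC1def]
    have h4 : (0 : ℝ) ≤ (3 / c0) ^ (1 / β) := Real.rpow_nonneg (by positivity) _
    nlinarith [h1, h2, hLβ, h4, (Nat.cast_nonneg N0 : (0:ℝ) ≤ (N0:ℝ))]
  -- grid spacing and range
  set h : ℝ := ε / N with hhdef
  clear_value h
  have hhpos : 0 < h := by rw [hhdef]; exact div_pos hε hNposR
  set m : ℕ := ⌈R / h⌉₊ + 1 with hmdef
  clear_value m
  have hmub : (m : ℝ) ≤ R / h + 2 := by
    have := Nat.ceil_lt_add_one (by positivity : (0:ℝ) ≤ R / h)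
    rw [hmdef]; push_cast; linarith
  have hmlb : R / h + 1 ≤ (m : ℝ) := by
    have := Nat.le_ceil (R / h)
    rw [hmdef]; push_cast; linarith
  -- the grid
  set T : Finset ℝ := (Finset.Icc (-(m : ℤ)) (m : ℤ)).image (fun z : ℤ => (z : ℝ) * h)
    with hTdef
  clear_value T
  set s : Finset H :=
    (Fintype.piFinset (fun _ : Fin N => T)).image
      (fun f : Fin N → ℝ => ∑ j : Fin N, f j • G (j : ℕ)) with hsdef
  clear_value s
  refine ⟨s, ?_, ?_⟩
  · -- covering
    intro b hb
    simp only [Set.mem_setOf_eq] at hb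
    set a : ℕ → ℝ := fun k => ⟪b, G k⟫ ^ 2 * (1 + (k : ℝ) ^ 2) ^ p
      * Real.exp (2 * c0 * (k : ℝ) ^ β) with hadef
    have haw : ∀ k, a k = ⟪b, G k⟫ ^ 2 * w k := fun k => by
      simp only [hadef, hwdef]; ring
    have hann : ∀ k, 0 ≤ a k := fun k => by
      rw [haw]; exact mul_nonneg (sq_nonneg _) (hwpos k).le
    have hsum_ne : (∑' k, ENNReal.ofReal (a k)) ≠ ⊤ :=
      ne_top_of_le_ne_top ENNReal.one_ne_top hb
    have hsa : Summable a := by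
      have h1 := ENNReal.summable_toReal hsum_ne
      have h2 : (fun k => (ENNReal.ofReal (a k)).toReal) = a :=
        funext fun k => ENNReal.toReal_ofReal (hann k)
      rwa [h2] at h1
    have hta : ∑' k, a k ≤ 1 := by
      have h1 : (∑' k, ENNReal.ofReal (a k)).toReal = ∑' k, a k := by
        rw [ENNReal.tsum_toReal_eq (fun k => ENNReal.ofReal_ne_top)]
        congr 1
        funext k
        exact ENNReal.toReal_ofReal (hann k)
      have h2 : (∑' k, ENNReal.ofReal (a k)).toReal ≤ (1 : ℝ≥0∞).toReal :=
        ENNReal.toReal_mono ENNReal.one_ne_top hb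
      rw [h1] at h2
      simpa using h2
    have hak1 : ∀ k, a k ≤ 1 := by
      intro k
      have h1 : ENNReal.ofReal (a k) ≤ 1 := le_trans (ENNReal.le_tsum k) hb
      exact (ENNReal.ofReal_le_one.mp h1)
    have hbk2 : ∀ k, ⟪b, G k⟫ ^ 2 ≤ 1 / w k := by
      intro k
      rw [le_div_iff₀ (hwpos k)]
      calc ⟪b, G k⟫ ^ 2 * w k = a k := (haw k).symm
        _ ≤ 1 := hak1 k
    have hbkR : ∀ k, |⟪b, G k⟫| ≤ R := by
      intro k
      have h1 : ⟪b, G k⟫ ^ 2 ≤ B := le_trans (hbk2 k) (hwB k)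
      rw [hRdef]
      calc |⟪b, G k⟫| = Real.sqrt (⟪b, G k⟫ ^ 2) := (Real.sqrt_sq_eq_abs _).symm
        _ ≤ Real.sqrt B := Real.sqrt_le_sqrt h1
    -- define the approximation
    set c : ℕ → ℝ := fun k => ((round (⟪b, G k⟫ / h) : ℤ) : ℝ) * h with hcdef
    have hcclose : ∀ k, |⟪b, G k⟫ - c k| ≤ h / 2 := by
      intro k
      have h1 : |⟪b, G k⟫ / h - (round (⟪b, G k⟫ / h) : ℝ)| ≤ 1 / 2 :=
        abs_sub_round _
      have h2 : ⟪b, G k⟫ - c k = (⟪b, G k⟫ / h - (round (⟪b, G k⟫ / h) : ℝ)) * h := by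
        simp only [hcdef]
        rw [sub_mul, div_mul_cancel₀ _ (ne_of_gt hhpos)]
      rw [h2, abs_mul, abs_of_pos hhpos]
      calc |⟪b, G k⟫ / h - (round (⟪b, G k⟫ / h) : ℝ)| * h ≤ (1 / 2) * h := by
            apply mul_le_mul_of_nonneg_right h1 hhpos.le
        _ = h / 2 := by ring
    have hcT : ∀ k, c k ∈ T := by
      intro k
      rw [hTdef, Finset.mem_image]
      refine ⟨round (⟪b, G k⟫ / h), ?_, rfl⟩
      rw [Finset.mem_Icc]
      have h1 : |((round (⟪b, G k⟫ / h) : ℤ) : ℝ)| ≤ (m : ℝ) := by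
        have h2 : |(round (⟪b, G k⟫ / h) : ℝ)| ≤ |⟪b, G k⟫ / h| + 1 / 2 := by
          have := abs_sub_round (⟪b, G k⟫ / h)
          calc |(round (⟪b, G k⟫ / h) : ℝ)|
              = |⟪b, G k⟫ / h - (⟪b, G k⟫ / h - (round (⟪b, G k⟫ / h) : ℝ))| := by
                congr 1; ring
            _ ≤ |⟪b, G k⟫ / h| + |⟪b, G k⟫ / h - (round (⟪b, G k⟫ / h) : ℝ)| :=
                abs_sub _ _
            _ ≤ |⟪b, G k⟫ / h| + 1 / 2 := by linarith
        have h3 : |⟪b, G k⟫ / h| ≤ R / h := by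
          rw [abs_div, abs_of_pos hhpos]
          gcongr
          exact hbkR k
        calc |((round (⟪b, G k⟫ / h) : ℤ) : ℝ)| ≤ R / h + 1 / 2 := by
              push_cast at h2 ⊢; linarith
          _ ≤ (m : ℝ) := by linarith
      have h4 : |round (⟪b, G k⟫ / h)| ≤ (m : ℤ) := by
        have h5 : |((round (⟪b, G k⟫ / h) : ℤ) : ℝ)| ≤ ((m : ℤ) : ℝ) := by push_cast; exact h1
        exact_mod_cast h5
      exact abs_le.mp h4
    set x : H := ∑ j : Fin N, c (j : ℕ) • G (j : ℕ) with hxdef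
    clear_value x
    have hxs : x ∈ s := by
      rw [hsdef, Finset.mem_image]
      exact ⟨fun j => c (j : ℕ), Fintype.mem_piFinset.mpr fun j => hcT _, hxdef.symm⟩
    refine Set.mem_iUnion₂.mpr ⟨x, hxs, ?_⟩
    rw [Metric.mem_closedBall, dist_eq_norm]
    -- Parseval for b - x
    set y : H := b - x with hydef
    clear_value y
    have hPar : HasSum (fun k => ⟪y, G k⟫ * ⟪G k, y⟫) ⟪y, y⟫ :=
      G.hasSum_inner_mul_inner y y
    have hPar2 : HasSum (fun k => ⟪y, G k⟫ ^ 2) (‖y‖ ^ 2) := by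
      have h1 : (fun k => ⟪y, G k⟫ * ⟪G k, y⟫) = fun k => ⟪y, G k⟫ ^ 2 := by
        funext k
        rw [real_inner_comm (G k) y, sq]
      rw [h1, real_inner_self_eq_norm_sq] at hPar
      exact hPar
    -- inner products of y with basis
    have hxk : ∀ k : ℕ, ⟪x, G k⟫ = if k < N then c k else 0 := by
      intro k
      rw [hxdef, sum_inner]
      have h1 : ∀ j : Fin N, ⟪c (j : ℕ) • G (j : ℕ), G k⟫
          = c (j : ℕ) * (if (j : ℕ) = k then 1 else 0) := by
        intro j
        rw [real_inner_smul_left]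
        congr 1
        exact orthonormal_iff_ite.mp G.orthonormal _ _
      rw [Finset.sum_congr rfl fun j _ => h1 j]
      have h2 : ∑ j : Fin N, c (j : ℕ) * (if (j : ℕ) = k then 1 else 0)
          = ∑ j ∈ Finset.range N, c j * (if j = k then 1 else 0) :=
        (Finset.sum_range fun j => c j * (if j = k then 1 else 0)).symm
      rw [h2]
      have h3 : ∀ j, c j * (if j = k then 1 else 0) = if j = k then c j else 0 := by
        intro j; split <;> simp
      rw [Finset.sum_congr rfl fun j _ => h3 j, Finset.sum_ite_eq' (Finset.range N) k c]
      simp [Finset.mem_range]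
    have hyk : ∀ k : ℕ, ⟪y, G k⟫ = ⟪b, G k⟫ - (if k < N then c k else 0) := by
      intro k
      simp only [hydef, inner_sub_left, hxk]
    -- split the sum
    have hsumy : Summable (fun k => ⟪y, G k⟫ ^ 2) := hPar2.summable
    have hsplit : ‖y‖ ^ 2 = ∑ i ∈ Finset.range N, ⟪y, G i⟫ ^ 2
        + ∑' i : ℕ, ⟪y, G (i + N)⟫ ^ 2 := by
      rw [← hPar2.tsum_eq]
      exact (Summable.sum_add_tsum_nat_add N hsumy).symm
    -- grid part
    have hgrid : ∑ i ∈ Finset.range N, ⟪y, G i⟫ ^ 2 ≤ ε ^ 2 / 2 := by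
      have h1 : ∀ i ∈ Finset.range N, ⟪y, G i⟫ ^ 2 ≤ (h / 2) ^ 2 := by
        intro i hi
        rw [Finset.mem_range] at hi
        rw [hyk i, if_pos hi]
        have h2 := hcclose i
        have h3 : |⟪b, G i⟫ - c i| ^ 2 ≤ (h / 2) ^ 2 := by
          apply pow_le_pow_left₀ (abs_nonneg _) h2
        rwa [sq_abs] at h3
      calc ∑ i ∈ Finset.range N, ⟪y, G i⟫ ^ 2 ≤ ∑ _i ∈ Finset.range N, (h / 2) ^ 2 :=
            Finset.sum_le_sum h1
        _ = (N : ℝ) * (h / 2) ^ 2 := by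
            rw [Finset.sum_const, Finset.card_range, nsmul_eq_mul]
        _ = ε ^ 2 / (4 * N) := by rw [hhdef]; field_simp; ring
        _ ≤ ε ^ 2 / 2 := by
            apply div_le_div_of_nonneg_left (by positivity) (by norm_num)
            linarith
    -- tail part
    have htail : ∑' i : ℕ, ⟪y, G (i + N)⟫ ^ 2 ≤ ε ^ 2 / 2 := by
      set M : ℝ := Real.exp (-(c0 * (N : ℝ) ^ β)) with hMdef
      clear_value M
      have hMpos : 0 < M := by rw [hMdef]; exact Real.exp_pos _
      have hMsmall : M ≤ ε ^ 2 / 2 := by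
        have h1 : M ≤ Real.exp (-(3 * L)) := by
          rw [hMdef]
          apply Real.exp_le_exp.mpr
          linarith
        have h2 : Real.exp (-(3 * L)) = ε ^ 3 := by
          have hεL : Real.exp (-L) = ε := by
            rw [Real.exp_neg, hεinv, one_div, inv_inv]
          rw [show -(3 * L) = (-L) + (-L) + (-L) by ring, Real.exp_add, Real.exp_add, hεL]
          ring
        have h3 : ε ^ 3 ≤ ε ^ 2 / 2 := by nlinarith
        linarith
      have hyb : ∀ i : ℕ, ⟪y, G (i + N)⟫ = ⟪b, G (i + N)⟫ := by
        intro i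
        rw [hyk, if_neg (by omega)]
        ring
      have hterm : ∀ i : ℕ, ⟪b, G (i + N)⟫ ^ 2 ≤ M * a (i + N) := by
        intro i
        have hk : N ≤ i + N := by omega
        have h1 : Real.exp (c0 * (N : ℝ) ^ β) ≤ w (i + N) := by
          have h2 : Real.exp (c0 * ((i + N : ℕ) : ℝ) ^ β) ≤ w (i + N) :=
            hN0 _ (le_trans hNN0 hk)
          have h3 : (N : ℝ) ^ β ≤ ((i + N : ℕ) : ℝ) ^ β := by
            apply Real.rpow_le_rpow (Nat.cast_nonneg _) _ hβ.le
            exact_mod_cast hk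
          have h4 : Real.exp (c0 * (N : ℝ) ^ β) ≤ Real.exp (c0 * ((i + N : ℕ) : ℝ) ^ β) := by
            apply Real.exp_le_exp.mpr
            nlinarith
          linarith
        have h5 : ⟪b, G (i + N)⟫ ^ 2 * Real.exp (c0 * (N : ℝ) ^ β)
            ≤ ⟪b, G (i + N)⟫ ^ 2 * w (i + N) := by
          apply mul_le_mul_of_nonneg_left h1 (sq_nonneg _)
        rw [← haw] at h5
        have h6 : ⟪b, G (i + N)⟫ ^ 2 ≤ a (i + N) / Real.exp (c0 * (N : ℝ) ^ β) := by
          rw [le_div_iff₀ (Real.exp_pos _)]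
          exact h5
        rw [hMdef, Real.exp_neg]
        calc ⟪b, G (i + N)⟫ ^ 2 ≤ a (i + N) / Real.exp (c0 * (N : ℝ) ^ β) := h6
          _ = (Real.exp (c0 * (N : ℝ) ^ β))⁻¹ * a (i + N) := by
              rw [div_eq_inv_mul]
      have hsb2 : Summable (fun k => ⟪b, G k⟫ ^ 2) := by
        have h1 := (G.hasSum_inner_mul_inner b b).summable
        have h2 : (fun k => ⟪b, G k⟫ * ⟪G k, b⟫) = fun k => ⟪b, G k⟫ ^ 2 := by
          funext k; rw [real_inner_comm (G k) b, sq]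
        rwa [h2] at h1
      have hsb2' : Summable (fun i : ℕ => ⟪b, G (i + N)⟫ ^ 2) :=
        (summable_nat_add_iff N).mpr hsb2
      have hsa' : Summable (fun i : ℕ => M * a (i + N)) :=
        ((summable_nat_add_iff N).mpr hsa).mul_left M
      have htail1 : ∑' i : ℕ, a (i + N) ≤ 1 := by
        have h1 := Summable.sum_add_tsum_nat_add N hsa
        have h2 : 0 ≤ ∑ i ∈ Finset.range N, a i :=
          Finset.sum_nonneg fun i _ => hann i
        linarith
      calc ∑' i : ℕ, ⟪y, G (i + N)⟫ ^ 2 = ∑' i : ℕ, ⟪b, G (i + N)⟫ ^ 2 := by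
            congr 1; funext i; rw [hyb]
        _ ≤ ∑' i : ℕ, M * a (i + N) := Summable.tsum_le_tsum hterm hsb2' hsa'
        _ = M * ∑' i : ℕ, a (i + N) := tsum_mul_left
        _ ≤ M * 1 := by
            apply mul_le_mul_of_nonneg_left htail1 hMpos.le
        _ ≤ ε ^ 2 / 2 := by linarith
    have hnorm2 : ‖y‖ ^ 2 ≤ ε ^ 2 := by
      rw [hsplit]; linarith
    have hfin : ‖y‖ ≤ ε := by
      have h1 : Real.sqrt (‖y‖ ^ 2) ≤ Real.sqrt (ε ^ 2) := Real.sqrt_le_sqrt hnorm2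
      rwa [Real.sqrt_sq (norm_nonneg y), Real.sqrt_sq hε.le] at h1
    exact hfin
  · -- cardinality bound
    have hTcard : T.card ≤ 2 * m + 1 := by
      rw [hTdef]
      calc ((Finset.Icc (-(m : ℤ)) (m : ℤ)).image (fun z : ℤ => (z : ℝ) * h)).card
          ≤ (Finset.Icc (-(m : ℤ)) (m : ℤ)).card := Finset.card_image_le
        _ = 2 * m + 1 := by
            rw [Int.card_Icc]
            omega
    have hscard : s.card ≤ (2 * m + 1) ^ N := by
      rw [hsdef]
      calc ((Fintype.piFinset (fun _ : Fin N => T)).image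
            (fun f : Fin N → ℝ => ∑ j : Fin N, f j • G (j : ℕ))).card
          ≤ (Fintype.piFinset (fun _ : Fin N => T)).card := Finset.card_image_le
        _ = ∏ _j : Fin N, T.card := Fintype.card_piFinset _
        _ ≤ ∏ _j : Fin N, (2 * m + 1) := Finset.prod_le_prod' fun j _ => hTcard
        _ = (2 * m + 1) ^ N := by
            rw [Finset.prod_const, Finset.card_univ, Fintype.card_fin]
    -- numeric bound
    have hm1 : (1 : ℝ) ≤ 2 * (m : ℝ) + 1 := by
      have : (0 : ℝ) ≤ (m : ℝ) := Nat.cast_nonneg m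
      linarith
    have hexpL : (1 : ℝ) ≤ Real.exp L := Real.one_le_exp hLpos.le
    have hmA : 2 * (m : ℝ) + 1 ≤ A * (L ^ (1 / β) * Real.exp L) := by
      have h1 : R / h = R * (N : ℝ) * Real.exp L := by
        rw [hhdef, hεinv]
        field_simp
      have h2 : (m : ℝ) ≤ R * (N : ℝ) * Real.exp L + 2 := by
        rw [← h1]; exact hmub
      have h3 : R * (N : ℝ) ≤ R * (C1 * L ^ (1 / β)) :=
        mul_le_mul_of_nonneg_left hNup hRpos.le
      have h4 : R * (N : ℝ) * Real.exp L ≤ R * C1 * (L ^ (1 / β) * Real.exp L) := by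
        calc R * (N : ℝ) * Real.exp L ≤ R * (C1 * L ^ (1 / β)) * Real.exp L :=
              mul_le_mul_of_nonneg_right h3 (by positivity)
          _ = R * C1 * (L ^ (1 / β) * Real.exp L) := by ring
      have h5 : (1 : ℝ) ≤ L ^ (1 / β) * Real.exp L := by
        calc (1 : ℝ) = 1 * 1 := by ring
          _ ≤ L ^ (1 / β) * Real.exp L := mul_le_mul hLβ hexpL zero_le_one (by positivity)
      rw [hAdef]
      nlinarith [h2, h4, h5]
    have hlogm : Real.log (2 * (m : ℝ) + 1) ≤ C2 * L := by
      have h1 : Real.log (2 * (m : ℝ) + 1) ≤ Real.log (A * (L ^ (1 / β) * Real.exp L)) :=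
        Real.log_le_log (by linarith) hmA
      have h2 : Real.log (A * (L ^ (1 / β) * Real.exp L))
          = Real.log A + (1 / β) * Real.log L + L := by
        rw [Real.log_mul (ne_of_gt hApos) (by positivity),
          Real.log_mul (by positivity) (ne_of_gt (Real.exp_pos L)),
          Real.log_exp, Real.log_rpow hLpos]
        ring
      have h3 : Real.log L ≤ L := by
        have := Real.log_le_sub_one_of_pos hLpos
        linarith
      have h4 : 0 ≤ Real.log L := Real.log_nonneg hL1.le
      have h5 : Real.log A ≤ |Real.log A| * L := by
        calc Real.log A ≤ |Real.log A| := le_abs_self _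
          _ = |Real.log A| * 1 := by ring
          _ ≤ |Real.log A| * L := by
              apply mul_le_mul_of_nonneg_left hL1.le (abs_nonneg _)
      have h6 : (1 / β) * Real.log L ≤ (1 / β) * L := by
        apply mul_le_mul_of_nonneg_left h3 (by positivity)
      rw [hC2def]
      calc Real.log (2 * (m : ℝ) + 1) ≤ Real.log A + (1 / β) * Real.log L + L := by
            rw [← h2]; exact h1
        _ ≤ |Real.log A| * L + (1 / β) * L + 1 * L := by linarith
        _ = (|Real.log A| + 1 / β + 1) * L := by ring
    have hfinal : (N : ℝ) * Real.log (2 * (m : ℝ) + 1) ≤ C1 * C2 * L ^ (1 + 1 / β) := by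
      have h1 : 0 ≤ Real.log (2 * (m : ℝ) + 1) := Real.log_nonneg hm1
      have h2 : (N : ℝ) * Real.log (2 * (m : ℝ) + 1)
          ≤ (C1 * L ^ (1 / β)) * (C2 * L) :=
        mul_le_mul hNup hlogm h1 (by positivity)
      have h3 : L ^ (1 + 1 / β) = L * L ^ (1 / β) := by
        rw [Real.rpow_add hLpos, Real.rpow_one]
      rw [h3]
      calc (N : ℝ) * Real.log (2 * (m : ℝ) + 1) ≤ (C1 * L ^ (1 / β)) * (C2 * L) := h2
        _ = C1 * C2 * (L * L ^ (1 / β)) := by ring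
    calc (s.card : ℝ) ≤ ((2 * m + 1) ^ N : ℕ) := by exact_mod_cast hscard
      _ = (2 * (m : ℝ) + 1) ^ N := by push_cast; ring
      _ = Real.exp (Real.log (2 * (m : ℝ) + 1)) ^ N := by
          rw [Real.exp_log (by linarith)]
      _ = Real.exp ((N : ℝ) * Real.log (2 * (m : ℝ) + 1)) := by
          rw [← Real.exp_nat_mul]
      _ ≤ Real.exp (C1 * C2 * L ^ (1 + 1 / β)) := Real.exp_le_exp.mpr hfinal
end

section
/- Let {φ_k} be an orthonormal basis of H1 satisfying Condition 3, and for each k let φ̃_k = Σ_i ρ_i^{−1} ⟨φ_k, e_i⟩ g_i ∈ H2 (a finite sum). Then for every m ≥ 1: (i) ‖φ̃_k‖_{H2}² = Σ_i ρ_i^{−2} ⟨φ_k, e_i⟩² ≤ δ_m^{−2} for every 1 ≤ k ≤ m, and (ii) for every h ∈ H1, ‖Σ_{k=1}^m ⟨h, φ_k⟩ φ̃_k‖_{H2} ≤ δ_m^{−1} ‖h‖_{H1}. -/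
open scoped RealInnerProductSpace

/-!
The conjugate elements with `k < m` are the images `T φ_k` of the map
`T x = Σ_{i ∈ F} ρ_i⁻¹ ⟪x, e_i⟫ g_i`, where `F` is the finite set of `l` with `⟪φ_j, e_l⟫ ≠ 0`
for some `j < m`. As `g` is orthonormal, `‖T x‖² = Σ_{i ∈ F} ρ_i⁻² ⟪x, e_i⟫²`, so Bessel's
inequality for `e` gives `‖T x‖ ≤ δ_m⁻¹ ‖x‖`. This is (i) at `x = φ_k`; by linearity of `T`, (ii)
is the case `x = Σ_{k<m} ⟪h, φ_k⟫ φ_k`, whose norm is at most `‖h‖` by Bessel's inequality for `φ`.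
-/

section ConjugateMap

variable {ι E F : Type*} [NormedAddCommGroup E] [InnerProductSpace ℝ E]
  [NormedAddCommGroup F] [InnerProductSpace ℝ F]

theorem Orthonormal.norm_sum_smul_sq {g : ι → F} (hg : Orthonormal ℝ g) (c : ι → ℝ)
    (s : Finset ι) : ‖∑ i ∈ s, c i • g i‖ ^ 2 = ∑ i ∈ s, c i ^ 2 := by
  rw [← real_inner_self_eq_norm_sq, hg.inner_sum]
  simp only [conj_trivial, sq]

theorem Orthonormal.sum_inner_sq_le {e : ι → E} (he : Orthonormal ℝ e) (x : E) (s : Finset ι) :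
    ∑ i ∈ s, ⟪x, e i⟫ ^ 2 ≤ ‖x‖ ^ 2 := by
  simpa only [real_inner_comm, Real.norm_eq_abs, sq_abs] using he.sum_inner_products_le (s := s) x

theorem Orthonormal.norm_sum_inner_smul_le {e : ι → E} (he : Orthonormal ℝ e) (x : E)
    (s : Finset ι) : ‖∑ i ∈ s, ⟪x, e i⟫ • e i‖ ≤ ‖x‖ := by
  refine (pow_le_pow_iff_left₀ (norm_nonneg _) (norm_nonneg _) two_ne_zero).1 ?_
  rw [he.norm_sum_smul_sq]
  exact he.sum_inner_sq_le x s

variable (e : ι → E) (g : ι → F) (ρ : ι → ℝ) (s : Finset ι)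

noncomputable def conjugateMap : E →ₗ[ℝ] F where
  toFun x := ∑ i ∈ s, ((ρ i)⁻¹ * ⟪x, e i⟫) • g i
  map_add' x y := by
    simp only [inner_add_left, mul_add, add_smul, Finset.sum_add_distrib]
  map_smul' c x := by
    simp only [real_inner_smul_left, Finset.smul_sum, smul_smul, RingHom.id_apply]
    exact Finset.sum_congr rfl fun i _ => by ring_nf

theorem conjugateMap_apply (x : E) :
    conjugateMap e g ρ s x = ∑ i ∈ s, ((ρ i)⁻¹ * ⟪x, e i⟫) • g i :=
  rfl

variable {e g ρ s}

theorem finsum_eq_conjugateMap {x : E} (hx : ∀ i ∉ s, ⟪x, e i⟫ = 0) :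
    ∑ᶠ i, ((ρ i)⁻¹ * ⟪x, e i⟫) • g i = conjugateMap e g ρ s x := by
  refine finsum_eq_sum_of_support_subset _ fun i hi => ?_
  by_contra his
  exact hi (by simp [hx i his])

theorem norm_conjugateMap_sq (hg : Orthonormal ℝ g) (x : E) :
    ‖conjugateMap e g ρ s x‖ ^ 2 = ∑ i ∈ s, (ρ i)⁻¹ ^ 2 * ⟪x, e i⟫ ^ 2 := by
  simp only [conjugateMap_apply, hg.norm_sum_smul_sq, mul_pow]

theorem norm_conjugateMap_le (he : Orthonormal ℝ e) (hg : Orthonormal ℝ g) {C : ℝ} (hC : 0 ≤ C)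
    (hρ : ∀ i ∈ s, |(ρ i)⁻¹| ≤ C) (x : E) :
    ‖conjugateMap e g ρ s x‖ ≤ C * ‖x‖ := by
  refine (pow_le_pow_iff_left₀ (norm_nonneg _) (by positivity) two_ne_zero).1 ?_
  calc ‖conjugateMap e g ρ s x‖ ^ 2 = ∑ i ∈ s, (ρ i)⁻¹ ^ 2 * ⟪x, e i⟫ ^ 2 :=
        norm_conjugateMap_sq hg x
    _ ≤ ∑ i ∈ s, C ^ 2 * ⟪x, e i⟫ ^ 2 := by
        gcongr ∑ i ∈ s, ?_ * _ with i hi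
        simpa only [sq_abs] using pow_le_pow_left₀ (abs_nonneg _) (hρ i hi) 2
    _ = C ^ 2 * ∑ i ∈ s, ⟪x, e i⟫ ^ 2 := (Finset.mul_sum ..).symm
    _ ≤ C ^ 2 * ‖x‖ ^ 2 := by gcongr; exact he.sum_inner_sq_le x s
    _ = (C * ‖x‖) ^ 2 := (mul_pow ..).symm

end ConjugateMap

theorem abs_inv_le_inv_sInf_abs {ι : Type*} {P : ι → Prop} (hP : {l | P l}.Finite) {ρ : ι → ℝ}
    (hρ : ∀ l, P l → ρ l ≠ 0) {l : ι} (hl : P l) :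
    |(ρ l)⁻¹| ≤ (sInf {r : ℝ | ∃ l, P l ∧ r = |ρ l|})⁻¹ := by
  set S := {r : ℝ | ∃ l, P l ∧ r = |ρ l|}
  have hS : S = (fun l => |ρ l|) '' {l | P l} := by
    ext r
    simp only [S, Set.mem_ofPred_eq, Set.mem_image, eq_comm]
  obtain ⟨l₀, hl₀, hmin⟩ : sInf S ∈ S :=
    Set.Nonempty.csInf_mem ⟨_, l, hl, rfl⟩ (hS ▸ hP.image _)
  rw [abs_inv]
  refine inv_anti₀ ?_ (csInf_le ⟨0, ?_⟩ ⟨l, hl, rfl⟩)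
  · exact hmin ▸ abs_pos.2 (hρ l₀ hl₀)
  · rintro _ ⟨_, _, rfl⟩
    exact abs_nonneg _

theorem conjugate_basis_bounds_general
    {H1 : Type*} [NormedAddCommGroup H1] [InnerProductSpace ℝ H1]
    {H2 : Type*} [NormedAddCommGroup H2] [InnerProductSpace ℝ H2]
    (e : HilbertBasis ℕ ℝ H1) (g : ℕ → H2) (hg : Orthonormal ℝ g)
    (ρ : ℕ → ℝ) (hρpos : ∀ k, 0 < ρ k)
    (φ : HilbertBasis ℕ ℝ H1)
    (hφfin : ∀ k : ℕ, {l : ℕ | ⟪φ k, e l⟫ ≠ 0}.Finite)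
    (m : ℕ) :
    (∀ k < m,
      ‖∑ᶠ i : ℕ, ((ρ i)⁻¹ * ⟪φ k, e i⟫) • g i‖ ^ 2
          = ∑' i : ℕ, ((ρ i)⁻¹) ^ 2 * ⟪φ k, e i⟫ ^ 2 ∧
      ∑' i : ℕ, ((ρ i)⁻¹) ^ 2 * ⟪φ k, e i⟫ ^ 2
          ≤ ((sInf {r : ℝ | ∃ l : ℕ, (∃ j < m, ⟪φ j, e l⟫ ≠ 0) ∧ r = |ρ l|})⁻¹) ^ 2) ∧
    (∀ h : H1,
      ‖∑ k ∈ Finset.range m, ⟪h, φ k⟫ • (∑ᶠ i : ℕ, ((ρ i)⁻¹ * ⟪φ k, e i⟫) • g i)‖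
        ≤ (sInf {r : ℝ | ∃ l : ℕ, (∃ j < m, ⟪φ j, e l⟫ ≠ 0) ∧ r = |ρ l|})⁻¹ * ‖h‖) := by
  set δ := sInf {r : ℝ | ∃ l : ℕ, (∃ j < m, ⟪φ j, e l⟫ ≠ 0) ∧ r = |ρ l|}
  have hfin : {l | ∃ j < m, ⟪φ j, e l⟫ ≠ 0}.Finite := by
    refine ((Set.finite_Iio m).biUnion fun j _ => hφfin j).subset ?_
    rintro l ⟨j, hj, hl⟩
    exact Set.mem_biUnion hj hl
  set T := conjugateMap e g ρ hfin.toFinset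
  have hδ : 0 ≤ δ⁻¹ := inv_nonneg.2 <| Real.sInf_nonneg <| by
    rintro _ ⟨_, _, rfl⟩
    exact abs_nonneg _
  have hT (x : H1) : ‖T x‖ ≤ δ⁻¹ * ‖x‖ :=
    norm_conjugateMap_le e.orthonormal hg hδ (fun l hl =>
      abs_inv_le_inv_sInf_abs hfin (fun l _ => (hρpos l).ne') (hfin.mem_toFinset.1 hl)) x
  have hvanish {k : ℕ} (hk : k < m) (i : ℕ) (hi : i ∉ hfin.toFinset) : ⟪φ k, e i⟫ = 0 := by
    by_contra hne
    exact hi (hfin.mem_toFinset.2 ⟨k, hk, hne⟩)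
  have hconj {k : ℕ} (hk : k < m) : ∑ᶠ i, ((ρ i)⁻¹ * ⟪φ k, e i⟫) • g i = T (φ k) :=
    finsum_eq_conjugateMap (hvanish hk)
  refine ⟨fun k hk => ?_, fun h => ?_⟩
  · have hnorm : ‖∑ᶠ i : ℕ, ((ρ i)⁻¹ * ⟪φ k, e i⟫) • g i‖ ^ 2
        = ∑' i : ℕ, ((ρ i)⁻¹) ^ 2 * ⟪φ k, e i⟫ ^ 2 := by
      rw [hconj hk, norm_conjugateMap_sq hg,
        tsum_eq_sum fun i hi => by rw [hvanish hk i hi]; ring]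
    refine ⟨hnorm, hnorm ▸ ?_⟩
    simpa only [hconj hk, φ.orthonormal.1 k, mul_one] using
      pow_le_pow_left₀ (norm_nonneg _) (hT (φ k)) 2
  · calc _ = ‖T (∑ k ∈ Finset.range m, ⟪h, φ k⟫ • φ k)‖ := by
          rw [map_sum]
          refine congrArg norm (Finset.sum_congr rfl fun k hk => ?_)
          rw [map_smul, hconj (Finset.mem_range.1 hk)]
      _ ≤ δ⁻¹ * ‖∑ k ∈ Finset.range m, ⟪h, φ k⟫ • φ k‖ := hT _
      _ ≤ δ⁻¹ * ‖h‖ := by gcongr; exact φ.orthonormal.norm_sum_inner_smul_le h _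

/-- bounds for the conjugate elements `φ̃_k = Σ_i ρ_i⁻¹ ⟨φ_k, e_i⟩ g_i`:
(i) `‖φ̃_k‖² = Σ_i ρ_i⁻² ⟨φ_k, e_i⟩² ≤ δ_m⁻²` for all `k < m`, and
(ii) `‖Σ_{k<m} ⟨h, φ_k⟩ φ̃_k‖ ≤ δ_m⁻¹ ‖h‖` for all `h`, where
`δ_m = inf {|ρ_l| : ⟨φ_j, e_l⟩ ≠ 0 for some j < m}`. -/
theorem conjugate_basis_bounds
    {H1 : Type*} [NormedAddCommGroup H1] [InnerProductSpace ℝ H1] [CompleteSpace H1]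
    {H2 : Type*} [NormedAddCommGroup H2] [InnerProductSpace ℝ H2] [CompleteSpace H2]
    (e : HilbertBasis ℕ ℝ H1) (g : ℕ → H2) (hg : Orthonormal ℝ g)
    (A : H1 →L[ℝ] H2) (hAinj : Function.Injective A)
    (ρ : ℕ → ℝ) (hρpos : ∀ k, 0 < ρ k)
    (hAe : ∀ k, A (e k) = ρ k • g k)
    (φ : HilbertBasis ℕ ℝ H1)
    (hφfin : ∀ k : ℕ, {l : ℕ | ⟪φ k, e l⟫ ≠ 0}.Finite)
    (m : ℕ) (hm : 1 ≤ m) :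
    (∀ k < m,
      ‖∑ᶠ i : ℕ, ((ρ i)⁻¹ * ⟪φ k, e i⟫) • g i‖ ^ 2
          = ∑' i : ℕ, ((ρ i)⁻¹) ^ 2 * ⟪φ k, e i⟫ ^ 2 ∧
      ∑' i : ℕ, ((ρ i)⁻¹) ^ 2 * ⟪φ k, e i⟫ ^ 2
          ≤ ((sInf {r : ℝ | ∃ l : ℕ, (∃ j < m, ⟪φ j, e l⟫ ≠ 0) ∧ r = |ρ l|})⁻¹) ^ 2) ∧
    (∀ h : H1,
      ‖∑ k ∈ Finset.range m, ⟪h, φ k⟫ • (∑ᶠ i : ℕ, ((ρ i)⁻¹ * ⟪φ k, e i⟫) • g i)‖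
        ≤ (sInf {r : ℝ | ∃ l : ℕ, (∃ j < m, ⟪φ j, e l⟫ ≠ 0) ∧ r = |ρ l|})⁻¹ * ‖h‖) :=
  conjugate_basis_bounds_general e g hg ρ hρpos φ hφfin m
end

section
/- Suppose A satisfies Condition (M) with regularity α and f0 ∈ H^γ for some γ > 0. Consider the sieve prior Π with h(m) ≥ B1 e^{−b1 m} for all m and some B1, b1 > 0, with density q satisfying Condition 5 for some w ≥ 1, and with scale parameters satisfying B3 (1+k²)^{−γ0/2} (log k)^{−1/w} ≤ τ_k ≤ B4 (1+k²)^{(α+1)/2} for some B3, B4 > 0 and γ0 ≤ γ. Then there exist constants C > 0 and ε0 > 0 such that for all 0 < ε < ε0, Π(f : ‖f − f0‖_{H^{−α}} ≤ ε) ≥ exp(−C ε^{−1/(α+γ)} log(1/ε)). -/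
open MeasureTheory ProbabilityTheory Real Filter
open scoped ENNReal NNReal RealInnerProductSpace
open Set


lemma lintegral_scaled_density {q : ℝ → ℝ} (h0 : ∀ x, 0 ≤ q x) (hq1 : ∫ x, q x = 1)
    {c : ℝ} (hc : 0 < c) :
    ∫⁻ t, ENNReal.ofReal (c⁻¹ * q (c⁻¹ * t)) = 1 := by
  have hint : Integrable q := MeasureTheory.integrable_of_integral_eq_one hq1
  have hint2 : Integrable (fun t => c⁻¹ * q (c⁻¹ * t)) :=
    (hint.comp_mul_left' (inv_ne_zero hc.ne')).const_mul _
  rw [← ofReal_integral_eq_lintegral_ofReal hint2]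
  · rw [integral_const_mul, MeasureTheory.Measure.integral_comp_inv_mul_left q c, hq1,
      smul_eq_mul, mul_one, abs_of_pos hc, inv_mul_cancel₀ hc.ne']
    exact ENNReal.ofReal_one
  · exact Filter.Eventually.of_forall fun t =>
      mul_nonneg (inv_nonneg.2 hc.le) (h0 _)

lemma isProbability_scaled_density {q : ℝ → ℝ} (h0 : ∀ x, 0 ≤ q x) (hq1 : ∫ x, q x = 1)
    {c : ℝ} (hc : 0 < c) :
    IsProbabilityMeasure (volume.withDensity fun t => ENNReal.ofReal (c⁻¹ * q (c⁻¹ * t))) := by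
  constructor
  rw [withDensity_apply _ MeasurableSet.univ, Measure.restrict_univ]
  exact lintegral_scaled_density h0 hq1 hc

lemma withDensity_Icc_lb {q : ℝ → ℝ} {D d w : ℝ} (hD : 0 < D) (hd : 0 < d) (hw : 1 ≤ w)
    (hq : ∀ x : ℝ, D * Real.exp (-d * |x| ^ w) ≤ q x)
    {c δ : ℝ} (a : ℝ) (hc : 0 < c) (hδ : 0 < δ) :
    ENNReal.ofReal ((2 * δ) * (c⁻¹ * (D * Real.exp (-d * (c⁻¹ * (|a| + δ)) ^ w))))
      ≤ (volume.withDensity fun t => ENNReal.ofReal (c⁻¹ * q (c⁻¹ * t)))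
          (Icc (a - δ) (a + δ)) := by
  rw [withDensity_apply _ measurableSet_Icc]
  have key : ∀ t ∈ Icc (a - δ) (a + δ),
      ENNReal.ofReal (c⁻¹ * (D * Real.exp (-d * (c⁻¹ * (|a| + δ)) ^ w)))
        ≤ ENNReal.ofReal (c⁻¹ * q (c⁻¹ * t)) := by
    intro t ht
    apply ENNReal.ofReal_le_ofReal
    apply mul_le_mul_of_nonneg_left _ (inv_nonneg.2 hc.le)
    refine le_trans ?_ (hq (c⁻¹ * t))
    apply mul_le_mul_of_nonneg_left _ hD.le
    apply Real.exp_le_exp.2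
    rw [neg_mul, neg_mul, neg_le_neg_iff]
    apply mul_le_mul_of_nonneg_left _ hd.le
    apply Real.rpow_le_rpow (abs_nonneg _) _ (le_trans zero_le_one hw)
    rw [abs_mul, abs_of_pos (inv_pos.2 hc)]
    apply mul_le_mul_of_nonneg_left _ (inv_nonneg.2 hc.le)
    rw [abs_le]
    constructor
    · have := ht.1; nlinarith [neg_abs_le a]
    · have := ht.2; nlinarith [le_abs_self a]
  calc ENNReal.ofReal ((2 * δ) * (c⁻¹ * (D * Real.exp (-d * (c⁻¹ * (|a| + δ)) ^ w))))
      = ENNReal.ofReal (c⁻¹ * (D * Real.exp (-d * (c⁻¹ * (|a| + δ)) ^ w)))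
          * volume (Icc (a - δ) (a + δ)) := by
        rw [Real.volume_Icc]
        rw [← ENNReal.ofReal_mul (by positivity)]
        ring_nf
    _ = ∫⁻ _ in Icc (a - δ) (a + δ),
          ENNReal.ofReal (c⁻¹ * (D * Real.exp (-d * (c⁻¹ * (|a| + δ)) ^ w))) := by
        rw [setLIntegral_const]
    _ ≤ ∫⁻ t in Icc (a - δ) (a + δ), ENNReal.ofReal (c⁻¹ * q (c⁻¹ * t)) :=
        setLIntegral_mono' measurableSet_Icc key

lemma inner_finsum_basis {H1 : Type*} [NormedAddCommGroup H1] [InnerProductSpace ℝ H1]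
    (e : HilbertBasis ℕ ℝ H1) {m : ℕ} (x : Fin m → ℝ) (j : ℕ) :
    ⟪∑ k : Fin m, x k • e (k : ℕ), e j⟫ = if hj : j < m then x ⟨j, hj⟩ else 0 := by
  rw [sum_inner]
  have horth := e.orthonormal
  rw [orthonormal_iff_ite] at horth
  have : ∀ k : Fin m, ⟪x k • e (k : ℕ), e j⟫ = if (k : ℕ) = j then x k else 0 := by
    intro k
    rw [real_inner_smul_left, horth]
    split <;> simp
  simp_rw [this]
  by_cases hj : j < m
  · rw [dif_pos hj]
    rw [Finset.sum_eq_single (⟨j, hj⟩ : Fin m)]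
    · simp
    · intro b _ hb
      rw [if_neg]
      simpa [Fin.ext_iff] using hb
    · simp
  · rw [dif_neg hj]
    apply Finset.sum_eq_zero
    intro k _
    rw [if_neg]
    exact fun hkj => hj (hkj ▸ k.isLt)

lemma sqrt_tsum_event_bound {α γ : ℝ} (hα : 0 ≤ α) (hγ : 0 < γ) (a : ℕ → ℝ)
    (ha : Summable fun k : ℕ => a k ^ 2 * (1 + (k : ℝ) ^ 2) ^ γ)
    {m : ℕ} {δ ε : ℝ} (hδ : 0 < δ) (hε : 0 ≤ ε)
    (b : ℕ → ℝ) (hb : ∀ k, k < m → |b k - a k| ≤ δ) (hbz : ∀ k, m ≤ k → b k = 0)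
    (hhead : (m : ℝ) * δ ^ 2 ≤ ε ^ 2 / 2)
    (htail : (∑' k : ℕ, a k ^ 2 * (1 + (k : ℝ) ^ 2) ^ γ) * (1 + (m : ℝ) ^ 2) ^ (-(α + γ))
      ≤ ε ^ 2 / 2) :
    Real.sqrt (∑' k : ℕ, (b k - a k) ^ 2 * (1 + (k : ℝ) ^ 2) ^ (-α)) ≤ ε := by
  set F : ℕ → ℝ := fun k => (b k - a k) ^ 2 * (1 + (k : ℝ) ^ 2) ^ (-α) with hF
  have hbase : ∀ k : ℕ, (1 : ℝ) ≤ 1 + (k : ℝ) ^ 2 := fun k => le_add_of_nonneg_right (sq_nonneg _)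
  have hFnn : ∀ k, 0 ≤ F k := fun k => by
    rw [hF]
    exact mul_nonneg (sq_nonneg _) (Real.rpow_nonneg (by positivity) _)
  -- the tail terms
  have hshift : ∀ k : ℕ, F (k + m) = a (k + m) ^ 2 * (1 + ((k + m : ℕ) : ℝ) ^ 2) ^ (-α) := by
    intro k
    rw [hF]
    simp only [hbz (k + m) (Nat.le_add_left m k)]
    ring_nf
  have hHsum : Summable fun k : ℕ =>
      (a (k + m) ^ 2 * (1 + ((k + m : ℕ) : ℝ) ^ 2) ^ γ) * (1 + (m : ℝ) ^ 2) ^ (-(α + γ)) :=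
    ((summable_nat_add_iff m).2 ha).mul_right _
  have hdom : ∀ k : ℕ, F (k + m)
      ≤ (a (k + m) ^ 2 * (1 + ((k + m : ℕ) : ℝ) ^ 2) ^ γ) * (1 + (m : ℝ) ^ 2) ^ (-(α + γ)) := by
    intro k
    rw [hshift k]
    have h1 : ((1 : ℝ) + ((k + m : ℕ) : ℝ) ^ 2) ^ (-α)
        = (1 + ((k + m : ℕ) : ℝ) ^ 2) ^ γ * (1 + ((k + m : ℕ) : ℝ) ^ 2) ^ (-(α + γ)) := by
      rw [← Real.rpow_add (by positivity)]
      ring_nf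
    rw [h1, ← mul_assoc]
    apply mul_le_mul_of_nonneg_left _ (by positivity)
    apply Real.rpow_le_rpow_of_nonpos (by positivity) _ (by linarith)
    have : (m : ℝ) ≤ ((k + m : ℕ) : ℝ) := by exact_mod_cast Nat.le_add_left m k
    nlinarith
  have hGsum : Summable fun k : ℕ => F (k + m) :=
    Summable.of_nonneg_of_le (fun k => hFnn _) hdom hHsum
  have hFsum : Summable F := (summable_nat_add_iff m).1 hGsum
  -- head bound
  have hhead' : ∑ i ∈ Finset.range m, F i ≤ (m : ℝ) * δ ^ 2 := by
    calc ∑ i ∈ Finset.range m, F i ≤ ∑ _i ∈ Finset.range m, δ ^ 2 := by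
          apply Finset.sum_le_sum
          intro i hi
          rw [hF]
          have h1 : (b i - a i) ^ 2 ≤ δ ^ 2 := by
            have := hb i (Finset.mem_range.1 hi)
            nlinarith [abs_nonneg (b i - a i), sq_abs (b i - a i)]
          have h2 : ((1 : ℝ) + (i : ℝ) ^ 2) ^ (-α) ≤ 1 :=
            Real.rpow_le_one_of_one_le_of_nonpos (hbase i) (by linarith)
          calc (b i - a i) ^ 2 * (1 + (i : ℝ) ^ 2) ^ (-α)
              ≤ (b i - a i) ^ 2 * 1 := by
                apply mul_le_mul_of_nonneg_left h2 (sq_nonneg _)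
            _ ≤ δ ^ 2 := by rw [mul_one]; exact h1
      _ = (m : ℝ) * δ ^ 2 := by rw [Finset.sum_const, Finset.card_range, nsmul_eq_mul]
  -- tail bound
  have htail' : (∑' k : ℕ, F (k + m)) ≤ ε ^ 2 / 2 := by
    refine le_trans (Summable.tsum_le_tsum hdom hGsum hHsum) (le_trans ?_ htail)
    rw [tsum_mul_right]
    apply mul_le_mul_of_nonneg_right _ (Real.rpow_nonneg (by positivity) _)
    have := Summable.sum_add_tsum_nat_add m ha
    have hnn : 0 ≤ ∑ i ∈ Finset.range m, a i ^ 2 * (1 + (i : ℝ) ^ 2) ^ γ := by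
      apply Finset.sum_nonneg
      intro i _
      positivity
    linarith [this]
  have hsum_le : (∑' k : ℕ, F k) ≤ ε ^ 2 := by
    rw [← Summable.sum_add_tsum_nat_add m hFsum]
    linarith
  calc Real.sqrt (∑' k : ℕ, F k) ≤ Real.sqrt (ε ^ 2) := Real.sqrt_le_sqrt hsum_le
    _ = ε := by rw [Real.sqrt_sq hε]


set_option maxHeartbeats 2000000

/-- small-ball lower bound for the sieve prior in the mildly ill-posed case with
`f0 ∈ H^γ`: `Π(f : ‖f − f0‖_{H^{−α}} ≤ ε) ≥ exp(−C ε^{−1/(α+γ)} log(1/ε))` for small `ε`. -/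
theorem sieve_small_ball_sobolev_truth
    {H1 : Type*} [NormedAddCommGroup H1] [InnerProductSpace ℝ H1] [CompleteSpace H1]
    [MeasurableSpace H1] [BorelSpace H1]
    {H2 : Type*} [NormedAddCommGroup H2] [InnerProductSpace ℝ H2] [CompleteSpace H2]
    (e : HilbertBasis ℕ ℝ H1)
    (A : H1 →L[ℝ] H2) (hAinj : Function.Injective A)
    (ρ : ℕ → ℝ) (hρpos : ∀ k, 0 < ρ k) (hρanti : Antitone ρ)
    (g : ℕ → H2) (hg : Orthonormal ℝ g) (hAe : ∀ k, A (e k) = ρ k • g k)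
    -- Condition (M) with regularity α
    (α C1 C2 : ℝ) (hα : 0 ≤ α) (hC1 : 0 < C1) (hC2 : 0 < C2)
    (hM : ∀ k : ℕ, C1 * (1 + (k : ℝ) ^ 2) ^ (-α / 2) ≤ ρ k ∧
          ρ k ≤ C2 * (1 + (k : ℝ) ^ 2) ^ (-α / 2))
    -- the true parameter lies in the Sobolev space `H^γ`
    (γ : ℝ) (hγ : 0 < γ) (f0 : H1)
    (hf0 : Summable fun k : ℕ => ⟪f0, e k⟫ ^ 2 * (1 + (k : ℝ) ^ 2) ^ γ)
    -- sieve prior ingredients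
    (h : ℕ → ℝ) (hhnn : ∀ m, 0 ≤ h m) (hhsum : ∑' m : ℕ, h m = 1)
    (B1 b1 : ℝ) (hB1 : 0 < B1) (hb1 : 0 < b1)
    (hhlb : ∀ m : ℕ, 1 ≤ m → B1 * Real.exp (-b1 * m) ≤ h m)
    (q : ℝ → ℝ) (hq0 : ∀ x, 0 ≤ q x) (hqint : ∫ x, q x = 1)
    (D d w : ℝ) (hD : 0 < D) (hd : 0 < d) (hw : 1 ≤ w)
    (hq : ∀ x : ℝ, D * Real.exp (-d * |x| ^ w) ≤ q x)
    (τ : ℕ → ℝ) (hτpos : ∀ k, 0 < τ k)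
    (γ0 B3 B4 : ℝ) (hγ0 : γ0 ≤ γ) (hB3 : 0 < B3) (hB4 : 0 < B4)
    (hτlb : ∀ k : ℕ, 2 ≤ k →
      B3 * (1 + (k : ℝ) ^ 2) ^ (-γ0 / 2) * Real.log k ^ (-(1 / w)) ≤ τ k)
    (hτub : ∀ k : ℕ, τ k ≤ B4 * (1 + (k : ℝ) ^ 2) ^ ((α + 1) / 2))
    (Pr : Measure H1)
    (hPr : Pr = Measure.sum fun m : ℕ => ENNReal.ofReal (h m) •
      Measure.map (fun x : Fin m → ℝ => ∑ k : Fin m, x k • e (k : ℕ))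
        (Measure.pi fun k : Fin m =>
          volume.withDensity fun t : ℝ =>
            ENNReal.ofReal ((τ (k : ℕ))⁻¹ * q ((τ (k : ℕ))⁻¹ * t)))) :
    ∃ C ε0 : ℝ, 0 < C ∧ 0 < ε0 ∧ ∀ ε : ℝ, 0 < ε → ε < ε0 →
      ENNReal.ofReal (Real.exp (-C * ε ^ (-(1 / (α + γ))) * Real.log (1 / ε)))
        ≤ Pr {f : H1 | Real.sqrt (∑' k : ℕ,
              (⟪f, e k⟫ - ⟪f0, e k⟫) ^ 2 * (1 + (k : ℝ) ^ 2) ^ (-α)) ≤ ε} := by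
  classical
  have hw0 : 0 < w := lt_of_lt_of_le one_pos hw
  have hαγ : 0 < α + γ := by linarith
  obtain ⟨a, ha_def⟩ : ∃ a : ℕ → ℝ, a = fun k => ⟪f0, e k⟫ := ⟨_, rfl⟩
  have hf0' : Summable fun k : ℕ => a k ^ 2 * (1 + (k : ℝ) ^ 2) ^ γ := by
    rw [ha_def]; exact hf0
  obtain ⟨s, hs_def⟩ : ∃ s : ℝ, s = 1 / (α + γ) := ⟨_, rfl⟩
  have hspos : 0 < s := by rw [hs_def]; positivity
  have hsαγ : s * (α + γ) = 1 := by rw [hs_def]; field_simp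
  obtain ⟨S0, hS0_def⟩ : ∃ x : ℝ, x = ∑' k : ℕ, a k ^ 2 * (1 + (k : ℝ) ^ 2) ^ γ := ⟨_, rfl⟩
  have hS0nn : 0 ≤ S0 := by
    rw [hS0_def]; exact tsum_nonneg fun k => by positivity
  obtain ⟨Kγ, hKγ_def⟩ : ∃ x : ℝ, x = Real.sqrt S0 := ⟨_, rfl⟩
  have hKγnn : 0 ≤ Kγ := hKγ_def ▸ Real.sqrt_nonneg _
  obtain ⟨R, hR_def⟩ : ∃ x : ℝ, x = (2 * S0 + 2) ^ (s / 2) + 1 := ⟨_, rfl⟩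
  have hRlb : 0 ≤ (2 * S0 + 2) ^ (s / 2) := Real.rpow_nonneg (by linarith) _
  have hR1 : 1 ≤ R := by rw [hR_def]; linarith
  have hRpos : 0 < R := by linarith
  obtain ⟨c01, hc01_def⟩ : ∃ x : ℝ,
      x = ((τ 0)⁻¹ * (|a 0| + 1)) ^ w + ((τ 1)⁻¹ * (|a 1| + 1)) ^ w := ⟨_, rfl⟩
  have hc01 : 0 ≤ c01 := by
    rw [hc01_def]
    exact add_nonneg
      (Real.rpow_nonneg (mul_nonneg (inv_nonneg.2 (hτpos 0).le) (by positivity)) _)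
      (Real.rpow_nonneg (mul_nonneg (inv_nonneg.2 (hτpos 1).le) (by positivity)) _)
  obtain ⟨c5, hc5_def⟩ : ∃ x : ℝ, x = 2 ^ (γ / 2) * (2 * R) ^ (α + γ) + 1 := ⟨_, rfl⟩
  have hc51 : 1 ≤ c5 := by
    have h1 : (0:ℝ) ≤ 2 ^ (γ / 2) := Real.rpow_nonneg (by norm_num) _
    have h2 : (0:ℝ) ≤ (2 * R) ^ (α + γ) := Real.rpow_nonneg (by linarith) _
    have h3 : 0 ≤ 2 ^ (γ / 2) * (2 * R) ^ (α + γ) := mul_nonneg h1 h2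
    rw [hc5_def]; linarith
  obtain ⟨c6, hc6_def⟩ : ∃ x : ℝ, x = (B3⁻¹ * (Kγ + c5)) ^ w := ⟨_, rfl⟩
  have hc6 : 0 ≤ c6 := hc6_def ▸ Real.rpow_nonneg
    (mul_nonneg (inv_nonneg.2 hB3.le) (by linarith)) _
  obtain ⟨A1, hA1_def⟩ : ∃ x : ℝ,
      x = |Real.log B4| + (α + 1) / 2 * Real.log 2 + |Real.log D| + d * c01 := ⟨_, rfl⟩
  have hA1 : 0 ≤ A1 := by
    have h1 := Real.log_nonneg (by norm_num : (1:ℝ) ≤ 2)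
    have h2 := abs_nonneg (Real.log B4)
    have h3 := abs_nonneg (Real.log D)
    have h4 : 0 ≤ d * c01 := mul_nonneg hd.le hc01
    have h5 : 0 ≤ (α + 1) / 2 * Real.log 2 := mul_nonneg (by linarith) h1
    rw [hA1_def]; linarith
  obtain ⟨A2, hA2_def⟩ : ∃ x : ℝ, x = (1 + (α + γ)) + (α + 1) + d * c6 := ⟨_, rfl⟩
  have hA2 : 0 ≤ A2 := by
    have h1 : 0 ≤ d * c6 := mul_nonneg hd.le hc6
    rw [hA2_def]; linarith
  obtain ⟨K1, hK1_def⟩ : ∃ x : ℝ, x = b1 + |Real.log B1| + A1 + A2 + 1 := ⟨_, rfl⟩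
  have hK1 : 1 ≤ K1 := by
    have h1 := abs_nonneg (Real.log B1)
    rw [hK1_def]; linarith
  obtain ⟨K2, hK2_def⟩ : ∃ x : ℝ, x = (R + 1) * (Real.log (R + 1) + s) + 1 := ⟨_, rfl⟩
  have hlogR1 : 0 ≤ Real.log (R + 1) := Real.log_nonneg (by linarith)
  have hK2 : 1 ≤ K2 := by
    have h2 : 0 ≤ (R + 1) * (Real.log (R + 1) + s) :=
      mul_nonneg (by linarith) (by linarith)
    rw [hK2_def]; linarith
  refine ⟨K1 * K2 + 1, Real.exp (-(3 / s) - 1),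
    by have h0 : (0:ℝ) < K1 * K2 := mul_pos (by linarith) (by linarith); linarith,
    Real.exp_pos _, ?_⟩
  intro ε hε hεlt
  -- basic facts about ε
  have hε1 : ε < 1 := by
    have h1 : Real.exp (-(3 / s) - 1) ≤ Real.exp 0 := by
      apply Real.exp_le_exp.2
      have : 0 < 3 / s := by positivity
      linarith
    rw [Real.exp_zero] at h1
    linarith
  have hlogε : Real.log ε < -(3 / s) - 1 := by
    have := Real.log_lt_log hε hεlt
    rwa [Real.log_exp] at this
  obtain ⟨L1, hL1_def⟩ : ∃ x : ℝ, x = Real.log (1 / ε) := ⟨_, rfl⟩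
  have hL1 : L1 = -Real.log ε := by rw [hL1_def, one_div, Real.log_inv]
  have hL1ge : 3 / s + 1 ≤ L1 := by rw [hL1]; linarith
  have hL1ge1 : 1 ≤ L1 := by
    have : 0 < 3 / s := by positivity
    linarith
  obtain ⟨X, hX_def⟩ : ∃ x : ℝ, x = ε ^ (-s) := ⟨_, rfl⟩
  have hXpos : 0 < X := hX_def ▸ Real.rpow_pos_of_pos hε _
  have hlogX : Real.log X = s * L1 := by
    rw [hX_def, Real.log_rpow hε, hL1]; ring
  have hlogX3 : 3 ≤ Real.log X := by
    rw [hlogX]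
    calc (3:ℝ) = s * (3 / s) := by field_simp
      _ ≤ s * L1 := mul_le_mul_of_nonneg_left (by linarith) hspos.le
  have hX4 : 4 ≤ X := by
    have h1 : (3:ℝ) + 1 ≤ Real.exp 3 := Real.add_one_le_exp 3
    have h2 : Real.exp 3 ≤ Real.exp (Real.log X) := Real.exp_le_exp.2 hlogX3
    rw [Real.exp_log hXpos] at h2
    linarith
  have hX1 : 1 ≤ X := by linarith
  have hXαγ : X ^ (α + γ) = ε⁻¹ := by
    rw [hX_def, ← Real.rpow_mul hε.le]
    have h1 : -s * (α + γ) = -1 := by rw [neg_mul, hsαγ]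
    rw [h1, Real.rpow_neg_one]
  -- the truncation level m
  obtain ⟨m, hm_def⟩ : ∃ m : ℕ, m = ⌈R * X⌉₊ := ⟨_, rfl⟩
  have hmlb : R * X ≤ (m : ℝ) := by rw [hm_def]; exact Nat.le_ceil _
  have hmub : (m : ℝ) ≤ (R + 1) * X := by
    rw [hm_def]
    have h1 : (⌈R * X⌉₊ : ℝ) < R * X + 1 :=
      Nat.ceil_lt_add_one (by positivity)
    have h2 : R * X + 1 ≤ R * X + X := by linarith
    have h3 : (R + 1) * X = R * X + X := by ring
    linarith
  have hm2R : (m : ℝ) ≤ 2 * R * X := by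
    have h1 : (R + 1) * X ≤ 2 * R * X := by
      have := mul_le_mul_of_nonneg_right (show R + 1 ≤ 2 * R by linarith) hXpos.le
      linarith [this]
    linarith
  have hm3 : (3 : ℝ) ≤ (m : ℝ) := by
    have h1 : (1:ℝ) * 3 ≤ R * X := mul_le_mul hR1 (by linarith) (by norm_num) (by linarith)
    linarith
  have hm1 : 1 ≤ m := by
    have h1 : (1 : ℝ) ≤ (m : ℝ) := by linarith
    exact_mod_cast h1
  have hmpos : (0 : ℝ) < (m : ℝ) := by linarith
  have hlogm1 : 1 ≤ Real.log m := by
    have he3 : Real.exp 1 ≤ 3 := by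
      have := Real.exp_one_lt_d9
      linarith
    have h2 : Real.exp 1 ≤ (m : ℝ) := by linarith
    have h3 := Real.log_le_log (Real.exp_pos 1) h2
    rwa [Real.log_exp] at h3
  have hlogm0 : 0 ≤ Real.log m := by linarith
  -- the half-width δ
  obtain ⟨δ, hδ_def⟩ : ∃ x : ℝ, x = ε / (2 * m) := ⟨_, rfl⟩
  have hδpos : 0 < δ := by rw [hδ_def]; positivity
  have hδε : δ ≤ ε := by
    rw [hδ_def]
    exact div_le_self hε.le (by linarith)
  have hδ1 : δ ≤ 1 := by linarith
  -- key relation between ε and m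
  have hkey1 : ε * (m : ℝ) ^ (α + γ) ≤ (2 * R) ^ (α + γ) := by
    have h2R : (0:ℝ) < 2 * R := by linarith
    have h1 : (m : ℝ) / (2 * R) ≤ X := by
      rw [div_le_iff₀ h2R]
      calc (m : ℝ) ≤ 2 * R * X := hm2R
        _ = X * (2 * R) := by ring
    have h2 : ((m : ℝ) / (2 * R)) ^ (α + γ) ≤ X ^ (α + γ) :=
      Real.rpow_le_rpow (by positivity) h1 hαγ.le
    rw [hXαγ, Real.div_rpow (by positivity) h2R.le] at h2
    have h4 : (0:ℝ) < (2 * R) ^ (α + γ) := Real.rpow_pos_of_pos h2R _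
    have h5 : (m : ℝ) ^ (α + γ) ≤ ε⁻¹ * (2 * R) ^ (α + γ) := by
      rw [← div_le_iff₀ h4] at *
      exact h2
    calc ε * (m : ℝ) ^ (α + γ) ≤ ε * (ε⁻¹ * (2 * R) ^ (α + γ)) :=
          mul_le_mul_of_nonneg_left h5 hε.le
      _ = (2 * R) ^ (α + γ) := by
          rw [← mul_assoc, mul_inv_cancel₀ hε.ne', one_mul]
  have hlog1ε : L1 ≤ (α + γ) * Real.log m := by
    have hXm : X ≤ (m : ℝ) := by
      have h1 : (1:ℝ) * X ≤ R * X := mul_le_mul_of_nonneg_right hR1 hXpos.le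
      linarith
    have h2 : Real.log X ≤ Real.log m := Real.log_le_log hXpos hXm
    rw [hlogX] at h2
    have h3 : (α + γ) * s = 1 := by rw [mul_comm]; exact hsαγ
    calc L1 = (α + γ) * (s * L1) := by rw [← mul_assoc, h3, one_mul]
      _ ≤ (α + γ) * Real.log m := mul_le_mul_of_nonneg_left h2 hαγ.le
  -- head bound
  have hheadm : (m : ℝ) * δ ^ 2 ≤ ε ^ 2 / 2 := by
    have h1 : (m : ℝ) * (ε / (2 * m)) ^ 2 = ε ^ 2 / (4 * m) := by
      field_simp
      ring
    rw [hδ_def, h1]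
    rw [div_le_div_iff₀ (by linarith) (by norm_num)]
    exact mul_le_mul_of_nonneg_left (show (2:ℝ) ≤ 4 * m by linarith) (sq_nonneg ε)
  -- tail bound
  have hb0 : (0:ℝ) < 1 + (m:ℝ)^2 := by positivity
  have htailm : S0 * (1 + (m : ℝ) ^ 2) ^ (-(α + γ)) ≤ ε ^ 2 / 2 := by
    have hu0 : (0:ℝ) < 2 * S0 + 2 := by linarith
    have hP : (2 * S0 + 2) * (ε⁻¹) ^ 2 ≤ (1 + (m : ℝ) ^ 2) ^ (α + γ) := by
      have h1 : (2 * S0 + 2) ^ (s / 2) * X ≤ (m : ℝ) := by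
        have h2 := mul_le_mul_of_nonneg_right
          (show (2 * S0 + 2) ^ (s / 2) ≤ R by rw [hR_def]; linarith) hXpos.le
        linarith
      have huX0 : 0 ≤ (2 * S0 + 2) ^ (s / 2) * X :=
        mul_nonneg (Real.rpow_nonneg hu0.le _) hXpos.le
      have h3 : ((2 * S0 + 2) ^ (s / 2) * X) ^ 2 ≤ 1 + (m : ℝ) ^ 2 := by
        have h4 : ((2 * S0 + 2) ^ (s / 2) * X) ^ 2 ≤ (m : ℝ) ^ 2 :=
          pow_le_pow_left₀ huX0 h1 2
        linarith
      have h5 : (((2 * S0 + 2) ^ (s / 2) * X) ^ 2) ^ (α + γ)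
          ≤ (1 + (m : ℝ) ^ 2) ^ (α + γ) :=
        Real.rpow_le_rpow (by positivity) h3 hαγ.le
      have hu12 : (0:ℝ) ≤ (2 * S0 + 2) ^ (s / 2) := Real.rpow_nonneg hu0.le _
      have key : (((2 * S0 + 2) ^ (s / 2) * X) ^ 2) ^ (α + γ)
          = (2 * S0 + 2) * (ε⁻¹) ^ 2 := by
        rw [sq ((2 * S0 + 2) ^ (s / 2) * X),
          Real.mul_rpow huX0 huX0,
          Real.mul_rpow hu12 hXpos.le,
          ← Real.rpow_mul hu0.le, hXαγ]
        have e1 : s / 2 * (α + γ) = 1 / 2 := by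
          field_simp
          linarith [hsαγ]
        rw [e1]
        have e2 : (2 * S0 + 2) ^ (1/2 : ℝ) * ε⁻¹ * ((2 * S0 + 2) ^ (1/2 : ℝ) * ε⁻¹)
            = ((2 * S0 + 2) ^ (1/2 : ℝ) * (2 * S0 + 2) ^ (1/2 : ℝ)) * (ε⁻¹) ^ 2 := by
          ring
        rw [e2, ← Real.rpow_add hu0]
        norm_num
      exact le_trans (le_of_eq key.symm) h5
    have h4 : (0:ℝ) < (1 + (m : ℝ) ^ 2) ^ (α + γ) := Real.rpow_pos_of_pos hb0 _
    have h5 : (0:ℝ) < (2 * S0 + 2) * (ε⁻¹) ^ 2 := by positivity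
    have h6 : ((1 + (m : ℝ) ^ 2) ^ (α + γ))⁻¹ ≤ ((2 * S0 + 2) * (ε⁻¹) ^ 2)⁻¹ :=
      inv_anti₀ h5 hP
    have h7 : ((2 * S0 + 2) * (ε⁻¹) ^ 2)⁻¹ = ε ^ 2 / (2 * S0 + 2) := by
      field_simp
    rw [Real.rpow_neg hb0.le]
    calc S0 * ((1 + (m : ℝ) ^ 2) ^ (α + γ))⁻¹
        ≤ S0 * (ε ^ 2 / (2 * S0 + 2)) :=
          mul_le_mul_of_nonneg_left (h7 ▸ h6) hS0nn
      _ = S0 * ε ^ 2 / (2 * S0 + 2) := by rw [mul_div_assoc]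
      _ ≤ ε ^ 2 / 2 := by
          rw [div_le_div_iff₀ hu0 (by norm_num)]
          have h8 : 0 ≤ ε ^ 2 := sq_nonneg ε
          have h9 : S0 * ε ^ 2 * 2 ≤ ε ^ 2 * (2 * S0 + 2) := by
            have : ε ^ 2 * (2 * S0 + 2) = S0 * ε ^ 2 * 2 + 2 * ε ^ 2 := by ring
            linarith [mul_nonneg h8 (by norm_num : (0:ℝ) ≤ 2)]
          exact h9
  -- coefficient bound from the Sobolev norm
  have hak : ∀ k : ℕ, (1 + (k:ℝ)^2) ^ (γ/2) * |a k| ≤ Kγ := by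
    intro k
    have hbpos : (0:ℝ) < 1 + (k:ℝ)^2 := by positivity
    have h1 : a k ^ 2 * (1 + (k:ℝ)^2) ^ γ ≤ S0 := by
      rw [hS0_def]
      exact Summable.le_tsum hf0' k fun j _ => by positivity
    have h2 : ((1 + (k:ℝ)^2) ^ (γ/2) * |a k|) ^ 2 = a k ^ 2 * (1 + (k:ℝ)^2) ^ γ := by
      rw [mul_pow, sq_abs, sq ((1 + (k:ℝ)^2) ^ (γ/2)), ← Real.rpow_add hbpos,
        add_halves]
      ring
    have h3 : (0:ℝ) ≤ (1 + (k:ℝ)^2) ^ (γ/2) * |a k| :=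
      mul_nonneg (Real.rpow_nonneg hbpos.le _) (abs_nonneg _)
    rw [hKγ_def, ← Real.sqrt_sq h3]
    apply Real.sqrt_le_sqrt
    rw [h2]
    exact h1
  -- the key exponent bound for each coordinate
  have hMk : ∀ k : ℕ, k < m →
      ((τ k)⁻¹ * (|a k| + δ)) ^ w ≤ c6 * Real.log m + c01 := by
    intro k hkm
    have hc6logm : 0 ≤ c6 * Real.log m := mul_nonneg hc6 hlogm0
    by_cases hk2 : k < 2
    · have hbase0 : (0:ℝ) ≤ (τ k)⁻¹ * (|a k| + δ) :=
        mul_nonneg (inv_nonneg.2 (hτpos k).le) (by positivity)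
      have hstep : ((τ k)⁻¹ * (|a k| + δ)) ^ w ≤ ((τ k)⁻¹ * (|a k| + 1)) ^ w := by
        apply Real.rpow_le_rpow hbase0 _ (by linarith)
        exact mul_le_mul_of_nonneg_left (by linarith) (inv_nonneg.2 (hτpos k).le)
      have hc010 : (0:ℝ) ≤ ((τ 0)⁻¹ * (|a 0| + 1)) ^ w :=
        Real.rpow_nonneg (mul_nonneg (inv_nonneg.2 (hτpos 0).le) (by positivity)) _
      have hc011 : (0:ℝ) ≤ ((τ 1)⁻¹ * (|a 1| + 1)) ^ w :=
        Real.rpow_nonneg (mul_nonneg (inv_nonneg.2 (hτpos 1).le) (by positivity)) _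
      interval_cases k
      · rw [hc01_def]; linarith
      · rw [hc01_def]; linarith
    · have hk2' : 2 ≤ k := not_lt.1 hk2
      have hk1R : (1:ℝ) < (k:ℝ) := by exact_mod_cast lt_of_lt_of_le one_lt_two hk2'
      have hkmR : (k:ℝ) ≤ (m:ℝ) := by exact_mod_cast le_of_lt hkm
      have hlogk : 0 < Real.log k := Real.log_pos hk1R
      have hbk : (0:ℝ) < 1 + (k:ℝ)^2 := by positivity
      have hbk1 : (1:ℝ) ≤ 1 + (k:ℝ)^2 := le_add_of_nonneg_right (sq_nonneg _)
      have hτk := hτlb k hk2'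
      have hτlbpos : 0 < B3 * (1 + (k:ℝ)^2) ^ (-γ0/2) * Real.log k ^ (-(1/w)) :=
        mul_pos (mul_pos hB3 (Real.rpow_pos_of_pos hbk _))
          (Real.rpow_pos_of_pos hlogk _)
      have e1 : ((1 + (k:ℝ)^2) ^ (-γ0/2))⁻¹ = (1 + (k:ℝ)^2) ^ (γ0/2) := by
        rw [neg_div, Real.rpow_neg hbk.le, inv_inv]
      have e2 : (Real.log k ^ (-(1/w)))⁻¹ = Real.log k ^ (1/w : ℝ) := by
        rw [Real.rpow_neg hlogk.le, inv_inv]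
      have hinv : (τ k)⁻¹ ≤ B3⁻¹ * (1 + (k:ℝ)^2) ^ (γ0/2) * Real.log k ^ (1/w : ℝ) := by
        have h1 := inv_anti₀ hτlbpos hτk
        rwa [mul_inv, mul_inv, e1, e2] at h1
      have hMle : (τ k)⁻¹ * (|a k| + δ)
          ≤ B3⁻¹ * (Kγ + c5) * Real.log k ^ (1/w : ℝ) := by
        have h2 : (τ k)⁻¹ * (|a k| + δ)
            ≤ B3⁻¹ * (1 + (k:ℝ)^2) ^ (γ0/2) * Real.log k ^ (1/w : ℝ) * (|a k| + δ) :=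
          mul_le_mul_of_nonneg_right hinv (by positivity)
        have h3 : (1 + (k:ℝ)^2) ^ (γ0/2) * (|a k| + δ) ≤ Kγ + c5 := by
          rw [mul_add]
          have part1 : (1 + (k:ℝ)^2) ^ (γ0/2) * |a k| ≤ Kγ := by
            refine le_trans ?_ (hak k)
            apply mul_le_mul_of_nonneg_right _ (abs_nonneg _)
            exact Real.rpow_le_rpow_of_exponent_le hbk1 (by linarith)
          have part2 : (1 + (k:ℝ)^2) ^ (γ0/2) * δ ≤ c5 := by
            rcases le_or_gt γ0 0 with hg | hg
            · have h4 : (1 + (k:ℝ)^2) ^ (γ0/2) ≤ 1 :=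
                Real.rpow_le_one_of_one_le_of_nonpos hbk1 (by linarith)
              have := mul_le_mul_of_nonneg_right h4 hδpos.le
              rw [one_mul] at this
              linarith
            · have h4 : (1 + (k:ℝ)^2) ^ (γ0/2) ≤ (1 + (k:ℝ)^2) ^ (γ/2) :=
                Real.rpow_le_rpow_of_exponent_le hbk1 (by linarith)
              have hkm2 : (1 + (k:ℝ)^2) ≤ 1 + (m:ℝ)^2 := by
                have := pow_le_pow_left₀ (by positivity : (0:ℝ) ≤ (k:ℝ)) hkmR 2
                linarith
              have h5 : (1 + (k:ℝ)^2) ^ (γ/2) ≤ (1 + (m:ℝ)^2) ^ (γ/2) :=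
                Real.rpow_le_rpow hbk.le hkm2 (by linarith)
              have h6 : (1 + (m:ℝ)^2) ≤ 2 * (m:ℝ)^2 := by
                have h7 := pow_le_pow_left₀ (by norm_num : (0:ℝ) ≤ 1)
                  (show (1:ℝ) ≤ (m:ℝ) by linarith) 2
                rw [one_pow] at h7
                linarith
              have h8 : (1 + (m:ℝ)^2) ^ (γ/2) ≤ (2 * (m:ℝ)^2) ^ (γ/2) :=
                Real.rpow_le_rpow hb0.le h6 (by linarith)
              have h9 : (2 * (m:ℝ)^2) ^ (γ/2) = 2 ^ (γ/2) * ((m:ℝ)^2) ^ (γ/2) :=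
                Real.mul_rpow (by norm_num) (by positivity)
              have h10 : ((m:ℝ)^2) ^ (γ/2) = (m:ℝ) ^ γ := by
                rw [← Real.rpow_natCast (m:ℝ) 2, ← Real.rpow_mul hmpos.le]
                congr 1
                push_cast
                ring
              have h11 : (1 + (k:ℝ)^2) ^ (γ0/2) * δ ≤ 2 ^ (γ/2) * (m:ℝ) ^ γ * ε := by
                have hb1 : (1 + (k:ℝ)^2) ^ (γ0/2) ≤ 2 ^ (γ/2) * (m:ℝ) ^ γ := by
                  rw [← h10, ← h9]
                  exact le_trans h4 (le_trans h5 h8)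
                have := mul_le_mul hb1 hδε hδpos.le
                  (by positivity)
                exact this
              have h12 : (m:ℝ) ^ γ * ε ≤ (2*R) ^ (α+γ) := by
                have h13 : (m:ℝ) ^ γ = (m:ℝ) ^ (α+γ) * (m:ℝ) ^ (-α) := by
                  rw [← Real.rpow_add hmpos]
                  ring_nf
                have h14 : (m:ℝ) ^ (-α) ≤ 1 :=
                  Real.rpow_le_one_of_one_le_of_nonpos (by linarith) (by linarith)
                calc (m:ℝ) ^ γ * ε = (ε * (m:ℝ) ^ (α+γ)) * (m:ℝ) ^ (-α) := by
                      rw [h13]; ring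
                  _ ≤ (2*R) ^ (α+γ) * 1 := by
                      apply mul_le_mul hkey1 h14 (Real.rpow_nonneg (by positivity) _)
                        (Real.rpow_nonneg (by linarith) _)
                  _ = (2*R) ^ (α+γ) := mul_one _
              have h15 : 2 ^ (γ/2 : ℝ) * ((m:ℝ) ^ γ * ε) ≤ 2 ^ (γ/2:ℝ) * (2*R) ^ (α+γ) :=
                mul_le_mul_of_nonneg_left h12 (Real.rpow_nonneg (by norm_num) _)
              rw [hc5_def]
              calc (1 + (k:ℝ)^2) ^ (γ0/2) * δ ≤ 2 ^ (γ/2) * (m:ℝ) ^ γ * ε := h11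
                _ = 2 ^ (γ/2 : ℝ) * ((m:ℝ) ^ γ * ε) := by ring
                _ ≤ 2 ^ (γ/2:ℝ) * (2*R) ^ (α+γ) := h15
                _ ≤ 2 ^ (γ/2) * (2*R) ^ (α+γ) + 1 := by linarith
          linarith [part1, part2]
        calc (τ k)⁻¹ * (|a k| + δ)
            ≤ B3⁻¹ * (1 + (k:ℝ)^2) ^ (γ0/2) * Real.log k ^ (1/w : ℝ) * (|a k| + δ) := h2
          _ = B3⁻¹ * Real.log k ^ (1/w : ℝ) * ((1 + (k:ℝ)^2) ^ (γ0/2) * (|a k| + δ)) := by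
              ring
          _ ≤ B3⁻¹ * Real.log k ^ (1/w : ℝ) * (Kγ + c5) := by
              apply mul_le_mul_of_nonneg_left h3
              exact mul_nonneg (inv_nonneg.2 hB3.le) (Real.rpow_nonneg hlogk.le _)
          _ = B3⁻¹ * (Kγ + c5) * Real.log k ^ (1/w : ℝ) := by ring
      have hfin : ((τ k)⁻¹ * (|a k| + δ)) ^ w ≤ c6 * Real.log k := by
        have hbase0 : (0:ℝ) ≤ (τ k)⁻¹ * (|a k| + δ) :=
          mul_nonneg (inv_nonneg.2 (hτpos k).le) (by positivity)
        have h1 : ((τ k)⁻¹ * (|a k| + δ)) ^ w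
            ≤ (B3⁻¹ * (Kγ + c5) * Real.log k ^ (1/w : ℝ)) ^ w :=
          Real.rpow_le_rpow hbase0 hMle (by linarith)
        have h2 : (B3⁻¹ * (Kγ + c5) * Real.log k ^ (1/w : ℝ)) ^ w
            = (B3⁻¹ * (Kγ + c5)) ^ w * Real.log k := by
          rw [Real.mul_rpow
            (mul_nonneg (inv_nonneg.2 hB3.le) (by linarith)) (Real.rpow_nonneg hlogk.le _),
            ← Real.rpow_mul hlogk.le, one_div_mul_cancel (by linarith : w ≠ 0),
            Real.rpow_one]
        rw [h2, ← hc6_def] at h1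
        exact h1
      have hlogkm : Real.log k ≤ Real.log m := Real.log_le_log (by linarith) hkmR
      calc ((τ k)⁻¹ * (|a k| + δ)) ^ w ≤ c6 * Real.log k := hfin
        _ ≤ c6 * Real.log m := mul_le_mul_of_nonneg_left hlogkm hc6
        _ ≤ c6 * Real.log m + c01 := by linarith
  -- probability measures for each coordinate
  haveI hprob : ∀ k : Fin m, IsProbabilityMeasure
      ((volume : Measure ℝ).withDensity fun t : ℝ =>
        ENNReal.ofReal ((τ (k : ℕ))⁻¹ * q ((τ (k : ℕ))⁻¹ * t))) :=
    fun k => isProbability_scaled_density hq0 hqint (hτpos (k : ℕ))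
  haveI hsig : ∀ k : Fin m, SigmaFinite
      ((volume : Measure ℝ).withDensity fun t : ℝ =>
        ENNReal.ofReal ((τ (k : ℕ))⁻¹ * q ((τ (k : ℕ))⁻¹ * t))) := by
    intro k
    haveI := hprob k
    infer_instance
  -- common one-dimensional lower bound
  obtain ⟨Lc, hLc_def⟩ : ∃ x : ℝ, x = (2 * δ) *
      ((B4 * (1 + (m:ℝ)^2) ^ ((α + 1) / 2))⁻¹ *
        (D * Real.exp (-d * (c6 * Real.log m + c01)))) := ⟨_, rfl⟩
  have hB4m : (0:ℝ) < B4 * (1 + (m:ℝ)^2) ^ ((α + 1) / 2) :=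
    mul_pos hB4 (Real.rpow_pos_of_pos hb0 _)
  have hLcpos : 0 < Lc := by
    rw [hLc_def]
    exact mul_pos (by linarith)
      (mul_pos (inv_pos.2 hB4m) (mul_pos hD (Real.exp_pos _)))
  have hcoord : ∀ k : Fin m, ENNReal.ofReal Lc ≤
      ((volume : Measure ℝ).withDensity fun t : ℝ =>
        ENNReal.ofReal ((τ (k : ℕ))⁻¹ * q ((τ (k : ℕ))⁻¹ * t)))
        (Icc (a (k : ℕ) - δ) (a (k : ℕ) + δ)) := by
    intro k
    refine le_trans ?_ (withDensity_Icc_lb hD hd hw hq (a (k : ℕ)) (hτpos (k : ℕ)) hδpos)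
    apply ENNReal.ofReal_le_ofReal
    rw [hLc_def]
    apply mul_le_mul_of_nonneg_left _ (by linarith)
    have hτinv : (B4 * (1 + (m:ℝ)^2) ^ ((α + 1) / 2))⁻¹ ≤ (τ (k : ℕ))⁻¹ := by
      apply inv_anti₀ (hτpos _)
      have hkmR : ((k : ℕ) : ℝ) ≤ (m : ℝ) := by
        exact_mod_cast le_of_lt k.isLt
      calc τ (k : ℕ) ≤ B4 * (1 + ((k:ℕ):ℝ)^2) ^ ((α + 1) / 2) := hτub _
        _ ≤ B4 * (1 + (m:ℝ)^2) ^ ((α + 1) / 2) := by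
            apply mul_le_mul_of_nonneg_left _ hB4.le
            apply Real.rpow_le_rpow (by positivity) _ (by linarith)
            have := pow_le_pow_left₀ (by positivity : (0:ℝ) ≤ ((k:ℕ):ℝ)) hkmR 2
            linarith
    have hexp : Real.exp (-d * (c6 * Real.log m + c01))
        ≤ Real.exp (-d * ((τ (k:ℕ))⁻¹ * (|a (k:ℕ)| + δ)) ^ w) := by
      apply Real.exp_le_exp.2
      have h1 := mul_le_mul_of_nonneg_left (hMk (k : ℕ) k.isLt) hd.le
      linarith
    have hnn1 : (0:ℝ) ≤ (B4 * (1 + (m:ℝ)^2) ^ ((α + 1) / 2))⁻¹ := (inv_pos.2 hB4m).le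
    exact mul_le_mul hτinv
      (mul_le_mul_of_nonneg_left hexp hD.le)
      (mul_nonneg hD.le (Real.exp_pos _).le)
      (inv_nonneg.2 (hτpos _).le)
  -- the finite-dimensional box is inside the preimage of the event
  have hTcont : Continuous (fun x : Fin m → ℝ => ∑ k : Fin m, x k • e (k : ℕ)) := by
    apply continuous_finset_sum
    intro k _
    exact (continuous_apply (k : Fin m)).smul continuous_const
  have hsubset : (Set.univ.pi fun k : Fin m => Icc (a (k : ℕ) - δ) (a (k : ℕ) + δ)) ⊆
      (fun x : Fin m → ℝ => ∑ k : Fin m, x k • e (k : ℕ)) ⁻¹'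
        {f : H1 | Real.sqrt (∑' k : ℕ,
          (⟪f, e k⟫ - ⟪f0, e k⟫) ^ 2 * (1 + (k : ℝ) ^ 2) ^ (-α)) ≤ ε} := by
    intro x hx
    simp only [Set.mem_preimage, Set.mem_setOf_eq]
    have hres := sqrt_tsum_event_bound hα hγ a hf0' (m := m) hδpos hε.le
      (fun j => ⟪∑ k : Fin m, x k • e (k : ℕ), e j⟫)
      (by
        intro k hk
        show |⟪∑ j : Fin m, x j • e (j : ℕ), e k⟫ - a k| ≤ δ
        rw [inner_finsum_basis e x k, dif_pos hk]
        have hxk : x ⟨k, hk⟩ ∈ Icc (a k - δ) (a k + δ) := hx ⟨k, hk⟩ (Set.mem_univ _)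
        rw [abs_le]
        exact ⟨by linarith [hxk.1], by linarith [hxk.2]⟩)
      (by
        intro k hk
        show ⟪∑ j : Fin m, x j • e (j : ℕ), e k⟫ = 0
        rw [inner_finsum_basis e x k, dif_neg (not_lt.2 hk)])
      hheadm
      (by rw [← hS0_def]; exact htailm)
    have haeq : ∀ k : ℕ, a k = ⟪f0, e k⟫ := fun k => by rw [ha_def]
    simpa [haeq] using hres
  -- lower bound for the prior mass
  have hPrS : ENNReal.ofReal (B1 * Real.exp (-b1 * m) * Lc ^ m) ≤
      Pr {f : H1 | Real.sqrt (∑' k : ℕ,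
        (⟪f, e k⟫ - ⟪f0, e k⟫) ^ 2 * (1 + (k : ℝ) ^ 2) ^ (-α)) ≤ ε} := by
    rw [hPr]
    refine le_trans ?_ (Measure.le_iff'.1 (Measure.le_sum _ m) _)
    rw [Measure.smul_apply, smul_eq_mul]
    have step1 : ENNReal.ofReal (B1 * Real.exp (-b1 * m) * Lc ^ m)
        ≤ ENNReal.ofReal (h m * Lc ^ m) :=
      ENNReal.ofReal_le_ofReal
        (mul_le_mul_of_nonneg_right (hhlb m hm1) (pow_nonneg hLcpos.le m))
    refine le_trans step1 ?_
    rw [ENNReal.ofReal_mul (hhnn m)]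
    apply mul_le_mul_right ?_ _
    have step2 : ENNReal.ofReal (Lc ^ m) ≤
        (Measure.pi fun k : Fin m =>
          (volume : Measure ℝ).withDensity fun t : ℝ =>
            ENNReal.ofReal ((τ (k : ℕ))⁻¹ * q ((τ (k : ℕ))⁻¹ * t)))
          (Set.univ.pi fun k : Fin m => Icc (a (k : ℕ) - δ) (a (k : ℕ) + δ)) := by
      rw [Measure.pi_pi]
      calc ENNReal.ofReal (Lc ^ m) = ENNReal.ofReal Lc ^ m :=
            ENNReal.ofReal_pow hLcpos.le m
        _ = ∏ _k : Fin m, ENNReal.ofReal Lc := by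
            rw [Finset.prod_const, Finset.card_univ, Fintype.card_fin]
        _ ≤ ∏ k : Fin m, ((volume : Measure ℝ).withDensity fun t : ℝ =>
              ENNReal.ofReal ((τ (k : ℕ))⁻¹ * q ((τ (k : ℕ))⁻¹ * t)))
              (Icc (a (k : ℕ) - δ) (a (k : ℕ) + δ)) :=
            Finset.prod_le_prod' fun k _ => hcoord k
    refine le_trans step2 ?_
    refine le_trans (measure_mono hsubset) ?_
    exact Measure.le_map_apply hTcont.measurable.aemeasurable _
  -- final numeric comparison
  refine le_trans ?_ hPrS
  apply ENNReal.ofReal_le_ofReal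
  -- rewrite the right-hand side as an exponential
  have hprod : B1 * Real.exp (-b1 * m) * Lc ^ m
      = Real.exp (Real.log B1 + (-b1 * m) + m * Real.log Lc) := by
    rw [Real.exp_add, Real.exp_add, Real.exp_log hB1]
    congr 1
    rw [mul_comm (m:ℝ) (Real.log Lc), Real.exp_mul, Real.exp_log hLcpos,
      Real.rpow_natCast]
  rw [hprod]
  apply Real.exp_le_exp.2
  -- bound -log Lc
  have hlogLc : -Real.log Lc ≤ A1 + A2 * Real.log m := by
    have h2δ : 2 * δ = ε / m := by
      rw [hδ_def]
      field_simp
    have hlog2δ : Real.log (2 * δ) = Real.log ε - Real.log m := by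
      rw [h2δ, Real.log_div hε.ne' (by linarith : (m:ℝ) ≠ 0)]
    have hlogB4m : Real.log (B4 * (1 + (m:ℝ)^2) ^ ((α + 1) / 2))
        = Real.log B4 + (α + 1) / 2 * Real.log (1 + (m:ℝ)^2) := by
      rw [Real.log_mul hB4.ne' (Real.rpow_pos_of_pos hb0 _).ne',
        Real.log_rpow hb0]
    have hlogLc1 : Real.log Lc = Real.log (2 * δ)
        + (-(Real.log B4 + (α + 1) / 2 * Real.log (1 + (m:ℝ)^2))
          + (Real.log D + (-d * (c6 * Real.log m + c01)))) := by
      rw [hLc_def, Real.log_mul (by linarith : 2 * δ ≠ 0)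
        (mul_pos (inv_pos.2 hB4m) (mul_pos hD (Real.exp_pos _))).ne',
        Real.log_mul (inv_pos.2 hB4m).ne' (mul_pos hD (Real.exp_pos _)).ne',
        Real.log_mul hD.ne' (Real.exp_pos _).ne', Real.log_exp,
        Real.log_inv, hlogB4m]
    have hlog1m2 : Real.log (1 + (m:ℝ)^2) ≤ Real.log 2 + 2 * Real.log m := by
      have h6 : (1 + (m:ℝ)^2) ≤ 2 * (m:ℝ)^2 := by
        have h7 := pow_le_pow_left₀ (by norm_num : (0:ℝ) ≤ 1)
          (show (1:ℝ) ≤ (m:ℝ) by linarith) 2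
        rw [one_pow] at h7
        linarith
      have h8 : Real.log (1 + (m:ℝ)^2) ≤ Real.log (2 * (m:ℝ)^2) :=
        Real.log_le_log hb0 h6
      rw [Real.log_mul (by norm_num) (by positivity), Real.log_pow] at h8
      push_cast at h8
      linarith
    have hml : -Real.log ε ≤ (α + γ) * Real.log m := by rw [← hL1]; exact hlog1ε
    have habs1 : Real.log B4 ≤ |Real.log B4| := le_abs_self _
    have habs2 : -Real.log D ≤ |Real.log D| := neg_le_abs _
    have hc6m : d * (c6 * Real.log m + c01) = d * c6 * Real.log m + d * c01 := by ring
    rw [hlogLc1, hlog2δ, hA1_def, hA2_def]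
    have hα12 : 0 ≤ (α + 1) / 2 := by linarith
    have h9 := mul_le_mul_of_nonneg_left hlog1m2 hα12
    have h10 : 0 ≤ d * c6 := mul_nonneg hd.le hc6
    linarith only [h9, hml, habs1, habs2]
  -- now the pure real-number endgame
  rw [← hs_def, ← hX_def, ← hL1_def]
  have hm1R : (1:ℝ) ≤ (m:ℝ) := by linarith
  have hXL1 : 0 ≤ X * L1 := mul_nonneg hXpos.le (by linarith)
  have hmlogm : 0 ≤ (m:ℝ) * Real.log m := mul_nonneg hmpos.le hlogm0
  have step2 : (m:ℝ) * (-Real.log Lc) ≤ (m:ℝ) * (A1 + A2 * Real.log m) :=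
    mul_le_mul_of_nonneg_left hlogLc hmpos.le
  have habsB1 : -Real.log B1 ≤ |Real.log B1| := neg_le_abs _
  have step3 : b1 * m - Real.log B1 - (m:ℝ) * Real.log Lc
      ≤ b1 * m + |Real.log B1| + (m:ℝ) * (A1 + A2 * Real.log m) := by
    linarith only [step2, habsB1]
  have honem : (1:ℝ) ≤ (m:ℝ) * Real.log m := by
    have := mul_le_mul hm1R hlogm1 (by norm_num) hmpos.le
    linarith only [this]
  have step4 : b1 * m + |Real.log B1| + (m:ℝ) * (A1 + A2 * Real.log m)
      ≤ (b1 + |Real.log B1| + A1 + A2) * ((m:ℝ) * Real.log m) := by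
    have e1 : (b1 + |Real.log B1| + A1 + A2) * ((m:ℝ) * Real.log m)
        = b1 * ((m:ℝ) * Real.log m) + |Real.log B1| * ((m:ℝ) * Real.log m)
          + A1 * ((m:ℝ) * Real.log m) + A2 * ((m:ℝ) * Real.log m) := by ring
    have e2 : b1 * m ≤ b1 * ((m:ℝ) * Real.log m) :=
      mul_le_mul_of_nonneg_left (le_mul_of_one_le_right hmpos.le hlogm1) hb1.le
    have e3 : |Real.log B1| ≤ |Real.log B1| * ((m:ℝ) * Real.log m) :=
      le_mul_of_one_le_right (abs_nonneg _) honem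
    have e4 : (m:ℝ) * A1 ≤ A1 * ((m:ℝ) * Real.log m) := by
      have := mul_le_mul_of_nonneg_left (le_mul_of_one_le_right hmpos.le hlogm1) hA1
      linarith only [this]
    have e5 : (m:ℝ) * (A2 * Real.log m) = A2 * ((m:ℝ) * Real.log m) := by ring
    have e6 : (m:ℝ) * (A1 + A2 * Real.log m)
        = (m:ℝ) * A1 + (m:ℝ) * (A2 * Real.log m) := by ring
    rw [e1, e6, e5]
    linarith only [e2, e3, e4]
  have step5 : (m:ℝ) * Real.log m
      ≤ ((R + 1) * X) * ((Real.log (R + 1) + s) * L1) := by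
    have h1 : Real.log m ≤ Real.log ((R + 1) * X) :=
      Real.log_le_log hmpos hmub
    have h2 : Real.log ((R + 1) * X) = Real.log (R + 1) + Real.log X :=
      Real.log_mul (by linarith) hXpos.ne'
    have h3 : Real.log (R + 1) ≤ Real.log (R + 1) * L1 :=
      le_mul_of_one_le_right hlogR1 hL1ge1
    have h4 : Real.log m ≤ (Real.log (R + 1) + s) * L1 := by
      have h5 : (Real.log (R + 1) + s) * L1
          = Real.log (R + 1) * L1 + s * L1 := by ring
      rw [h5]
      rw [h2, hlogX] at h1
      linarith only [h1, h3]
    exact mul_le_mul hmub h4 hlogm0 (mul_nonneg (by linarith) hXpos.le)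
  have step6 : (b1 + |Real.log B1| + A1 + A2) * ((m:ℝ) * Real.log m)
      ≤ K1 * ((m:ℝ) * Real.log m) :=
    mul_le_mul_of_nonneg_right (by rw [hK1_def]; linarith) hmlogm
  have step7 : K1 * ((m:ℝ) * Real.log m)
      ≤ K1 * (((R + 1) * X) * ((Real.log (R + 1) + s) * L1)) :=
    mul_le_mul_of_nonneg_left step5 (by linarith only [hK1])
  have step8 : K1 * (((R + 1) * X) * ((Real.log (R + 1) + s) * L1))
      ≤ (K1 * K2 + 1) * (X * L1) := by
    have h1 : K1 * ((R + 1) * (Real.log (R + 1) + s)) ≤ K1 * K2 := by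
      apply mul_le_mul_of_nonneg_left _ (by linarith only [hK1])
      rw [hK2_def]
      linarith
    have h2 : K1 * (((R + 1) * X) * ((Real.log (R + 1) + s) * L1))
        = (K1 * ((R + 1) * (Real.log (R + 1) + s))) * (X * L1) := by ring
    rw [h2]
    have h3 := mul_le_mul_of_nonneg_right h1 hXL1
    have h4 : K1 * K2 * (X * L1) ≤ (K1 * K2 + 1) * (X * L1) := by
      apply mul_le_mul_of_nonneg_right _ hXL1
      linarith
    linarith only [h3, h4]
  have hmain : b1 * m - Real.log B1 - (m:ℝ) * Real.log Lc
      ≤ (K1 * K2 + 1) * (X * L1) := by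
    linarith only [step3, step4, step6, step7, step8]
  have efin : (K1 * K2 + 1) * (X * L1) = -(-(K1 * K2 + 1) * X * L1) := by ring
  rw [efin] at hmain
  linarith only [hmain]
end

section
/- Suppose A satisfies Condition (M) with regularity α and f0 = Σ_{k=1}^{m0} f_{0,k} e_k is a finite linear combination of the {e_k}. Consider the sieve prior Π with h(m0) > 0, fixed scale parameters τ_k > 0, and density q satisfying Condition 5 for some w ≥ 1. Then there exist constants C3, C4 > 0 and ε0 > 0 such that for all 0 < ε < ε0, Π(f : ‖f − f0‖_{H^{−α}} ≤ ε) ≥ C3 ε^{C4}. -/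
open MeasureTheory ProbabilityTheory Real Filter
open scoped ENNReal NNReal RealInnerProductSpace

private lemma coeff_sum {H1 : Type*} [NormedAddCommGroup H1] [InnerProductSpace ℝ H1]
    (e : HilbertBasis ℕ ℝ H1) (m : ℕ) (x : Fin m → ℝ) (j : ℕ) :
    ⟪∑ k : Fin m, x k • e (k : ℕ), e j⟫ = if hj : j < m then x ⟨j, hj⟩ else 0 := by
  have horth := orthonormal_iff_ite.mp e.orthonormal
  rw [sum_inner]
  by_cases hj : j < m
  · rw [dif_pos hj, Finset.sum_eq_single (⟨j, hj⟩ : Fin m)]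
    · rw [real_inner_smul_left, horth, if_pos rfl, mul_one]
    · intro k _ hk
      rw [real_inner_smul_left, horth, if_neg (fun hkj => hk (Fin.ext hkj)), mul_zero]
    · exact fun hmem => absurd (Finset.mem_univ _) hmem
  · rw [dif_neg hj]
    refine Finset.sum_eq_zero fun k _ => ?_
    rw [real_inner_smul_left, horth, if_neg (fun (hkj : (k:ℕ) = j) => hj (hkj ▸ k.isLt)), mul_zero]


set_option maxHeartbeats 1000000 in
/-- small-ball lower bound for the sieve prior in the mildly ill-posed case
when `f0` is a finite series: `Π(f : ‖f − f0‖_{H^{−α}} ≤ ε) ≥ C3 ε^{C4}` for small `ε`. -/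
theorem sieve_small_ball_finite_truth
    {H1 : Type*} [NormedAddCommGroup H1] [InnerProductSpace ℝ H1] [CompleteSpace H1]
    [MeasurableSpace H1] [BorelSpace H1]
    {H2 : Type*} [NormedAddCommGroup H2] [InnerProductSpace ℝ H2] [CompleteSpace H2]
    (e : HilbertBasis ℕ ℝ H1)
    (A : H1 →L[ℝ] H2) (hAinj : Function.Injective A)
    (ρ : ℕ → ℝ) (hρpos : ∀ k, 0 < ρ k) (hρanti : Antitone ρ)
    (g : ℕ → H2) (hg : Orthonormal ℝ g) (hAe : ∀ k, A (e k) = ρ k • g k)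
    -- Condition (M) with regularity α
    (α C1 C2 : ℝ) (hα : 0 ≤ α) (hC1 : 0 < C1) (hC2 : 0 < C2)
    (hM : ∀ k : ℕ, C1 * (1 + (k : ℝ) ^ 2) ^ (-α / 2) ≤ ρ k ∧
          ρ k ≤ C2 * (1 + (k : ℝ) ^ 2) ^ (-α / 2))
    -- the true parameter is a finite series in the `e_k` basis, with `h(m0) > 0`
    (f0 : H1) (m0 : ℕ) (hf0fin : ∀ k, m0 ≤ k → ⟪f0, e k⟫ = 0)
    -- sieve prior ingredients
    (h : ℕ → ℝ) (hhnn : ∀ m, 0 ≤ h m) (hhsum : ∑' m : ℕ, h m = 1) (hm0 : 0 < h m0)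
    (τ : ℕ → ℝ) (hτpos : ∀ k, 0 < τ k)
    (q : ℝ → ℝ) (hq0 : ∀ x, 0 ≤ q x) (hqint : ∫ x, q x = 1)
    (D d w : ℝ) (hD : 0 < D) (hd : 0 < d) (hw : 1 ≤ w)
    (hq : ∀ x : ℝ, D * Real.exp (-d * |x| ^ w) ≤ q x)
    (Pr : Measure H1)
    (hPr : Pr = Measure.sum fun m : ℕ => ENNReal.ofReal (h m) •
      Measure.map (fun x : Fin m → ℝ => ∑ k : Fin m, x k • e (k : ℕ))
        (Measure.pi fun k : Fin m =>
          volume.withDensity fun t : ℝ =>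
            ENNReal.ofReal ((τ (k : ℕ))⁻¹ * q ((τ (k : ℕ))⁻¹ * t)))) :
    ∃ C3 C4 ε0 : ℝ, 0 < C3 ∧ 0 < C4 ∧ 0 < ε0 ∧ ∀ ε : ℝ, 0 < ε → ε < ε0 →
      ENNReal.ofReal (C3 * ε ^ C4)
        ≤ Pr {f : H1 | Real.sqrt (∑' k : ℕ,
              (⟪f, e k⟫ - ⟪f0, e k⟫) ^ 2 * (1 + (k : ℝ) ^ 2) ^ (-α)) ≤ ε} := by
  classical
  set c : ℕ → ℝ :=
    fun k => (τ k)⁻¹ * (D * Real.exp (-d * ((τ k)⁻¹ * (|⟪f0, e k⟫| + 1)) ^ w)) with hc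
  have hcpos : ∀ k, 0 < c k := fun k => by
    have hτ := hτpos k
    positivity
  have hprodpos : 0 < ∏ k : Fin m0, (2 * c (k : ℕ)) :=
    Finset.prod_pos fun k _ => by have := hcpos (k : ℕ); linarith
  have hm1 : (0:ℝ) < (m0 : ℝ) + 1 := by positivity
  refine ⟨h m0 * (∏ k : Fin m0, (2 * c (k : ℕ))) * (((m0 : ℝ) + 1)⁻¹) ^ m0,
    (m0 : ℝ) + 1, 1, ?_, hm1, one_pos, ?_⟩
  · have h1 : (0:ℝ) < (((m0 : ℝ) + 1)⁻¹) ^ m0 := by positivity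
    exact mul_pos (mul_pos hm0 hprodpos) h1
  intro ε hε hε1
  set δ : ℝ := ε / ((m0 : ℝ) + 1) with hδ
  have hδpos : 0 < δ := div_pos hε hm1
  have hδε : δ ≤ ε := by
    rw [hδ, div_le_iff₀ hm1]; nlinarith
  have hδ1 : δ ≤ 1 := le_of_lt (lt_of_le_of_lt hδε hε1)
  have hmδ : (m0:ℝ) * δ ^ 2 ≤ ε ^ 2 := by
    rw [hδ, div_pow, mul_div_assoc']
    rw [div_le_iff₀ (by positivity)]
    nlinarith [sq_nonneg ε, mul_nonneg (sq_nonneg ε) (mul_self_nonneg ((m0:ℝ))), mul_nonneg (sq_nonneg ε) (Nat.cast_nonneg m0 : (0:ℝ) ≤ (m0:ℝ))]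
  set T : (Fin m0 → ℝ) → H1 := fun x => ∑ k : Fin m0, x k • e (k : ℕ) with hT
  have hTcont : Continuous T := by
    apply continuous_finset_sum
    intro k _
    exact (continuous_apply (k : Fin m0)).smul continuous_const
  set μk : Fin m0 → Measure ℝ := fun k =>
    volume.withDensity fun t : ℝ =>
      ENNReal.ofReal ((τ (k : ℕ))⁻¹ * q ((τ (k : ℕ))⁻¹ * t)) with hμk
  set S : Set H1 := {f : H1 | Real.sqrt (∑' k : ℕ,
      (⟪f, e k⟫ - ⟪f0, e k⟫) ^ 2 * (1 + (k : ℝ) ^ 2) ^ (-α)) ≤ ε} with hSdef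
  set S0 : Set H1 := {f : H1 | (∀ k, m0 ≤ k → ⟪f, e k⟫ = 0) ∧
      ∀ k : Fin m0, |⟪f, e (k : ℕ)⟫ - ⟪f0, e (k : ℕ)⟫| ≤ δ} with hS0def
  have hinner : ∀ j : ℕ, Measurable fun f : H1 => ⟪f, e j⟫ :=
    fun j => (continuous_id.inner continuous_const).measurable
  have hS0meas : MeasurableSet S0 := by
    rw [hS0def, Set.setOf_and]
    refine MeasurableSet.inter ?_ ?_
    · rw [Set.setOf_forall]
      refine MeasurableSet.iInter fun k => ?_
      by_cases hk : m0 ≤ k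
      · simp only [hk, true_implies]
        exact measurableSet_eq_fun (hinner k) measurable_const
      · simp only [hk, false_implies]
        simp
    · rw [Set.setOf_forall]
      exact MeasurableSet.iInter fun k =>
        measurableSet_le ((hinner (k : ℕ)).sub measurable_const).abs measurable_const
  have hS0S : S0 ⊆ S := by
    intro f hf
    obtain ⟨htail, hhead⟩ := hf
    have hzero : ∀ k ∉ Finset.range m0,
        (⟪f, e k⟫ - ⟪f0, e k⟫) ^ 2 * (1 + (k:ℝ)^2) ^ (-α) = 0 := by
      intro k hk
      rw [Finset.mem_range, not_lt] at hk
      rw [htail k hk, hf0fin k hk, sub_zero]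
      norm_num
    rw [hSdef, Set.mem_setOf_eq, tsum_eq_sum hzero]
    have hbound : ∑ k ∈ Finset.range m0,
        (⟪f, e k⟫ - ⟪f0, e k⟫) ^ 2 * (1 + (k:ℝ)^2) ^ (-α) ≤ (m0:ℝ) * δ ^ 2 := by
      have hterm : ∀ k ∈ Finset.range m0,
          (⟪f, e k⟫ - ⟪f0, e k⟫) ^ 2 * (1 + (k:ℝ)^2) ^ (-α) ≤ δ ^ 2 := by
        intro k hk
        rw [Finset.mem_range] at hk
        have hk' := hhead ⟨k, hk⟩
        have h1 : (⟪f, e k⟫ - ⟪f0, e k⟫) ^ 2 ≤ δ ^ 2 := sq_le_sq' (by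
          have := (abs_le.mp hk').1; linarith) (abs_le.mp hk').2
        have h2 : (1 + (k:ℝ)^2) ^ (-α) ≤ 1 :=
          Real.rpow_le_one_of_one_le_of_nonpos (by nlinarith [sq_nonneg ((k:ℝ))])
            (by linarith)
        have h3 : (0:ℝ) ≤ (1 + (k:ℝ)^2) ^ (-α) :=
          Real.rpow_nonneg (by nlinarith [sq_nonneg ((k:ℝ))]) _
        calc (⟪f, e k⟫ - ⟪f0, e k⟫) ^ 2 * (1 + (k:ℝ)^2) ^ (-α)
            ≤ δ ^ 2 * 1 := mul_le_mul h1 h2 h3 (sq_nonneg δ)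
          _ = δ ^ 2 := mul_one _
      calc ∑ k ∈ Finset.range m0, (⟪f, e k⟫ - ⟪f0, e k⟫) ^ 2 * (1 + (k:ℝ)^2) ^ (-α)
          ≤ ∑ _k ∈ Finset.range m0, δ ^ 2 := Finset.sum_le_sum hterm
        _ = (m0:ℝ) * δ ^ 2 := by rw [Finset.sum_const, Finset.card_range, nsmul_eq_mul]
    calc Real.sqrt (∑ k ∈ Finset.range m0,
          (⟪f, e k⟫ - ⟪f0, e k⟫) ^ 2 * (1 + (k:ℝ)^2) ^ (-α))
        ≤ Real.sqrt (ε ^ 2) := Real.sqrt_le_sqrt (hbound.trans hmδ)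
      _ = ε := Real.sqrt_sq hε.le
  set B : Set (Fin m0 → ℝ) := Set.pi Set.univ fun k : Fin m0 =>
    Set.Icc (⟪f0, e (k : ℕ)⟫ - δ) (⟪f0, e (k : ℕ)⟫ + δ) with hBdef
  have hB : B ⊆ T ⁻¹' S0 := by
    intro x hx
    refine ⟨fun k hk => ?_, fun k => ?_⟩
    · rw [hT]; rw [coeff_sum, dif_neg (not_lt.mpr hk)]
    · have hxk := hx k (Set.mem_univ k)
      simp only [Set.mem_Icc] at hxk
      rw [hT]
      rw [show (⟪∑ j : Fin m0, x j • e (j : ℕ), e (k : ℕ)⟫) = x k by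
        rw [coeff_sum, dif_pos k.isLt]]
      rw [abs_le]
      exact ⟨by linarith [hxk.1], by linarith [hxk.2]⟩
  -- per-coordinate lower bound
  have hcoord : ∀ k : Fin m0, ENNReal.ofReal (2 * c (k:ℕ) * δ)
      ≤ μk k (Set.Icc (⟪f0, e (k:ℕ)⟫ - δ) (⟪f0, e (k:ℕ)⟫ + δ)) := by
    intro k
    have hτ := hτpos (k:ℕ)
    have hτi : (0:ℝ) < (τ (k:ℕ))⁻¹ := inv_pos.mpr hτ
    have hpt : ∀ t ∈ Set.Icc (⟪f0, e (k:ℕ)⟫ - δ) (⟪f0, e (k:ℕ)⟫ + δ),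
        ENNReal.ofReal (c (k:ℕ)) ≤ ENNReal.ofReal ((τ (k:ℕ))⁻¹ * q ((τ (k:ℕ))⁻¹ * t)) := by
      intro t ht
      apply ENNReal.ofReal_le_ofReal
      rw [hc]
      refine mul_le_mul_of_nonneg_left ?_ hτi.le
      refine le_trans ?_ (hq ((τ (k:ℕ))⁻¹ * t))
      refine mul_le_mul_of_nonneg_left ?_ hD.le
      rw [Real.exp_le_exp]
      have habs : |(τ (k:ℕ))⁻¹ * t| ≤ (τ (k:ℕ))⁻¹ * (|⟪f0, e (k:ℕ)⟫| + 1) := by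
        rw [abs_mul, abs_of_pos hτi]
        refine mul_le_mul_of_nonneg_left ?_ hτi.le
        obtain ⟨h1, h2⟩ := ht
        rw [abs_le]
        constructor
        · have := neg_abs_le (⟪f0, e (k:ℕ)⟫); linarith
        · have := le_abs_self (⟪f0, e (k:ℕ)⟫); linarith
      have hrw : |(τ (k:ℕ))⁻¹ * t| ^ w ≤ ((τ (k:ℕ))⁻¹ * (|⟪f0, e (k:ℕ)⟫| + 1)) ^ w :=
        Real.rpow_le_rpow (abs_nonneg _) habs (le_trans zero_le_one hw)
      nlinarith [hrw]
    have h1 : ENNReal.ofReal (c (k:ℕ)) *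
        volume (Set.Icc (⟪f0, e (k:ℕ)⟫ - δ) (⟪f0, e (k:ℕ)⟫ + δ))
        = ENNReal.ofReal (2 * c (k:ℕ) * δ) := by
      rw [Real.volume_Icc, ← ENNReal.ofReal_mul (hcpos _).le]
      congr 1; ring
    calc ENNReal.ofReal (2 * c (k:ℕ) * δ)
        = ENNReal.ofReal (c (k:ℕ)) *
          volume (Set.Icc (⟪f0, e (k:ℕ)⟫ - δ) (⟪f0, e (k:ℕ)⟫ + δ)) := h1.symm
      _ = ∫⁻ _t in Set.Icc (⟪f0, e (k:ℕ)⟫ - δ) (⟪f0, e (k:ℕ)⟫ + δ),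
          ENNReal.ofReal (c (k:ℕ)) := (setLIntegral_const _ _).symm
      _ ≤ ∫⁻ t in Set.Icc (⟪f0, e (k:ℕ)⟫ - δ) (⟪f0, e (k:ℕ)⟫ + δ),
          ENNReal.ofReal ((τ (k:ℕ))⁻¹ * q ((τ (k:ℕ))⁻¹ * t)) :=
        lintegral_mono_ae ((ae_restrict_iff' measurableSet_Icc).mpr (ae_of_all _ hpt))
      _ = μk k (Set.Icc (⟪f0, e (k:ℕ)⟫ - δ) (⟪f0, e (k:ℕ)⟫ + δ)) := by
        rw [hμk, withDensity_apply _ measurableSet_Icc]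
  have hprodle : (∏ k : Fin m0, ENNReal.ofReal (2 * c (k:ℕ) * δ)) ≤ Measure.pi μk B := by
    rw [hBdef, Measure.pi_pi]
    exact Finset.prod_le_prod' fun k _ => hcoord k
  have hmapchain : Measure.pi μk B ≤ Measure.map T (Measure.pi μk) S := by
    calc Measure.pi μk B ≤ Measure.pi μk (T ⁻¹' S0) := measure_mono hB
      _ = Measure.map T (Measure.pi μk) S0 :=
        (Measure.map_apply hTcont.measurable hS0meas).symm
      _ ≤ Measure.map T (Measure.pi μk) S := measure_mono hS0S
  have hsum_ge : ENNReal.ofReal (h m0) * Measure.map T (Measure.pi μk) S ≤ Pr S := by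
    rw [hPr]
    have := Measure.le_iff'.mp (Measure.le_sum (fun m : ℕ => ENNReal.ofReal (h m) •
      Measure.map (fun x : Fin m → ℝ => ∑ k : Fin m, x k • e (k : ℕ))
        (Measure.pi fun k : Fin m =>
          volume.withDensity fun t : ℝ =>
            ENNReal.ofReal ((τ (k : ℕ))⁻¹ * q ((τ (k : ℕ))⁻¹ * t)))) m0) S
    rw [Measure.smul_apply, smul_eq_mul] at this
    exact this
  -- real-number inequality
  have hreal : h m0 * (∏ k : Fin m0, (2 * c (k:ℕ))) * (((m0:ℝ) + 1)⁻¹) ^ m0 * ε ^ ((m0:ℝ)+1)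
      ≤ h m0 * ∏ k : Fin m0, (2 * c (k:ℕ) * δ) := by
    have hrpow : ε ^ ((m0:ℝ)+1) = ε ^ (m0+1) := by
      rw [← Real.rpow_natCast ε (m0+1)]
      push_cast
      ring_nf
    have hεpow : ε ^ (m0+1) ≤ ε ^ m0 := pow_le_pow_of_le_one hε.le hε1.le (Nat.le_succ m0)
    have hprodδ : h m0 * ∏ k : Fin m0, (2 * c (k:ℕ) * δ)
        = (h m0 * (∏ k : Fin m0, (2 * c (k:ℕ))) * (((m0:ℝ) + 1)⁻¹) ^ m0) * ε ^ m0 := by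
      rw [Finset.prod_mul_distrib, Finset.prod_const, Finset.card_univ, Fintype.card_fin,
        hδ, div_eq_mul_inv, mul_pow]
      ring
    rw [hrpow, hprodδ]
    have hK : (0:ℝ) ≤ h m0 * (∏ k : Fin m0, (2 * c (k:ℕ))) * (((m0:ℝ) + 1)⁻¹) ^ m0 := by
      have : (0:ℝ) ≤ (((m0:ℝ) + 1)⁻¹) ^ m0 := by positivity
      exact mul_nonneg (mul_nonneg hm0.le hprodpos.le) this
    exact mul_le_mul_of_nonneg_left hεpow hK
  calc ENNReal.ofReal (h m0 * (∏ k : Fin m0, (2 * c (k:ℕ))) * (((m0:ℝ) + 1)⁻¹) ^ m0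
        * ε ^ ((m0:ℝ)+1))
      ≤ ENNReal.ofReal (h m0 * ∏ k : Fin m0, (2 * c (k:ℕ) * δ)) :=
        ENNReal.ofReal_le_ofReal hreal
    _ = ENNReal.ofReal (h m0) * ENNReal.ofReal (∏ k : Fin m0, (2 * c (k:ℕ) * δ)) :=
        ENNReal.ofReal_mul (hhnn m0)
    _ = ENNReal.ofReal (h m0) * ∏ k : Fin m0, ENNReal.ofReal (2 * c (k:ℕ) * δ) := by
        rw [ENNReal.ofReal_prod_of_nonneg fun k _ => by
          have := hcpos (k:ℕ); positivity]
    _ ≤ ENNReal.ofReal (h m0) * Measure.pi μk B := mul_le_mul_right hprodle _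
    _ ≤ ENNReal.ofReal (h m0) * Measure.map T (Measure.pi μk) S :=
        mul_le_mul_right hmapchain _
    _ ≤ Pr S := hsum_ge
end

section
/- Suppose A satisfies Condition (S) with regularity β and f0 ∈ H^γ for some γ > 0. Consider the sieve prior with h(m) ≥ B1 e^{−b m^{β+1}} for all m ≥ 1 and some B1, b > 0, in which given M = m, f = Σ_{k=1}^m f_k e_k with f_k independent N(0, τ_k²) and τ_k = (1+k²)^{−δ/2 − 1/4} for some δ > 0. Define ‖g‖_A² = Σ_k g_k² (1+k²)^{−α1} e^{−2 c0 k^β}. Then there exist constants C > 0 and ε0 > 0 such that for all 0 < ε < ε0, Π(f : ‖f − f0‖_A ≤ ε) ≥ exp(−C (log(1/ε))^{(1+θ)/β}), where θ = max(β, 2(δ − γ)). -/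
open MeasureTheory ProbabilityTheory Real Filter
open scoped ENNReal NNReal RealInnerProductSpace


private lemma aux_pow_le_exp (x : ℝ) (hx : 0 ≤ x) (j : ℕ) :
    x ^ j ≤ (j.factorial : ℝ) * Real.exp x := by
  have hfac : (0:ℝ) < j.factorial := by exact_mod_cast j.factorial_pos
  rw [← div_le_iff₀' hfac, div_eq_inv_mul, inv_mul_eq_div]
  calc x ^ j / (j.factorial : ℝ)
      ≤ ∑ i ∈ Finset.range (j+1), x ^ i / i.factorial := by
        refine Finset.single_le_sum (f := fun i => x ^ i / (i.factorial : ℝ))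
          (fun i _ => by positivity) (Finset.self_mem_range_succ j)
    _ ≤ Real.exp x := Real.sum_le_exp_of_nonneg hx _

private lemma aux_poly_le_exp {c β : ℝ} (p : ℝ) (hc : 0 < c) (hβ : 0 < β) :
    ∃ C : ℝ, 1 ≤ C ∧ ∀ k : ℕ, (1 + (k : ℝ) ^ 2) ^ p ≤ C * Real.exp (c * (k : ℝ) ^ β) := by
  set n : ℕ := ⌈max p 0⌉₊ with hn
  have hpn : p ≤ (n : ℝ) := (le_max_left _ _).trans (Nat.le_ceil _)
  set j : ℕ := ⌈2 * (n : ℝ) / β⌉₊ with hj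
  have hβj : 2 * (n : ℝ) ≤ β * j := by
    have h1 : 2 * (n : ℝ) / β ≤ j := Nat.le_ceil _
    rw [div_le_iff₀ hβ] at h1
    linarith
  refine ⟨max 1 (2 ^ n * ((j.factorial : ℝ) / c ^ j)), le_max_left _ _, fun k => ?_⟩
  rcases Nat.eq_zero_or_pos k with hk | hk
  · subst hk
    have : ((0:ℕ) : ℝ) ^ β = 0 := by
      simpa using Real.zero_rpow (ne_of_gt hβ)
    rw [this, mul_zero, Real.exp_zero, mul_one]
    norm_num
  · have hk1 : (1 : ℝ) ≤ (k : ℝ) := by exact_mod_cast hk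
    have hb1 : (1 : ℝ) ≤ 1 + (k : ℝ) ^ 2 := by nlinarith
    have step1 : (1 + (k : ℝ) ^ 2) ^ p ≤ (1 + (k : ℝ) ^ 2) ^ (n : ℕ) := by
      rw [← Real.rpow_natCast (1 + (k : ℝ) ^ 2) n]
      exact Real.rpow_le_rpow_of_exponent_le hb1 hpn
    have step2 : (1 + (k : ℝ) ^ 2) ^ (n : ℕ) ≤ 2 ^ n * (k : ℝ) ^ (2 * n) := by
      calc (1 + (k : ℝ) ^ 2) ^ (n : ℕ) ≤ (2 * (k : ℝ) ^ 2) ^ (n : ℕ) := by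
            apply pow_le_pow_left₀ (by positivity)
            nlinarith
        _ = 2 ^ n * (k : ℝ) ^ (2 * n) := by rw [mul_pow, ← pow_mul]
    have step3 : (k : ℝ) ^ (2 * n) ≤ ((k : ℝ) ^ β) ^ j := by
      rw [← Real.rpow_natCast (k : ℝ) (2 * n), ← Real.rpow_natCast ((k : ℝ) ^ β) j,
        ← Real.rpow_mul (by positivity)]
      apply Real.rpow_le_rpow_of_exponent_le hk1
      push_cast
      linarith
    have step4 : ((k : ℝ) ^ β) ^ j ≤ (j.factorial : ℝ) / c ^ j * Real.exp (c * (k : ℝ) ^ β) := by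
      have h5 : (c * (k : ℝ) ^ β) ^ j ≤ (j.factorial : ℝ) * Real.exp (c * (k : ℝ) ^ β) :=
        aux_pow_le_exp _ (by positivity) j
      rw [mul_pow] at h5
      rw [div_mul_eq_mul_div, le_div_iff₀ (by positivity)]
      calc ((k:ℝ) ^ β) ^ j * c ^ j = c ^ j * ((k:ℝ) ^ β) ^ j := by ring
        _ ≤ (j.factorial : ℝ) * Real.exp (c * (k : ℝ) ^ β) := h5
    calc (1 + (k : ℝ) ^ 2) ^ p ≤ 2 ^ n * (k : ℝ) ^ (2 * n) := step1.trans step2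
      _ ≤ 2 ^ n * (((j.factorial : ℝ) / c ^ j) * Real.exp (c * (k : ℝ) ^ β)) := by
          have := step3.trans step4
          apply mul_le_mul_of_nonneg_left this (by positivity)
      _ = 2 ^ n * ((j.factorial : ℝ) / c ^ j) * Real.exp (c * (k : ℝ) ^ β) := by ring
      _ ≤ max 1 (2 ^ n * ((j.factorial : ℝ) / c ^ j)) * Real.exp (c * (k : ℝ) ^ β) := by
          apply mul_le_mul_of_nonneg_right (le_max_right _ _) (Real.exp_nonneg _)

private lemma aux_gauss_icc (a r : ℝ) (hr : 0 < r) (v : ℝ≥0) (hv : v ≠ 0) :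
    ENNReal.ofReal ((2 * r) * ((Real.sqrt (2 * Real.pi * (v : ℝ)))⁻¹ *
        Real.exp (-(|a| + r) ^ 2 / (2 * (v : ℝ))))) ≤
      gaussianReal 0 v (Set.Icc (a - r) (a + r)) := by
  rw [gaussianReal_apply 0 hv]
  set c : ℝ := (Real.sqrt (2 * Real.pi * (v : ℝ)))⁻¹ * Real.exp (-(|a| + r) ^ 2 / (2 * (v : ℝ)))
    with hc
  have hcnn : 0 ≤ c := by positivity
  have key : ∀ x ∈ Set.Icc (a - r) (a + r), ENNReal.ofReal c ≤ gaussianPDF 0 v x := by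
    intro x hx
    rw [gaussianPDF]
    apply ENNReal.ofReal_le_ofReal
    rw [gaussianPDFReal]
    apply mul_le_mul_of_nonneg_left _ (by positivity)
    apply Real.exp_le_exp.2
    have hx2 : (x - 0) ^ 2 ≤ (|a| + r) ^ 2 := by
      have h1 := neg_abs_le a
      have h2 := le_abs_self a
      obtain ⟨hxl, hxr⟩ := hx
      apply sq_le_sq' <;> linarith
    have hv2 : (0:ℝ) < 2 * (v:ℝ) := by positivity
    exact (div_le_div_iff_of_pos_right hv2).2 (by linarith)
  calc ENNReal.ofReal (2 * r * c)
      = ENNReal.ofReal c * volume (Set.Icc (a - r) (a + r)) := by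
        rw [Real.volume_Icc]
        rw [← ENNReal.ofReal_mul hcnn]
        congr 1
        ring_nf
    _ = ∫⁻ _ in Set.Icc (a - r) (a + r), ENNReal.ofReal c ∂volume := (setLIntegral_const _ _).symm
    _ ≤ ∫⁻ x in Set.Icc (a - r) (a + r), gaussianPDF 0 v x ∂volume :=
        setLIntegral_mono (measurable_gaussianPDF 0 v) key

private lemma aux_sixteen (t : ℝ) (h0 : 0 ≤ t) (h1 : t ≤ 1) : 2 * Real.pi * t ≤ 16 := by
  nlinarith [Real.pi_le_four, Real.pi_pos]

private lemma aux_num (a r : ℝ) : (|a| + r) ^ 2 ≤ 2 * a ^ 2 + 2 * r ^ 2 := by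
  nlinarith [sq_abs a, sq_nonneg (|a| - r)]

private lemma aux_big (i M : ℝ) (h0 : 0 ≤ i) (h1 : i ≤ M) (h2 : 1 ≤ M) :
    1 + i ^ 2 ≤ 2 * M ^ 2 := by nlinarith

set_option maxHeartbeats 1600000

/-- small-ball lower bound for the Gaussian sieve prior in the severely
ill-posed case: `Π(f : ‖f − f0‖_A ≤ ε) ≥ exp(−C (log(1/ε))^{(1+θ)/β})` with
`θ = max(β, 2(δ−γ))`, where `‖g‖_A² = Σ_k g_k² (1+k²)^{−α1} e^{−2c0 k^β}`. -/
theorem gaussian_sieve_small_ball_severe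
    {H1 : Type*} [NormedAddCommGroup H1] [InnerProductSpace ℝ H1] [CompleteSpace H1]
    [MeasurableSpace H1] [BorelSpace H1]
    {H2 : Type*} [NormedAddCommGroup H2] [InnerProductSpace ℝ H2] [CompleteSpace H2]
    (e : HilbertBasis ℕ ℝ H1)
    (A : H1 →L[ℝ] H2) (hAinj : Function.Injective A)
    (ρ : ℕ → ℝ) (hρpos : ∀ k, 0 < ρ k)
    (g : ℕ → H2) (hg : Orthonormal ℝ g) (hAe : ∀ k, A (e k) = ρ k • g k)
    -- Condition (S) with regularity β
    (β c0 C1 C2 : ℝ) (α0 α1 : ℝ) (hβ : 0 < β) (hc0 : 0 < c0) (hC1 : 0 < C1) (hC2 : 0 < C2)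
    (hS : ∀ k : ℕ,
      C1 * (1 + (k : ℝ) ^ 2) ^ (-α0 / 2) * Real.exp (-c0 * (k : ℝ) ^ β) ≤ ρ k ∧
      ρ k ≤ C2 * (1 + (k : ℝ) ^ 2) ^ (-α1 / 2) * Real.exp (-c0 * (k : ℝ) ^ β))
    -- `f0 ∈ H^γ`
    (γ : ℝ) (hγ : 0 < γ) (f0 : H1)
    (hf0 : Summable fun k : ℕ => ⟪f0, e k⟫ ^ 2 * (1 + (k : ℝ) ^ 2) ^ γ)
    -- Gaussian sieve prior
    (h : ℕ → ℝ) (hhnn : ∀ m, 0 ≤ h m) (hhsum : ∑' m : ℕ, h m = 1)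
    (B1 b : ℝ) (hB1 : 0 < B1) (hb : 0 < b)
    (hhlb : ∀ m : ℕ, 1 ≤ m → B1 * Real.exp (-b * (m : ℝ) ^ (β + 1)) ≤ h m)
    (δ : ℝ) (hδ : 0 < δ)
    (Pr : Measure H1)
    (hPr : Pr = Measure.sum fun m : ℕ => ENNReal.ofReal (h m) •
      Measure.map (fun x : Fin m → ℝ => ∑ k : Fin m, x k • e (k : ℕ))
        (Measure.pi fun k : Fin m =>
          gaussianReal 0 (Real.toNNReal (((1 + ((k : ℕ) : ℝ) ^ 2) ^ (-δ / 2 - 1 / 4)) ^ 2)))) :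
    ∃ C ε0 : ℝ, 0 < C ∧ 0 < ε0 ∧ ∀ ε : ℝ, 0 < ε → ε < ε0 →
      ENNReal.ofReal (Real.exp (-C * Real.log (1 / ε) ^ ((1 + max β (2 * (δ - γ))) / β)))
        ≤ Pr {f : H1 | Real.sqrt (∑' k : ℕ,
              (⟪f, e k⟫ - ⟪f0, e k⟫) ^ 2 * (1 + (k : ℝ) ^ 2) ^ (-α1)
                * Real.exp (-2 * c0 * (k : ℝ) ^ β)) ≤ ε} := by
  -- weight sequence
  set θ : ℝ := max β (2 * (δ - γ)) with hθdef
  have hθβ : β ≤ θ := le_max_left _ _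
  have hθpos : 0 < θ := lt_of_lt_of_le hβ hθβ
  set q : ℝ := (1 + θ) / β with hqdef
  have hqpos : 0 < q := by positivity
  have hbase : ∀ k : ℕ, (1:ℝ) ≤ 1 + (k:ℝ) ^ 2 := fun k => by nlinarith [sq_nonneg ((k:ℝ))]
  have hbasepos : ∀ k : ℕ, (0:ℝ) < 1 + (k:ℝ) ^ 2 := fun k => by positivity
  set w : ℕ → ℝ := fun k => (1 + (k:ℝ) ^ 2) ^ (-α1) * Real.exp (-2 * c0 * (k:ℝ) ^ β) with hwdef
  have hwpos : ∀ k, 0 < w k := fun k => by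
    apply mul_pos (Real.rpow_pos_of_pos (hbasepos k) _) (Real.exp_pos _)
  obtain ⟨Cw, hCw1, hCw⟩ := aux_poly_le_exp (-α1) hc0 hβ
  have hwle : ∀ k, w k ≤ Cw := by
    intro k
    have h1 : w k ≤ Cw * Real.exp (c0 * (k:ℝ) ^ β) * Real.exp (-2 * c0 * (k:ℝ) ^ β) :=
      mul_le_mul_of_nonneg_right (hCw k) (Real.exp_nonneg _)
    have h2 : Cw * Real.exp (c0 * (k:ℝ) ^ β) * Real.exp (-2 * c0 * (k:ℝ) ^ β)
        = Cw * Real.exp (-(c0 * (k:ℝ) ^ β)) := by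
      rw [mul_assoc, ← Real.exp_add]; ring_nf
    have h3 : Real.exp (-(c0 * (k:ℝ) ^ β)) ≤ 1 := by
      apply Real.exp_le_one_iff.2
      have : (0:ℝ) ≤ c0 * (k:ℝ) ^ β := by positivity
      linarith
    calc w k ≤ Cw * Real.exp (-(c0 * (k:ℝ) ^ β)) := by rw [← h2]; exact h1
      _ ≤ Cw * 1 := mul_le_mul_of_nonneg_left h3 (by linarith)
      _ = Cw := mul_one _
  obtain ⟨C3, hC31, hC3⟩ := aux_poly_le_exp (-γ - α1) hc0 hβ
  have hwγ : ∀ k, w k ≤ C3 * (1 + (k:ℝ) ^ 2) ^ γ * Real.exp (-(c0 * (k:ℝ) ^ β)) := by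
    intro k
    have hsplit : (1 + (k:ℝ) ^ 2) ^ (-α1)
        = (1 + (k:ℝ) ^ 2) ^ γ * (1 + (k:ℝ) ^ 2) ^ (-γ - α1) := by
      rw [← Real.rpow_add (hbasepos k)]; ring_nf
    have h1 : (1 + (k:ℝ) ^ 2) ^ (-γ - α1) ≤ C3 * Real.exp (c0 * (k:ℝ) ^ β) := hC3 k
    have h2 : (1 + (k:ℝ) ^ 2) ^ (-α1)
        ≤ (1 + (k:ℝ) ^ 2) ^ γ * (C3 * Real.exp (c0 * (k:ℝ) ^ β)) := by
      rw [hsplit]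
      exact mul_le_mul_of_nonneg_left h1 (by positivity)
    calc w k ≤ (1 + (k:ℝ) ^ 2) ^ γ * (C3 * Real.exp (c0 * (k:ℝ) ^ β))
          * Real.exp (-2 * c0 * (k:ℝ) ^ β) :=
        mul_le_mul_of_nonneg_right h2 (Real.exp_nonneg _)
      _ = C3 * (1 + (k:ℝ) ^ 2) ^ γ
          * (Real.exp (c0 * (k:ℝ) ^ β) * Real.exp (-2 * c0 * (k:ℝ) ^ β)) := by ring
      _ = C3 * (1 + (k:ℝ) ^ 2) ^ γ * Real.exp (-(c0 * (k:ℝ) ^ β)) := by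
        rw [← Real.exp_add]; ring_nf
  -- f0 coefficient facts
  set K : ℝ := ∑' k : ℕ, ⟪f0, e k⟫ ^ 2 * (1 + (k:ℝ) ^ 2) ^ γ with hKdef
  have htermnn : ∀ k : ℕ, 0 ≤ ⟪f0, e k⟫ ^ 2 * (1 + (k:ℝ) ^ 2) ^ γ := fun k => by positivity
  have hKnn : 0 ≤ K := tsum_nonneg htermnn
  have hKk : ∀ k : ℕ, ⟪f0, e k⟫ ^ 2 * (1 + (k:ℝ) ^ 2) ^ γ ≤ K := fun k =>
    Summable.le_tsum hf0 k fun j _ => htermnn j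
  have hone_le_rpowγ : ∀ k : ℕ, (1:ℝ) ≤ (1 + (k:ℝ) ^ 2) ^ γ := fun k =>
    Real.one_le_rpow (hbase k) hγ.le
  have hF0K : ∀ k : ℕ, ⟪f0, e k⟫ ^ 2 ≤ K := by
    intro k
    calc ⟪f0, e k⟫ ^ 2 = ⟪f0, e k⟫ ^ 2 * 1 := (mul_one _).symm
      _ ≤ ⟪f0, e k⟫ ^ 2 * (1 + (k:ℝ) ^ 2) ^ γ :=
        mul_le_mul_of_nonneg_left (hone_le_rpowγ k) (sq_nonneg _)
      _ ≤ K := hKk k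
  have hWsum : Summable fun k : ℕ => ⟪f0, e k⟫ ^ 2 * w k := by
    apply Summable.of_nonneg_of_le (fun k => by positivity)
      (fun k => ?_) (hf0.mul_left Cw)
    calc ⟪f0, e k⟫ ^ 2 * w k ≤ ⟪f0, e k⟫ ^ 2 * Cw :=
        mul_le_mul_of_nonneg_left (hwle k) (sq_nonneg _)
      _ = Cw * ⟪f0, e k⟫ ^ 2 := mul_comm _ _
      _ ≤ Cw * (⟪f0, e k⟫ ^ 2 * (1 + (k:ℝ) ^ 2) ^ γ) := by
        apply mul_le_mul_of_nonneg_left _ (by linarith)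
        nlinarith [hone_le_rpowγ k, sq_nonneg (⟪f0, e k⟫ : ℝ)]
  -- constants
  set p1 : ℝ := max (δ + 1/2 - γ) 0 with hp1def
  have hp1nn : 0 ≤ p1 := le_max_right _ _
  have h2p1 : 2 * p1 ≤ 1 + θ := by
    rcases max_cases (δ + 1/2 - γ) 0 with ⟨heq, _⟩ | ⟨heq, _⟩
    · rw [hp1def, heq]
      have : 2 * (δ - γ) ≤ θ := le_max_right _ _
      linarith
    · rw [hp1def, heq]; linarith
  set Cm : ℝ := max (2 * (3 / c0) ^ (1/β)) 1 with hCmdef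
  have hCm1 : 1 ≤ Cm := le_max_right _ _
  set j0 : ℕ := ⌈(2 * δ + 2) / β⌉₊ with hj0def
  set D2 : ℝ := 2 ^ (δ + 1/2) * Cm ^ (2 * δ + 2) * (j0.factorial / 2 ^ j0) with hD2def
  have hD2nn : 0 ≤ D2 := by positivity
  set D1 : ℝ := (K + 1) * 2 ^ p1 with hD1def
  have hD1nn : 0 ≤ D1 := by positivity
  set L0 : ℝ := 1 + c0 + |Real.log (2 * C3 * (K + 1))| + |Real.log (4 * Cw * Cm)| with hL0def
  have hL01 : 1 ≤ L0 := by
    have h1 := abs_nonneg (Real.log (2 * C3 * (K + 1)))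
    have h2 := abs_nonneg (Real.log (4 * Cw * Cm))
    rw [hL0def]; linarith
  set C : ℝ := |Real.log B1| + D2 + b * Cm ^ (β + 1) + D1 * Cm ^ (1 + θ) + Cm * (2 + 1/β) + 1
    with hCdef
  have hCpos : 0 < C := by
    have h1 := abs_nonneg (Real.log B1)
    have h2 : 0 ≤ b * Cm ^ (β + 1) := by positivity
    have h3 : 0 ≤ D1 * Cm ^ (1 + θ) := by positivity
    have h4 : 0 ≤ Cm * (2 + 1/β) := by positivity
    rw [hCdef]; linarith
  refine ⟨C, Real.exp (-L0), hCpos, Real.exp_pos _, fun ε hε hεlt => ?_⟩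
  -- the scale L
  set L : ℝ := Real.log (1 / ε) with hLdef
  have hLgt : L0 < L := by
    rw [hLdef]
    have h1 : 1 / Real.exp (-L0) < 1 / ε := by
      apply one_div_lt_one_div_of_lt hε hεlt
    have h2 : 1 / Real.exp (-L0) = Real.exp L0 := by
      rw [one_div, ← Real.exp_neg, neg_neg]
    calc L0 = Real.log (Real.exp L0) := (Real.log_exp _).symm
      _ < Real.log (1 / ε) := by
        apply Real.log_lt_log (Real.exp_pos _)
        rw [← h2]; exact h1
  have hL1 : 1 ≤ L := le_trans hL01 hLgt.le
  have hLpos : 0 < L := lt_of_lt_of_le one_pos hL1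
  have hεexp : ε = Real.exp (-L) := by
    rw [hLdef, one_div, Real.log_inv, neg_neg, Real.exp_log hε]
  have hLc0 : c0 ≤ L := by
    have : c0 ≤ L0 := by
      have h1 := abs_nonneg (Real.log (2 * C3 * (K + 1)))
      have h2 := abs_nonneg (Real.log (4 * Cw * Cm))
      rw [hL0def]; linarith
    linarith
  -- choice of m
  set x0 : ℝ := (3 * L / c0) ^ (1/β) with hx0def
  have h3L : (3:ℝ) ≤ 3 * L / c0 := by
    rw [le_div_iff₀ hc0]; linarith
  have hx01 : 1 ≤ x0 := Real.one_le_rpow (by linarith) (by positivity)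
  set m : ℕ := ⌈x0⌉₊ with hmdef
  have hm1 : 1 ≤ m := Nat.one_le_ceil_iff.2 (by linarith)
  have hm1R : (1:ℝ) ≤ (m:ℝ) := by exact_mod_cast hm1
  have hmpos : (0:ℝ) < m := by linarith
  have hmx0 : x0 ≤ (m:ℝ) := Nat.le_ceil _
  have hm2x0 : (m:ℝ) ≤ 2 * x0 := by
    have := Nat.ceil_lt_add_one (show (0:ℝ) ≤ x0 by linarith)
    rw [hmdef]; push_cast; linarith
  have hmCm : (m:ℝ) ≤ Cm * L ^ (1/β) := by
    have h1 : x0 = (3 / c0) ^ (1/β) * L ^ (1/β) := by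
      rw [hx0def, ← Real.mul_rpow (by positivity) hLpos.le]
      congr 1; ring
    calc (m:ℝ) ≤ 2 * x0 := hm2x0
      _ = 2 * (3 / c0) ^ (1/β) * L ^ (1/β) := by rw [h1]; ring
      _ ≤ Cm * L ^ (1/β) := by
        apply mul_le_mul_of_nonneg_right (le_max_left _ _) (by positivity)
  have hc0m : 3 * L ≤ c0 * (m:ℝ) ^ β := by
    have hx0β : x0 ^ β = 3 * L / c0 := by
      rw [hx0def, one_div, Real.rpow_inv_rpow (by positivity) (ne_of_gt hβ)]
    have h1 : x0 ^ β ≤ (m:ℝ) ^ β := Real.rpow_le_rpow (by positivity) hmx0 hβ.le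
    rw [hx0β] at h1
    rw [div_le_iff₀ hc0] at h1
    linarith
  -- radius
  set r : ℝ := ε / (2 * (m:ℝ) * Cw) with hrdef
  have hden : (1:ℝ) ≤ 2 * (m:ℝ) * Cw := by
    have h1 : (1:ℝ) * 1 ≤ (2 * (m:ℝ)) * Cw :=
      mul_le_mul (by linarith) hCw1 zero_le_one (by linarith)
    linarith
  have hrpos : 0 < r := div_pos hε (by linarith)
  have hrε : r ≤ ε := by
    rw [hrdef]
    calc ε / (2 * (m:ℝ) * Cw) ≤ ε / 1 := by
          apply div_le_div_of_nonneg_left hε.le one_pos hden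
      _ = ε := div_one _
  -- the sets
  set G : H1 → ℕ → ℝ := fun f k => (⟪f, e k⟫ - ⟪f0, e k⟫) ^ 2 * (1 + (k:ℝ) ^ 2) ^ (-α1)
      * Real.exp (-2 * c0 * (k:ℝ) ^ β) with hGdef
  have hGw : ∀ f k, G f k = (⟪f, e k⟫ - ⟪f0, e k⟫) ^ 2 * w k := fun f k => by
    rw [hGdef, hwdef]; ring
  have hGnn : ∀ f k, 0 ≤ G f k := fun f k => by
    rw [hGw]; positivity
  set S' : Set H1 := {f | (∑' k : ℕ, ENNReal.ofReal (G f k)) ≤ ENNReal.ofReal (ε ^ 2)}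
    with hS'def
  have hGcont : ∀ k : ℕ, Continuous fun f : H1 => G f k := by
    intro k
    apply Continuous.mul (Continuous.mul _ continuous_const) continuous_const
    exact (Continuous.sub (continuous_id.inner continuous_const) continuous_const).pow 2
  have hS'meas : MeasurableSet S' := by
    rw [hS'def]
    exact measurableSet_le
      (Measurable.ennreal_tsum fun k => ((hGcont k).measurable).ennreal_ofReal)
      measurable_const
  have hsub : S' ⊆ {f : H1 | Real.sqrt (∑' k : ℕ,
      (⟪f, e k⟫ - ⟪f0, e k⟫) ^ 2 * (1 + (k:ℝ) ^ 2) ^ (-α1)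
        * Real.exp (-2 * c0 * (k:ℝ) ^ β)) ≤ ε} := by
    intro f hf
    rw [hS'def] at hf
    simp only [Set.mem_setOf_eq] at hf ⊢
    have hfin : (∑' k : ℕ, ENNReal.ofReal (G f k)) ≠ ∞ :=
      ne_top_of_le_ne_top ENNReal.ofReal_ne_top hf
    have hsumm : Summable (G f) := by
      have h1 := ENNReal.summable_toReal hfin
      refine h1.congr fun k => ?_
      rw [ENNReal.toReal_ofReal (hGnn f k)]
    have heq : ENNReal.ofReal (∑' k : ℕ, G f k) = ∑' k : ℕ, ENNReal.ofReal (G f k) :=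
      ENNReal.ofReal_tsum_of_nonneg (hGnn f) hsumm
    have hle : (∑' k : ℕ, G f k) ≤ ε ^ 2 := by
      rw [← ENNReal.ofReal_le_ofReal_iff (by positivity), heq]; exact hf
    calc Real.sqrt (∑' k : ℕ, (⟪f, e k⟫ - ⟪f0, e k⟫) ^ 2 * (1 + (k:ℝ) ^ 2) ^ (-α1)
          * Real.exp (-2 * c0 * (k:ℝ) ^ β)) = Real.sqrt (∑' k : ℕ, G f k) := by rw [hGdef]
      _ ≤ Real.sqrt (ε ^ 2) := Real.sqrt_le_sqrt hle
      _ = ε := Real.sqrt_sq hε.le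
  -- the Gaussian product measure and the box
  set τ : ℕ → ℝ := fun k => (1 + (k:ℝ) ^ 2) ^ (-δ / 2 - 1 / 4) with hτdef
  have hτpos : ∀ k, 0 < τ k := fun k => Real.rpow_pos_of_pos (hbasepos k) _
  set v : ℕ → ℝ≥0 := fun k => Real.toNNReal (τ k ^ 2) with hvdef
  have hvne : ∀ k, v k ≠ 0 := by
    intro k
    have : 0 < v k := by
      rw [hvdef]
      exact Real.toNNReal_pos.2 (by positivity)
    exact this.ne'
  have hvcoe : ∀ k, ((v k : ℝ)) = τ k ^ 2 := fun k => Real.coe_toNNReal _ (sq_nonneg _)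
  set μg : Measure (Fin m → ℝ) := Measure.pi fun k : Fin m =>
    gaussianReal 0 (Real.toNNReal (((1 + ((k:ℕ):ℝ) ^ 2) ^ (-δ / 2 - 1 / 4)) ^ 2)) with hμgdef
  have hμgv : μg = Measure.pi fun k : Fin m => gaussianReal 0 (v (k:ℕ)) := rfl
  have hTmeas : Measurable fun x : Fin m → ℝ => ∑ k : Fin m, x k • e (k:ℕ) := by
    apply Continuous.measurable
    exact continuous_finset_sum _ fun k _ => ((continuous_apply k).smul continuous_const)
  set box : Set (Fin m → ℝ) :=
    Set.pi Set.univ (fun k : Fin m => Set.Icc (⟪f0, e (k:ℕ)⟫ - r) (⟪f0, e (k:ℕ)⟫ + r))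
    with hboxdef
  have hboxsub : box ⊆ (fun x : Fin m → ℝ => ∑ k : Fin m, x k • e (k:ℕ)) ⁻¹' S' := by
    intro x hx
    rw [hboxdef, Set.mem_univ_pi] at hx
    show (∑' k : ℕ, ENNReal.ofReal (G (∑ j : Fin m, x j • e (j:ℕ)) k)) ≤ ENNReal.ofReal (ε ^ 2)
    have hinner : ∀ k : ℕ, ⟪(∑ j : Fin m, x j • e (j:ℕ)), e k⟫
        = if hk : k < m then x ⟨k, hk⟩ else 0 := by
      intro k
      rw [sum_inner]
      have horth := orthonormal_iff_ite.1 e.orthonormal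
      by_cases hk : k < m
      · rw [dif_pos hk]
        rw [Finset.sum_eq_single (⟨k, hk⟩ : Fin m)]
        · rw [real_inner_smul_left, horth, if_pos rfl, mul_one]
        · intro j _ hj
          rw [real_inner_smul_left, horth, if_neg fun hjk => hj (Fin.ext hjk), mul_zero]
        · exact fun habs => absurd (Finset.mem_univ _) habs
      · rw [dif_neg hk]
        apply Finset.sum_eq_zero
        intro j _
        rw [real_inner_smul_left, horth, if_neg (show ¬((j:ℕ) = k) from fun hjk => hk (hjk ▸ j.isLt)), mul_zero]
    have hGval : ∀ k : ℕ, G (∑ j : Fin m, x j • e (j:ℕ)) k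
        = ((if hk : k < m then x ⟨k, hk⟩ else 0) - ⟪f0, e k⟫) ^ 2 * w k := by
      intro k; rw [hGw, hinner]
    have hGsum : Summable fun k => G (∑ j : Fin m, x j • e (j:ℕ)) k := by
      apply (summable_nat_add_iff m).1
      refine ((summable_nat_add_iff m).2 hWsum).congr fun n => ?_
      rw [hGval (n + m), dif_neg (by omega)]
      ring
    -- head estimate
    have hmCw1 : (1:ℝ) ≤ (m:ℝ) * Cw := le_trans hCw1 (le_mul_of_one_le_left (by linarith) hm1R)
    have hhead : ∑ i ∈ Finset.range m, G (∑ j : Fin m, x j • e (j:ℕ)) i ≤ ε ^ 2 / 2 := by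
      have hterm2 : ∀ i ∈ Finset.range m, G (∑ j : Fin m, x j • e (j:ℕ)) i ≤ r ^ 2 * Cw := by
        intro i hi
        rw [Finset.mem_range] at hi
        rw [hGval i, dif_pos hi]
        have hmem := hx ⟨i, hi⟩
        rw [Set.mem_Icc] at hmem
        have habs : (x ⟨i, hi⟩ - ⟪f0, e i⟫) ^ 2 ≤ r ^ 2 := by
          have h1 : |x ⟨i, hi⟩ - ⟪f0, e (i:ℕ)⟫| ≤ r := by
            rw [abs_le]; constructor <;> [linarith [hmem.1]; linarith [hmem.2]]
          calc (x ⟨i, hi⟩ - ⟪f0, e i⟫) ^ 2 = |x ⟨i, hi⟩ - ⟪f0, e (i:ℕ)⟫| ^ 2 := (sq_abs _).symm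
            _ ≤ r ^ 2 := pow_le_pow_left₀ (abs_nonneg _) h1 2
        calc (x ⟨i, hi⟩ - ⟪f0, e i⟫) ^ 2 * w i ≤ r ^ 2 * w i :=
            mul_le_mul_of_nonneg_right habs (hwpos i).le
          _ ≤ r ^ 2 * Cw := mul_le_mul_of_nonneg_left (hwle i) (sq_nonneg r)
      calc ∑ i ∈ Finset.range m, G (∑ j : Fin m, x j • e (j:ℕ)) i
          ≤ ∑ _i ∈ Finset.range m, r ^ 2 * Cw := Finset.sum_le_sum hterm2
        _ = (m:ℝ) * (r ^ 2 * Cw) := by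
            rw [Finset.sum_const, Finset.card_range, nsmul_eq_mul]
        _ = ε ^ 2 / (4 * ((m:ℝ) * Cw)) := by
            rw [hrdef]
            have hm0 : (m:ℝ) ≠ 0 := ne_of_gt hmpos
            have hCw0 : Cw ≠ 0 := by linarith
            field_simp
            ring
        _ ≤ ε ^ 2 / 4 := by
            apply div_le_div_of_nonneg_left (sq_nonneg ε) (by norm_num)
            linarith
        _ ≤ ε ^ 2 / 2 := by linarith [sq_nonneg ε]
    -- tail estimate
    have htail : ∑' n : ℕ, G (∑ j : Fin m, x j • e (j:ℕ)) (n + m) ≤ ε ^ 2 / 2 := by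
      have hshift : ∀ n : ℕ, G (∑ j : Fin m, x j • e (j:ℕ)) (n + m)
          = ⟪f0, e (n + m)⟫ ^ 2 * w (n + m) := by
        intro n; rw [hGval (n + m), dif_neg (by omega)]; ring
      have hsum1 : Summable fun n : ℕ => ⟪f0, e (n + m)⟫ ^ 2 * w (n + m) :=
        (summable_nat_add_iff m).2 hWsum
      have hsum2 : Summable fun n : ℕ =>
          (C3 * Real.exp (-(c0 * (m:ℝ) ^ β)))
            * (⟪f0, e (n + m)⟫ ^ 2 * (1 + ((n + m : ℕ):ℝ) ^ 2) ^ γ) :=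
        ((summable_nat_add_iff m).2 hf0).mul_left _
      have hstep : ∀ n : ℕ, ⟪f0, e (n + m)⟫ ^ 2 * w (n + m)
          ≤ (C3 * Real.exp (-(c0 * (m:ℝ) ^ β)))
            * (⟪f0, e (n + m)⟫ ^ 2 * (1 + ((n + m : ℕ):ℝ) ^ 2) ^ γ) := by
        intro n
        have hexp : Real.exp (-(c0 * ((n + m : ℕ):ℝ) ^ β)) ≤ Real.exp (-(c0 * (m:ℝ) ^ β)) := by
          apply Real.exp_le_exp.2
          apply neg_le_neg
          apply mul_le_mul_of_nonneg_left _ hc0.le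
          apply Real.rpow_le_rpow (by positivity) _ hβ.le
          push_cast; linarith [Nat.cast_nonneg (α := ℝ) n]
        calc ⟪f0, e (n + m)⟫ ^ 2 * w (n + m)
            ≤ ⟪f0, e (n + m)⟫ ^ 2 * (C3 * (1 + ((n + m : ℕ):ℝ) ^ 2) ^ γ
                * Real.exp (-(c0 * ((n + m : ℕ):ℝ) ^ β))) :=
              mul_le_mul_of_nonneg_left (hwγ (n + m)) (sq_nonneg _)
          _ ≤ ⟪f0, e (n + m)⟫ ^ 2 * (C3 * (1 + ((n + m : ℕ):ℝ) ^ 2) ^ γ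
                * Real.exp (-(c0 * (m:ℝ) ^ β))) := by
              apply mul_le_mul_of_nonneg_left _ (sq_nonneg _)
              apply mul_le_mul_of_nonneg_left hexp (by positivity)
          _ = (C3 * Real.exp (-(c0 * (m:ℝ) ^ β)))
              * (⟪f0, e (n + m)⟫ ^ 2 * (1 + ((n + m : ℕ):ℝ) ^ 2) ^ γ) := by ring
      have htailK : (∑' n : ℕ, ⟪f0, e (n + m)⟫ ^ 2 * (1 + ((n + m : ℕ):ℝ) ^ 2) ^ γ) ≤ K := by
        have hsplitK := Summable.sum_add_tsum_nat_add m hf0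
        have hheadnn : 0 ≤ ∑ i ∈ Finset.range m, ⟪f0, e i⟫ ^ 2 * (1 + (i:ℝ) ^ 2) ^ γ :=
          Finset.sum_nonneg fun i _ => htermnn i
        rw [hKdef]
        linarith [hsplitK]
      have hbound : (C3 * Real.exp (-(c0 * (m:ℝ) ^ β))) * K ≤ ε ^ 2 / 2 := by
        have hu : (0:ℝ) < Real.exp (-L) := Real.exp_pos _
        have hexpL : 2 * C3 * (K + 1) ≤ Real.exp L := by
          have h1 : Real.log (2 * C3 * (K + 1)) ≤ L := by
            have := le_abs_self (Real.log (2 * C3 * (K + 1)))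
            rw [hL0def] at hLgt
            have h2 := abs_nonneg (Real.log (4 * Cw * Cm))
            linarith
          calc 2 * C3 * (K + 1) = Real.exp (Real.log (2 * C3 * (K + 1))) :=
              (Real.exp_log (by positivity)).symm
            _ ≤ Real.exp L := Real.exp_le_exp.2 h1
        have hε2 : ε ^ 2 = Real.exp (-(2 * L)) := by
          rw [hεexp, ← Real.exp_nat_mul]
          norm_num
        have hexp3 : Real.exp (-(c0 * (m:ℝ) ^ β)) ≤ Real.exp (-(3 * L)) :=
          Real.exp_le_exp.2 (by linarith)
        have hsplit3 : Real.exp (-(3 * L)) = Real.exp (-L) * Real.exp (-(2 * L)) := by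
          rw [← Real.exp_add]; ring_nf
        have hKu : C3 * K * Real.exp (-L) ≤ 1 / 2 := by
          have h4 : 2 * C3 * (K + 1) * Real.exp (-L) ≤ Real.exp L * Real.exp (-L) :=
            mul_le_mul_of_nonneg_right hexpL hu.le
          rw [← Real.exp_add, add_neg_cancel, Real.exp_zero] at h4
          have h5 : C3 * K * Real.exp (-L) ≤ C3 * (K + 1) * Real.exp (-L) := by
            apply mul_le_mul_of_nonneg_right _ hu.le
            apply mul_le_mul_of_nonneg_left (by linarith) (by linarith)
          linarith
        calc C3 * Real.exp (-(c0 * (m:ℝ) ^ β)) * K ≤ C3 * Real.exp (-(3 * L)) * K :=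
            mul_le_mul_of_nonneg_right
              (mul_le_mul_of_nonneg_left hexp3 (by linarith)) hKnn
          _ = (C3 * K * Real.exp (-L)) * Real.exp (-(2 * L)) := by
            rw [hsplit3]; ring
          _ ≤ (1 / 2) * Real.exp (-(2 * L)) :=
            mul_le_mul_of_nonneg_right hKu (Real.exp_nonneg _)
          _ = ε ^ 2 / 2 := by rw [hε2]; ring
      calc ∑' n : ℕ, G (∑ j : Fin m, x j • e (j:ℕ)) (n + m)
          = ∑' n : ℕ, ⟪f0, e (n + m)⟫ ^ 2 * w (n + m) := tsum_congr hshift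
        _ ≤ ∑' n : ℕ, (C3 * Real.exp (-(c0 * (m:ℝ) ^ β)))
            * (⟪f0, e (n + m)⟫ ^ 2 * (1 + ((n + m : ℕ):ℝ) ^ 2) ^ γ) :=
            Summable.tsum_le_tsum hstep hsum1 hsum2
        _ = (C3 * Real.exp (-(c0 * (m:ℝ) ^ β)))
            * ∑' n : ℕ, ⟪f0, e (n + m)⟫ ^ 2 * (1 + ((n + m : ℕ):ℝ) ^ 2) ^ γ := tsum_mul_left
        _ ≤ (C3 * Real.exp (-(c0 * (m:ℝ) ^ β))) * K := by
            apply mul_le_mul_of_nonneg_left htailK (by positivity)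
        _ ≤ ε ^ 2 / 2 := hbound
    have htot : (∑' k : ℕ, G (∑ j : Fin m, x j • e (j:ℕ)) k) ≤ ε ^ 2 := by
      have := Summable.sum_add_tsum_nat_add m hGsum
      linarith [this]
    calc (∑' k : ℕ, ENNReal.ofReal (G (∑ j : Fin m, x j • e (j:ℕ)) k))
        = ENNReal.ofReal (∑' k : ℕ, G (∑ j : Fin m, x j • e (j:ℕ)) k) :=
          (ENNReal.ofReal_tsum_of_nonneg (hGnn _) hGsum).symm
      _ ≤ ENNReal.ofReal (ε ^ 2) := ENNReal.ofReal_le_ofReal htot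

  have hterm : ENNReal.ofReal (h m) * μg box ≤ Pr {f : H1 | Real.sqrt (∑' k : ℕ,
      (⟪f, e k⟫ - ⟪f0, e k⟫) ^ 2 * (1 + (k:ℝ) ^ 2) ^ (-α1)
        * Real.exp (-2 * c0 * (k:ℝ) ^ β)) ≤ ε} := by
    calc ENNReal.ofReal (h m) * μg box
        ≤ ENNReal.ofReal (h m)
          * μg ((fun x : Fin m → ℝ => ∑ k : Fin m, x k • e (k:ℕ)) ⁻¹' S') :=
          mul_le_mul_right (measure_mono hboxsub) _
      _ = (ENNReal.ofReal (h m)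
          • Measure.map (fun x : Fin m → ℝ => ∑ k : Fin m, x k • e (k:ℕ)) μg) S' := by
          rw [Measure.smul_apply, smul_eq_mul, Measure.map_apply hTmeas hS'meas]
      _ ≤ ∑' n : ℕ, (ENNReal.ofReal (h n)
          • Measure.map (fun x : Fin n → ℝ => ∑ k : Fin n, x k • e (k:ℕ))
            (Measure.pi fun k : Fin n =>
              gaussianReal 0 (Real.toNNReal (((1 + ((k:ℕ):ℝ) ^ 2) ^ (-δ / 2 - 1 / 4)) ^ 2)))) S' :=
          ENNReal.le_tsum m
      _ = (Measure.sum fun n : ℕ => ENNReal.ofReal (h n)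
          • Measure.map (fun x : Fin n → ℝ => ∑ k : Fin n, x k • e (k:ℕ))
            (Measure.pi fun k : Fin n =>
              gaussianReal 0 (Real.toNNReal (((1 + ((k:ℕ):ℝ) ^ 2) ^ (-δ / 2 - 1 / 4)) ^ 2)))) S' :=
          (Measure.sum_apply _ hS'meas).symm
      _ = Pr S' := by rw [hPr]
      _ ≤ Pr _ := measure_mono hsub
  have hgauss : ENNReal.ofReal ((r/2) ^ m
      * Real.exp (-(D1 * (m:ℝ) ^ (1 + θ) + D2))) ≤ μg box := by
    have hτ2le1 : ∀ k : ℕ, τ k ^ 2 ≤ 1 := by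
      intro k
      have h1 : τ k ≤ 1 :=
        Real.rpow_le_one_of_one_le_of_nonpos (hbase k) (by linarith)
      exact pow_le_one₀ (hτpos k).le h1
    set E : ℕ → ℝ := fun k => (|⟪f0, e k⟫| + r) ^ 2 / (2 * τ k ^ 2) with hEdef
    have hEnn : ∀ k, 0 ≤ E k := fun k => by
      rw [hEdef]
      have := hτpos k
      positivity
    -- single-factor bound
    have hfac : ∀ k : Fin m, ENNReal.ofReal ((r / 2) * Real.exp (-E (k:ℕ)))
        ≤ gaussianReal 0 (v (k:ℕ))
          (Set.Icc (⟪f0, e (k:ℕ)⟫ - r) (⟪f0, e (k:ℕ)⟫ + r)) := by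
      intro k
      refine le_trans ?_ (aux_gauss_icc (⟪f0, e (k:ℕ)⟫) r hrpos (v (k:ℕ)) (hvne _))
      apply ENNReal.ofReal_le_ofReal
      have hvc := hvcoe (k:ℕ)
      rw [hvc]
      have hτp := hτpos (k:ℕ)
      have hs0 : 0 < Real.sqrt (2 * Real.pi * τ (k:ℕ) ^ 2) := by
        apply Real.sqrt_pos.2
        have := Real.pi_pos
        positivity
      have hs4 : Real.sqrt (2 * Real.pi * τ (k:ℕ) ^ 2) ≤ 4 := by
        have h1 : 2 * Real.pi * τ (k:ℕ) ^ 2 ≤ 16 :=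
          aux_sixteen _ (sq_nonneg _) (hτ2le1 (k:ℕ))
        calc Real.sqrt (2 * Real.pi * τ (k:ℕ) ^ 2) ≤ Real.sqrt 16 := Real.sqrt_le_sqrt h1
          _ = 4 := by
            rw [show (16:ℝ) = 4 ^ 2 by norm_num, Real.sqrt_sq (by norm_num)]
      have hinv : (4:ℝ)⁻¹ ≤ (Real.sqrt (2 * Real.pi * τ (k:ℕ) ^ 2))⁻¹ :=
        inv_anti₀ hs0 hs4
      have hexpeq : Real.exp (-(|⟪f0, e (k:ℕ)⟫| + r) ^ 2 / (2 * τ (k:ℕ) ^ 2))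
          = Real.exp (-E (k:ℕ)) := by
        rw [hEdef, neg_div]
      rw [hexpeq]
      have hexppos : 0 < Real.exp (-E (k:ℕ)) := Real.exp_pos _
      calc (r / 2) * Real.exp (-E (k:ℕ)) = 2 * r * (4⁻¹ * Real.exp (-E (k:ℕ))) := by ring
        _ ≤ 2 * r * ((Real.sqrt (2 * Real.pi * τ (k:ℕ) ^ 2))⁻¹ * Real.exp (-E (k:ℕ))) := by
            apply mul_le_mul_of_nonneg_left _ (by linarith)
            exact mul_le_mul_of_nonneg_right hinv hexppos.le
    -- sum of exponents bound
    have hEsum : ∑ k : Fin m, E (k:ℕ) ≤ D1 * (m:ℝ) ^ (1 + θ) + D2 := by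
      have hEle : ∀ i : ℕ, E i ≤ (⟪f0, e i⟫ ^ 2 + r ^ 2) * (1 + (i:ℝ) ^ 2) ^ (δ + 1/2) := by
        intro i
        have hτp := hτpos i
        have hτ0 : τ i ^ 2 ≠ 0 := by positivity
        have hτsq : τ i ^ 2 = (1 + (i:ℝ) ^ 2) ^ (-(δ + 1/2)) := by
          rw [hτdef]
          rw [← Real.rpow_natCast ((1 + (i:ℝ) ^ 2) ^ (-δ/2 - 1/4)) 2,
            ← Real.rpow_mul (hbasepos i).le]
          congr 1
          push_cast; ring
        have hτinv : (τ i ^ 2)⁻¹ = (1 + (i:ℝ) ^ 2) ^ (δ + 1/2) := by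
          rw [hτsq, Real.rpow_neg (hbasepos i).le, inv_inv]
        have hnum : (|⟪f0, e i⟫| + r) ^ 2 ≤ 2 * ⟪f0, e i⟫ ^ 2 + 2 * r ^ 2 :=
          aux_num _ _
        calc E i = (|⟪f0, e i⟫| + r) ^ 2 / (2 * τ i ^ 2) := by rw [hEdef]
          _ ≤ (2 * ⟪f0, e i⟫ ^ 2 + 2 * r ^ 2) / (2 * τ i ^ 2) :=
              (div_le_div_iff_of_pos_right (by positivity)).2 hnum
          _ = (⟪f0, e i⟫ ^ 2 + r ^ 2) * (τ i ^ 2)⁻¹ := by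
              rw [div_eq_mul_inv, mul_inv]
              field_simp
          _ = (⟪f0, e i⟫ ^ 2 + r ^ 2) * (1 + (i:ℝ) ^ 2) ^ (δ + 1/2) := by rw [hτinv]
      have hbig : ∀ i : ℕ, i < m → (1 + (i:ℝ) ^ 2) ≤ 2 * (m:ℝ) ^ 2 := by
        intro i him
        have h1 : (i:ℝ) ≤ (m:ℝ) := by exact_mod_cast him.le
        exact aux_big _ _ (Nat.cast_nonneg i) h1 hm1R
      have hA : ∀ i : ℕ, i < m → (1 + (i:ℝ) ^ 2) ^ (δ + 1/2)
          ≤ (1 + (i:ℝ) ^ 2) ^ γ * (2 * (m:ℝ) ^ 2) ^ p1 := by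
        intro i him
        have h1 : (1 + (i:ℝ) ^ 2) ^ (δ + 1/2)
            = (1 + (i:ℝ) ^ 2) ^ γ * (1 + (i:ℝ) ^ 2) ^ (δ + 1/2 - γ) := by
          rw [← Real.rpow_add (hbasepos i)]; ring_nf
        rw [h1]
        apply mul_le_mul_of_nonneg_left _ (by positivity)
        calc (1 + (i:ℝ) ^ 2) ^ (δ + 1/2 - γ) ≤ (1 + (i:ℝ) ^ 2) ^ p1 :=
            Real.rpow_le_rpow_of_exponent_le (hbase i) (le_max_left _ _)
          _ ≤ (2 * (m:ℝ) ^ 2) ^ p1 :=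
            Real.rpow_le_rpow (by positivity) (hbig i him) hp1nn
      have hstep : ∑ i ∈ Finset.range m, E i
          ≤ ∑ i ∈ Finset.range m, (⟪f0, e i⟫ ^ 2 * (1 + (i:ℝ) ^ 2) ^ γ * (2 * (m:ℝ) ^ 2) ^ p1
              + r ^ 2 * (2 * (m:ℝ) ^ 2) ^ (δ + 1/2)) := by
        apply Finset.sum_le_sum
        intro i hi
        rw [Finset.mem_range] at hi
        have hPB : (1 + (i:ℝ) ^ 2) ^ (δ + 1/2) ≤ (2 * (m:ℝ) ^ 2) ^ (δ + 1/2) :=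
          Real.rpow_le_rpow (by positivity) (hbig i hi) (by linarith)
        calc E i ≤ (⟪f0, e i⟫ ^ 2 + r ^ 2) * (1 + (i:ℝ) ^ 2) ^ (δ + 1/2) := hEle i
          _ = ⟪f0, e i⟫ ^ 2 * (1 + (i:ℝ) ^ 2) ^ (δ + 1/2)
              + r ^ 2 * (1 + (i:ℝ) ^ 2) ^ (δ + 1/2) := by ring
          _ ≤ ⟪f0, e i⟫ ^ 2 * ((1 + (i:ℝ) ^ 2) ^ γ * (2 * (m:ℝ) ^ 2) ^ p1)
              + r ^ 2 * (2 * (m:ℝ) ^ 2) ^ (δ + 1/2) := by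
            apply add_le_add
            · exact mul_le_mul_of_nonneg_left (hA i hi) (sq_nonneg _)
            · exact mul_le_mul_of_nonneg_left hPB (sq_nonneg _)
          _ = ⟪f0, e i⟫ ^ 2 * (1 + (i:ℝ) ^ 2) ^ γ * (2 * (m:ℝ) ^ 2) ^ p1
              + r ^ 2 * (2 * (m:ℝ) ^ 2) ^ (δ + 1/2) := by ring
      have hSA : ∑ i ∈ Finset.range m, ⟪f0, e i⟫ ^ 2 * (1 + (i:ℝ) ^ 2) ^ γ ≤ K :=
        Summable.sum_le_tsum _ (fun i _ => htermnn i) hf0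
      have hSAnn : 0 ≤ ∑ i ∈ Finset.range m, ⟪f0, e i⟫ ^ 2 * (1 + (i:ℝ) ^ 2) ^ γ :=
        Finset.sum_nonneg fun i _ => htermnn i
      have hkrp : (2 * (m:ℝ) ^ 2) ^ p1 ≤ 2 ^ p1 * (m:ℝ) ^ (1 + θ) := by
        rw [Real.mul_rpow (by norm_num) (by positivity)]
        apply mul_le_mul_of_nonneg_left _ (by positivity)
        have h1 : ((m:ℝ) ^ 2) ^ p1 = (m:ℝ) ^ (2 * p1) := by
          rw [← Real.rpow_natCast (m:ℝ) 2, ← Real.rpow_mul (by positivity)]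
          norm_num
        rw [h1]
        exact Real.rpow_le_rpow_of_exponent_le hm1R h2p1
      have hApart : (∑ i ∈ Finset.range m, ⟪f0, e i⟫ ^ 2 * (1 + (i:ℝ) ^ 2) ^ γ)
          * (2 * (m:ℝ) ^ 2) ^ p1 ≤ D1 * (m:ℝ) ^ (1 + θ) := by
        calc (∑ i ∈ Finset.range m, ⟪f0, e i⟫ ^ 2 * (1 + (i:ℝ) ^ 2) ^ γ)
            * (2 * (m:ℝ) ^ 2) ^ p1
            ≤ K * (2 ^ p1 * (m:ℝ) ^ (1 + θ)) :=
              mul_le_mul hSA hkrp (by positivity) hKnn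
          _ ≤ D1 * (m:ℝ) ^ (1 + θ) := by
              rw [hD1def]
              have h2 : K * 2 ^ p1 ≤ (K + 1) * 2 ^ p1 := by
                apply mul_le_mul_of_nonneg_right (by linarith) (by positivity)
              calc K * (2 ^ p1 * (m:ℝ) ^ (1 + θ)) = (K * 2 ^ p1) * (m:ℝ) ^ (1 + θ) := by ring
                _ ≤ ((K + 1) * 2 ^ p1) * (m:ℝ) ^ (1 + θ) :=
                  mul_le_mul_of_nonneg_right h2 (by positivity)
      have hsle : (2 * δ + 2) / β ≤ (j0:ℝ) := Nat.le_ceil _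
      have hε2 : ε ^ 2 = Real.exp (-(2 * L)) := by
        rw [hεexp, ← Real.exp_nat_mul]
        norm_num
      have hL2 : Real.exp (-(2 * L)) * L ^ ((2 * δ + 2) / β) ≤ (j0.factorial:ℝ) / 2 ^ j0 := by
        have h1 : L ^ ((2 * δ + 2) / β) ≤ L ^ ((j0:ℕ):ℝ) :=
          Real.rpow_le_rpow_of_exponent_le hL1 hsle
        have h2 : L ^ ((j0:ℕ):ℝ) = L ^ (j0:ℕ) := Real.rpow_natCast L j0
        have h3 : (2 * L) ^ j0 ≤ (j0.factorial:ℝ) * Real.exp (2 * L) :=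
          aux_pow_le_exp (2 * L) (by linarith) j0
        rw [mul_pow] at h3
        have h4 : Real.exp (-(2 * L)) * L ^ ((2 * δ + 2) / β)
            ≤ Real.exp (-(2 * L)) * L ^ (j0:ℕ) := by
          apply mul_le_mul_of_nonneg_left _ (Real.exp_nonneg _)
          rw [← h2]; exact h1
        have h6 : (0:ℝ) < 2 ^ j0 := by positivity
        have h5 : Real.exp (-(2 * L)) * L ^ (j0:ℕ) ≤ (j0.factorial:ℝ) / 2 ^ j0 := by
          rw [le_div_iff₀ h6]
          have h7 : Real.exp (-(2 * L)) * (2 ^ j0 * L ^ j0)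
              ≤ Real.exp (-(2 * L)) * ((j0.factorial:ℝ) * Real.exp (2 * L)) :=
            mul_le_mul_of_nonneg_left h3 (Real.exp_nonneg _)
          have h8 : Real.exp (-(2 * L)) * ((j0.factorial:ℝ) * Real.exp (2 * L))
              = (j0.factorial:ℝ) := by
            rw [show Real.exp (-(2 * L)) * ((j0.factorial:ℝ) * Real.exp (2 * L))
              = (j0.factorial:ℝ) * (Real.exp (-(2 * L)) * Real.exp (2 * L)) from by ring,
              ← Real.exp_add, neg_add_cancel, Real.exp_zero, mul_one]
          have h9 : Real.exp (-(2 * L)) * L ^ (j0:ℕ) * 2 ^ j0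
              = Real.exp (-(2 * L)) * (2 ^ j0 * L ^ j0) := by ring
          rw [h9]
          linarith
        exact le_trans h4 h5
      have hBpart : (m:ℝ) * (r ^ 2 * (2 * (m:ℝ) ^ 2) ^ (δ + 1/2)) ≤ D2 := by
        have h1 : (2 * (m:ℝ) ^ 2) ^ (δ + 1/2)
            = 2 ^ (δ + 1/2) * ((m:ℝ) ^ 2) ^ (δ + 1/2) :=
          Real.mul_rpow (by norm_num) (by positivity)
        have h2 : ((m:ℝ) ^ 2) ^ (δ + 1/2) = (m:ℝ) ^ (2 * δ + 1) := by
          rw [← Real.rpow_natCast (m:ℝ) 2, ← Real.rpow_mul (by positivity)]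
          congr 1
          push_cast; ring
        have h3 : (m:ℝ) * (m:ℝ) ^ (2 * δ + 1) = (m:ℝ) ^ (2 * δ + 2) := by
          have h4 := Real.rpow_add hmpos 1 (2 * δ + 1)
          rw [Real.rpow_one] at h4
          rw [← h4]
          congr 1
          ring
        have h5 : (m:ℝ) ^ (2 * δ + 2) ≤ Cm ^ (2 * δ + 2) * L ^ ((2 * δ + 2) / β) := by
          calc (m:ℝ) ^ (2 * δ + 2) ≤ (Cm * L ^ (1/β)) ^ (2 * δ + 2) :=
              Real.rpow_le_rpow (by positivity) hmCm (by linarith)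
            _ = Cm ^ (2 * δ + 2) * (L ^ (1/β)) ^ (2 * δ + 2) :=
              Real.mul_rpow (by linarith) (by positivity)
            _ = Cm ^ (2 * δ + 2) * L ^ ((2 * δ + 2) / β) := by
              rw [← Real.rpow_mul hLpos.le]
              congr 2
              ring
        have hr2 : r ^ 2 ≤ ε ^ 2 := pow_le_pow_left₀ hrpos.le hrε 2
        calc (m:ℝ) * (r ^ 2 * (2 * (m:ℝ) ^ 2) ^ (δ + 1/2))
            = r ^ 2 * (2 ^ (δ + 1/2) * (m:ℝ) ^ (2 * δ + 2)) := by
              rw [h1, h2, ← h3]; ring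
          _ ≤ ε ^ 2 * (2 ^ (δ + 1/2) * (Cm ^ (2 * δ + 2) * L ^ ((2 * δ + 2) / β))) := by
              apply mul_le_mul hr2 _ (by positivity) (sq_nonneg ε)
              exact mul_le_mul_of_nonneg_left h5 (by positivity)
          _ = 2 ^ (δ + 1/2) * Cm ^ (2 * δ + 2) * (ε ^ 2 * L ^ ((2 * δ + 2) / β)) := by ring
          _ ≤ 2 ^ (δ + 1/2) * Cm ^ (2 * δ + 2) * ((j0.factorial:ℝ) / 2 ^ j0) := by
              apply mul_le_mul_of_nonneg_left _ (by positivity)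
              rw [hε2]
              exact hL2
          _ = D2 := by rw [hD2def]
      calc ∑ k : Fin m, E (k:ℕ) = ∑ i ∈ Finset.range m, E i := Fin.sum_univ_eq_sum_range E m
        _ ≤ ∑ i ∈ Finset.range m, (⟪f0, e i⟫ ^ 2 * (1 + (i:ℝ) ^ 2) ^ γ * (2 * (m:ℝ) ^ 2) ^ p1
              + r ^ 2 * (2 * (m:ℝ) ^ 2) ^ (δ + 1/2)) := hstep
        _ = (∑ i ∈ Finset.range m, ⟪f0, e i⟫ ^ 2 * (1 + (i:ℝ) ^ 2) ^ γ)
              * (2 * (m:ℝ) ^ 2) ^ p1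
            + (m:ℝ) * (r ^ 2 * (2 * (m:ℝ) ^ 2) ^ (δ + 1/2)) := by
            rw [Finset.sum_add_distrib, Finset.sum_const, Finset.card_range, nsmul_eq_mul,
              Finset.sum_mul]
        _ ≤ D1 * (m:ℝ) ^ (1 + θ) + D2 := add_le_add hApart hBpart

    -- product lower bound
    have hprodR : (r / 2) ^ m * Real.exp (-(D1 * (m:ℝ) ^ (1 + θ) + D2))
        ≤ ∏ k : Fin m, ((r / 2) * Real.exp (-E (k:ℕ))) := by
      rw [Finset.prod_mul_distrib, Finset.prod_const, ← Real.exp_sum]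
      have hcard : (Finset.univ : Finset (Fin m)).card = m := by simp
      rw [hcard]
      apply mul_le_mul_of_nonneg_left _ (by positivity)
      apply Real.exp_le_exp.2
      rw [Finset.sum_neg_distrib]
      exact neg_le_neg hEsum
    calc ENNReal.ofReal ((r / 2) ^ m * Real.exp (-(D1 * (m:ℝ) ^ (1 + θ) + D2)))
        ≤ ENNReal.ofReal (∏ k : Fin m, ((r / 2) * Real.exp (-E (k:ℕ)))) :=
          ENNReal.ofReal_le_ofReal hprodR
      _ = ∏ k : Fin m, ENNReal.ofReal ((r / 2) * Real.exp (-E (k:ℕ))) :=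
          ENNReal.ofReal_prod_of_nonneg fun k _ => by positivity
      _ ≤ ∏ k : Fin m, gaussianReal 0 (v (k:ℕ))
            (Set.Icc (⟪f0, e (k:ℕ)⟫ - r) (⟪f0, e (k:ℕ)⟫ + r)) :=
          Finset.prod_le_prod' fun k _ => hfac k
      _ = μg box := by rw [hμgv, hboxdef, Measure.pi_pi]

  have hfinal : Real.exp (-C * L ^ q)
      ≤ h m * ((r/2) ^ m * Real.exp (-(D1 * (m:ℝ) ^ (1 + θ) + D2))) := by
    have hhm := hhlb m hm1
    have hr2pos : 0 < r / 2 := by linarith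
    have hrm : (r/2) ^ m = Real.exp ((m:ℝ) * Real.log (r/2)) := by
      rw [Real.exp_nat_mul, Real.exp_log hr2pos]
    have hLq1 : 1 ≤ L ^ q := Real.one_le_rpow hL1 hqpos.le
    have hLqnn : 0 ≤ L ^ q := by positivity
    have hlogm : Real.log (m:ℝ) ≤ Real.log Cm + L / β := by
      calc Real.log (m:ℝ) ≤ Real.log (Cm * L ^ (1/β)) :=
          Real.log_le_log hmpos hmCm
        _ = Real.log Cm + Real.log (L ^ (1/β)) :=
          Real.log_mul (by positivity) (by positivity)
        _ = Real.log Cm + 1/β * Real.log L := by rw [Real.log_rpow hLpos]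
        _ ≤ Real.log Cm + L / β := by
            have h1 : Real.log L ≤ L := by
              have := Real.log_le_sub_one_of_pos hLpos
              linarith
            have h2 : 1/β * Real.log L ≤ 1/β * L :=
              mul_le_mul_of_nonneg_left h1 (by positivity)
            have h3 : 1/β * L = L / β := by ring
            linarith
    have hlogr : -Real.log (r/2) ≤ L + Real.log (4 * Cw) + Real.log (m:ℝ) := by
      have h1 : r/2 = ε / (4 * Cw * (m:ℝ)) := by
        rw [hrdef, div_div]; ring_nf
      have h2 : Real.log (r/2) = Real.log ε - Real.log (4 * Cw * (m:ℝ)) := by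
        rw [h1, Real.log_div (ne_of_gt hε) (by positivity)]
      have hlogε : Real.log ε = -L := by
        rw [hLdef, one_div, Real.log_inv]; ring
      have h3 : Real.log (4 * Cw * (m:ℝ)) = Real.log (4 * Cw) + Real.log (m:ℝ) :=
        Real.log_mul (by positivity) (ne_of_gt hmpos)
      rw [h2, hlogε, h3]
      linarith
    have hlog4 : Real.log (4 * Cw) + Real.log Cm ≤ L := by
      have h1 : Real.log (4 * Cw) + Real.log Cm = Real.log (4 * Cw * Cm) :=
        (Real.log_mul (by positivity) (by positivity)).symm
      rw [h1]
      have h2 := le_abs_self (Real.log (4 * Cw * Cm))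
      rw [hL0def] at hLgt
      have h3 := abs_nonneg (Real.log (2 * C3 * (K + 1)))
      linarith
    have hmq1 : (m:ℝ) ^ (β + 1) ≤ Cm ^ (β + 1) * L ^ q := by
      calc (m:ℝ) ^ (β + 1) ≤ (Cm * L ^ (1/β)) ^ (β + 1) :=
          Real.rpow_le_rpow (by positivity) hmCm (by linarith)
        _ = Cm ^ (β + 1) * (L ^ (1/β)) ^ (β + 1) :=
          Real.mul_rpow (by linarith) (by positivity)
        _ = Cm ^ (β + 1) * L ^ ((β + 1)/β) := by
            rw [← Real.rpow_mul hLpos.le]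
            congr 2
            ring
        _ ≤ Cm ^ (β + 1) * L ^ q := by
            apply mul_le_mul_of_nonneg_left _ (by positivity)
            apply Real.rpow_le_rpow_of_exponent_le hL1
            rw [hqdef]
            exact (div_le_div_iff_of_pos_right hβ).2 (by linarith)
    have hmq2 : (m:ℝ) ^ (1 + θ) ≤ Cm ^ (1 + θ) * L ^ q := by
      calc (m:ℝ) ^ (1 + θ) ≤ (Cm * L ^ (1/β)) ^ (1 + θ) :=
          Real.rpow_le_rpow (by positivity) hmCm (by linarith)
        _ = Cm ^ (1 + θ) * (L ^ (1/β)) ^ (1 + θ) :=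
          Real.mul_rpow (by linarith) (by positivity)
        _ = Cm ^ (1 + θ) * L ^ q := by
            rw [← Real.rpow_mul hLpos.le]
            rw [hqdef]
            congr 2
            ring
    have hfin1 : -((m:ℝ) * Real.log (r/2)) ≤ Cm * (2 + 1/β) * L ^ q := by
      rw [show -((m:ℝ) * Real.log (r/2)) = (m:ℝ) * (-Real.log (r/2)) from by ring]
      have h1 : -Real.log (r/2) ≤ L + L + L / β := by linarith
      have h2 : (m:ℝ) * (-Real.log (r/2)) ≤ (m:ℝ) * (L + L + L / β) :=
        mul_le_mul_of_nonneg_left h1 (by positivity)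
      have h3 : (m:ℝ) * (L + L + L / β) ≤ Cm * L ^ (1/β) * (L * (2 + 1/β)) := by
        have heq : L + L + L / β = L * (2 + 1/β) := by ring
        rw [heq]
        apply mul_le_mul_of_nonneg_right hmCm
        positivity
      have h5 : L ^ (1/β) * L = L ^ (1/β + 1) := by
        rw [Real.rpow_add hLpos, Real.rpow_one]
      have h6 : L ^ (1/β + 1) ≤ L ^ q := by
        apply Real.rpow_le_rpow_of_exponent_le hL1
        rw [hqdef]
        have heq2 : 1/β + 1 = (β + 1)/β := by field_simp; ring
        rw [heq2]
        exact (div_le_div_iff_of_pos_right hβ).2 (by linarith)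
      calc (m:ℝ) * (-Real.log (r/2)) ≤ Cm * L ^ (1/β) * (L * (2 + 1/β)) := le_trans h2 h3
        _ = Cm * (2 + 1/β) * (L ^ (1/β) * L) := by ring
        _ = Cm * (2 + 1/β) * L ^ (1/β + 1) := by rw [h5]
        _ ≤ Cm * (2 + 1/β) * L ^ q := by
            apply mul_le_mul_of_nonneg_left h6
            positivity
    have hsum_bound : -Real.log B1 + b * (m:ℝ) ^ (β + 1) + (-((m:ℝ) * Real.log (r/2)))
        + (D1 * (m:ℝ) ^ (1 + θ) + D2) ≤ C * L ^ q := by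
      have t1 : -Real.log B1 ≤ |Real.log B1| * L ^ q := by
        have h1 := neg_abs_le (Real.log B1)
        have h2 : |Real.log B1| ≤ |Real.log B1| * L ^ q :=
          le_mul_of_one_le_right (abs_nonneg _) hLq1
        linarith
      have t2 : b * (m:ℝ) ^ (β + 1) ≤ b * Cm ^ (β + 1) * L ^ q := by
        calc b * (m:ℝ) ^ (β + 1) ≤ b * (Cm ^ (β + 1) * L ^ q) :=
            mul_le_mul_of_nonneg_left hmq1 hb.le
          _ = b * Cm ^ (β + 1) * L ^ q := by ring
      have t4 : D1 * (m:ℝ) ^ (1 + θ) ≤ D1 * Cm ^ (1 + θ) * L ^ q := by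
        calc D1 * (m:ℝ) ^ (1 + θ) ≤ D1 * (Cm ^ (1 + θ) * L ^ q) :=
            mul_le_mul_of_nonneg_left hmq2 hD1nn
          _ = D1 * Cm ^ (1 + θ) * L ^ q := by ring
      have t5 : D2 ≤ D2 * L ^ q := le_mul_of_one_le_right hD2nn hLq1
      have hCL : C * L ^ q = |Real.log B1| * L ^ q + D2 * L ^ q + b * Cm ^ (β + 1) * L ^ q
          + D1 * Cm ^ (1 + θ) * L ^ q + Cm * (2 + 1/β) * L ^ q + L ^ q := by
        rw [hCdef]; ring
      rw [hCL]
      linarith [hfin1]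
    calc Real.exp (-C * L ^ q)
        ≤ Real.exp (Real.log B1 + (-b * (m:ℝ) ^ (β + 1))
            + ((m:ℝ) * Real.log (r/2) + (-(D1 * (m:ℝ) ^ (1 + θ) + D2)))) := by
          apply Real.exp_le_exp.2
          linarith [hsum_bound]
      _ = B1 * Real.exp (-b * (m:ℝ) ^ (β + 1))
          * ((r/2) ^ m * Real.exp (-(D1 * (m:ℝ) ^ (1 + θ) + D2))) := by
          rw [Real.exp_add, Real.exp_add, Real.exp_add, Real.exp_log hB1, ← hrm]
      _ ≤ h m * ((r/2) ^ m * Real.exp (-(D1 * (m:ℝ) ^ (1 + θ) + D2))) := by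
          apply mul_le_mul_of_nonneg_right hhm
          positivity

  calc ENNReal.ofReal (Real.exp (-C * L ^ q))
      ≤ ENNReal.ofReal (h m * ((r/2) ^ m * Real.exp (-(D1 * (m:ℝ) ^ (1 + θ) + D2)))) :=
        ENNReal.ofReal_le_ofReal hfinal
    _ = ENNReal.ofReal (h m)
        * ENNReal.ofReal ((r/2) ^ m * Real.exp (-(D1 * (m:ℝ) ^ (1 + θ) + D2))) :=
        ENNReal.ofReal_mul (hhnn m)
    _ ≤ ENNReal.ofReal (h m) * μg box := mul_le_mul_right hgauss _
    _ ≤ Pr _ := hterm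
end

section
/- Let α ≥ 0, 0 < δ ≤ γ and B > 0. Let (β_{lk})_{l ≥ 0, 0 ≤ k < 2^l} be real numbers with |β_{lk}| ≤ B 2^{−l(γ + 1/2)} for all l, k, and let (u_{lk})_{l ≥ 0, 0 ≤ k < 2^l} be i.i.d. random variables uniformly distributed on [−B, B]. Then there exist constants c > 0 and ε0 ∈ (0,1), depending only on α, δ, γ, B, such that for all 0 < ε < ε0, P(Σ_{l=0}^∞ 2^{−2lα} Σ_{k=0}^{2^l − 1} |β_{lk} − 2^{−l(δ + 1/2)} u_{lk}|² ≤ ε²) ≥ exp(−c ε^{−1/(α+δ)} log(1/ε)). -/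
/-!
Put `m_{lk} = 2^{l(δ+1/2)} β_{lk}`, so that `|m_{lk}| ≤ B` because `δ ≤ γ`, and
`r = 2^{-2(α+δ)} < 1`. Level `l` of the series is at most `r^l · max_k |u_{lk} - m_{lk}|²`, and,
since `|u_{lk}| ≤ B` almost surely, always at most `4B² r^l`. Choosing `N` with `r^N ≈ ε²` and
requiring `|u_{lk} - m_{lk}| ≤ η ≈ ε` on the `< 2^N ≈ ε^{-1/(α+δ)}` coefficients of the levels
`l < N` makes the series `≤ ε²`; by independence this event has probability at least
`(η/2B)^{2^N} = exp(-O(ε^{-1/(α+δ)} log(1/ε)))`.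
-/

open MeasureTheory ProbabilityTheory Real Finset
open scoped ENNReal NNReal

noncomputable def levelSqDist (α δ : ℝ) (β : ℕ → ℕ → ℝ) (x : ℕ × ℕ → ℝ) (l : ℕ) : ℝ :=
  (2 : ℝ) ^ (-2 * (l : ℝ) * α) *
    ∑ k ∈ range (2 ^ l), (β l k - (2 : ℝ) ^ (-(l : ℝ) * (δ + 1 / 2)) * x (l, k)) ^ 2

noncomputable def rescaledCoeff (δ : ℝ) (β : ℕ → ℕ → ℝ) (p : ℕ × ℕ) : ℝ :=
  (2 : ℝ) ^ ((p.1 : ℝ) * (δ + 1 / 2)) * β p.1 p.2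

def levelIndices (N : ℕ) : Finset (ℕ × ℕ) :=
  ((range N).sigma fun l => range (2 ^ l)).image fun x => (x.1, x.2)

theorem mem_levelIndices {N : ℕ} {p : ℕ × ℕ} : p ∈ levelIndices N ↔ p.1 < N ∧ p.2 < 2 ^ p.1 := by
  obtain ⟨l, k⟩ := p
  simp [levelIndices]

theorem card_levelIndices_le (N : ℕ) : #(levelIndices N) ≤ 2 ^ N :=
  calc #(levelIndices N) ≤ #((range N).sigma fun l => range (2 ^ l)) := card_image_le
    _ = ∑ l ∈ range N, 2 ^ l := by simp only [card_sigma, card_range]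
    _ ≤ 2 ^ N := (Nat.geomSum_lt le_rfl fun _ => mem_range.1).le

theorem tsum_le_of_le_geometric {f : ℕ → ℝ} {r a b : ℝ} (N : ℕ) (hr0 : 0 ≤ r) (hr1 : r < 1)
    (hf : ∀ l, 0 ≤ f l) (ha : 0 ≤ a) (hhead : ∀ l < N, f l ≤ a * r ^ l)
    (htail : ∀ l, f l ≤ b * r ^ l) :
    ∑' l, f l ≤ (a + b * r ^ N) / (1 - r) := by
  have hgeom : Summable (r ^ ·) := summable_geometric_of_lt_one hr0 hr1
  have hf_summable : Summable f := .of_nonneg_of_le hf htail (hgeom.mul_left b)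
  have hhead_le : ∑ l ∈ range N, f l ≤ a / (1 - r) :=
    calc ∑ l ∈ range N, f l ≤ a * ∑ l ∈ range N, r ^ l := by
          rw [mul_sum]; exact sum_le_sum fun l hl => hhead l (mem_range.1 hl)
      _ ≤ a * ∑' l, r ^ l := by gcongr; exact hgeom.sum_le_tsum _ fun l _ => pow_nonneg hr0 l
      _ = a / (1 - r) := by rw [tsum_geometric_of_lt_one hr0 hr1, div_eq_mul_inv]
  have htail_le : ∑' l, f (l + N) ≤ b * r ^ N / (1 - r) :=
    calc ∑' l, f (l + N) ≤ ∑' l, b * r ^ N * r ^ l :=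
          ((summable_nat_add_iff N).2 hf_summable).tsum_le_tsum
            (fun l => (htail _).trans_eq (by ring)) (hgeom.mul_left _)
      _ = b * r ^ N / (1 - r) := by
          rw [tsum_mul_left, tsum_geometric_of_lt_one hr0 hr1, div_eq_mul_inv]
  rw [← hf_summable.sum_add_tsum_nat_add N, add_div]
  exact add_le_add hhead_le htail_le

section Levels

variable {α δ γ B : ℝ} {β : ℕ → ℕ → ℝ}

theorem abs_rescaledCoeff_le (hδγ : δ ≤ γ) (hB : 0 ≤ B)
    (hβ : ∀ l k : ℕ, k < 2 ^ l → |β l k| ≤ B * (2 : ℝ) ^ (-(l : ℝ) * (γ + 1 / 2)))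
    {l k : ℕ} (hk : k < 2 ^ l) : |rescaledCoeff δ β (l, k)| ≤ B := by
  have hpos : (0 : ℝ) < 2 ^ ((l : ℝ) * (δ + 1 / 2)) := by positivity
  calc |rescaledCoeff δ β (l, k)| = 2 ^ ((l : ℝ) * (δ + 1 / 2)) * |β l k| := by
        rw [rescaledCoeff, abs_mul, abs_of_pos hpos]
    _ ≤ 2 ^ ((l : ℝ) * (δ + 1 / 2)) * (B * 2 ^ (-(l : ℝ) * (γ + 1 / 2))) := by
        gcongr; exact hβ l k hk
    _ = B * 2 ^ ((l : ℝ) * (δ - γ)) := by rw [mul_left_comm, ← rpow_add two_pos]; ring_nf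
    _ ≤ B := mul_le_of_le_one_right hB <| rpow_le_one_of_one_le_of_nonpos one_le_two <|
        mul_nonpos_of_nonneg_of_nonpos (by positivity) (by linarith)

theorem levelSqDist_le_of_sq_le (x : ℕ × ℕ → ℝ) (l : ℕ) (c : ℝ)
    (h : ∀ k < 2 ^ l, (β l k - (2 : ℝ) ^ (-(l : ℝ) * (δ + 1 / 2)) * x (l, k)) ^ 2
      ≤ ((2 : ℝ) ^ (-(l : ℝ) * (δ + 1 / 2))) ^ 2 * c) :
    levelSqDist α δ β x l ≤ c * ((2 : ℝ) ^ (-(2 * (α + δ)))) ^ l := by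
  have hweight : (2 : ℝ) ^ (-2 * (l : ℝ) * α) * (2 ^ l * ((2 : ℝ) ^ (-(l : ℝ) * (δ + 1 / 2))) ^ 2)
      = ((2 : ℝ) ^ (-(2 * (α + δ)))) ^ l := by
    rw [← rpow_natCast, ← rpow_natCast _ l, ← rpow_natCast _ 2, ← rpow_mul zero_le_two,
      ← rpow_mul zero_le_two, ← rpow_add two_pos, ← rpow_add two_pos]
    push_cast; ring_nf
  calc levelSqDist α δ β x l
      ≤ (2 : ℝ) ^ (-2 * (l : ℝ) * α) *
          ∑ _k ∈ range (2 ^ l), ((2 : ℝ) ^ (-(l : ℝ) * (δ + 1 / 2))) ^ 2 * c :=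
        mul_le_mul_of_nonneg_left (sum_le_sum fun k hk => h k (mem_range.1 hk)) (by positivity)
    _ = c * ((2 : ℝ) ^ (-(2 * (α + δ)))) ^ l := by
        rw [sum_const, card_range, nsmul_eq_mul, ← hweight]; push_cast; ring

theorem levelSqDist_le_of_abs_sub_rescaledCoeff_le {x : ℕ × ℕ → ℝ} {l : ℕ} {η : ℝ}
    (h : ∀ k < 2 ^ l, |x (l, k) - rescaledCoeff δ β (l, k)| ≤ η) :
    levelSqDist α δ β x l ≤ η ^ 2 * ((2 : ℝ) ^ (-(2 * (α + δ)))) ^ l := by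
  refine levelSqDist_le_of_sq_le x l _ fun k hk => ?_
  have hβ : β l k = 2 ^ (-(l : ℝ) * (δ + 1 / 2)) * rescaledCoeff δ β (l, k) := by
    rw [rescaledCoeff, ← mul_assoc, ← rpow_add two_pos]; simp
  calc (β l k - 2 ^ (-(l : ℝ) * (δ + 1 / 2)) * x (l, k)) ^ 2
      = ((2 : ℝ) ^ (-(l : ℝ) * (δ + 1 / 2))) ^ 2 * |x (l, k) - rescaledCoeff δ β (l, k)| ^ 2 := by
        rw [hβ, sq_abs]; ring
    _ ≤ ((2 : ℝ) ^ (-(l : ℝ) * (δ + 1 / 2))) ^ 2 * η ^ 2 := by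
        gcongr; exact h k hk

theorem levelSqDist_le_of_abs_le (hδγ : δ ≤ γ) (hB : 0 ≤ B)
    (hβ : ∀ l k : ℕ, k < 2 ^ l → |β l k| ≤ B * (2 : ℝ) ^ (-(l : ℝ) * (γ + 1 / 2)))
    {x : ℕ × ℕ → ℝ} (hx : ∀ p, |x p| ≤ B) (l : ℕ) :
    levelSqDist α δ β x l ≤ (2 * B) ^ 2 * ((2 : ℝ) ^ (-(2 * (α + δ)))) ^ l := by
  refine levelSqDist_le_of_sq_le x l _ fun k hk => ?_
  set s : ℝ := 2 ^ (-(l : ℝ) * (δ + 1 / 2))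
  have hs : 0 ≤ s := by positivity
  have hγδ : (2 : ℝ) ^ (-(l : ℝ) * (γ + 1 / 2)) ≤ s :=
    rpow_le_rpow_of_exponent_le one_le_two (by nlinarith [(Nat.cast_nonneg l : (0 : ℝ) ≤ l)])
  have habs : |β l k - s * x (l, k)| ≤ s * (2 * B) :=
    calc |β l k - s * x (l, k)| ≤ |β l k| + s * |x (l, k)| := by
          rw [← abs_of_nonneg hs, ← abs_mul, abs_of_nonneg hs]; exact abs_sub _ _
      _ ≤ B * s + s * B := by
          gcongr
          · exact (hβ l k hk).trans (mul_le_mul_of_nonneg_left hγδ hB)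
          · exact hx _
      _ = s * (2 * B) := by ring
  calc (β l k - s * x (l, k)) ^ 2 = |β l k - s * x (l, k)| ^ 2 := (sq_abs _).symm
    _ ≤ (s * (2 * B)) ^ 2 := by gcongr
    _ = s ^ 2 * (2 * B) ^ 2 := by ring

theorem tsum_levelSqDist_le {η : ℝ} (hαδ : 0 < α + δ) (hδγ : δ ≤ γ)
    (hB : 0 ≤ B) (hβ : ∀ l k : ℕ, k < 2 ^ l → |β l k| ≤ B * (2 : ℝ) ^ (-(l : ℝ) * (γ + 1 / 2)))
    {x : ℕ × ℕ → ℝ} (hx : ∀ p, |x p| ≤ B) {N : ℕ}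
    (hclose : ∀ p ∈ levelIndices N, |x p - rescaledCoeff δ β p| ≤ η) :
    ∑' l, levelSqDist α δ β x l
      ≤ (η ^ 2 + (2 * B) ^ 2 * ((2 : ℝ) ^ (-(2 * (α + δ)))) ^ N) / (1 - 2 ^ (-(2 * (α + δ)))) :=
  tsum_le_of_le_geometric N (by positivity)
    (rpow_lt_one_of_one_lt_of_neg one_lt_two (by linarith))
    (fun l => by unfold levelSqDist; positivity) (sq_nonneg η)
    (fun l hl => levelSqDist_le_of_abs_sub_rescaledCoeff_le fun k hk =>
      hclose _ (mem_levelIndices.2 ⟨hl, hk⟩))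
    (levelSqDist_le_of_abs_le hδγ hB hβ hx)

end Levels

theorem ae_mem_of_map_eq_smul_restrict {Ω E : Type*} [MeasurableSpace Ω] [MeasurableSpace E]
    {P : Measure Ω} {μ : Measure E} {X : Ω → E} {s : Set E} {c : ℝ≥0∞} (hX : AEMeasurable X P)
    (hs : MeasurableSet s) (h : P.map X = c • μ.restrict s) : ∀ᵐ ω ∂P, X ω ∈ s :=
  ae_of_ae_map hX (h ▸ Measure.ae_smul_measure (ae_restrict_mem hs) c)

theorem ofReal_le_volume_Icc_inter_Icc {a b m η : ℝ} (hm : m ∈ Set.Icc a b) (hη0 : 0 ≤ η)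
    (hη : η ≤ b - a) :
    ENNReal.ofReal η ≤ volume (Set.Icc (m - η) (m + η) ∩ Set.Icc a b) := by
  rw [Set.Icc_inter_Icc, volume_Icc]
  refine ENNReal.ofReal_le_ofReal (le_sub_iff_add_le.2 ?_)
  rw [add_comm, ← max_add_add_right]
  exact le_min (max_le (by linarith) (by linarith [hm.1]))
    (max_le (by linarith [hm.2]) (by linarith))

theorem ofReal_div_le_uniform_Icc {a b m η : ℝ} (hab : a < b) (hm : m ∈ Set.Icc a b)
    (hη0 : 0 ≤ η) (hη : η ≤ b - a) :
    ENNReal.ofReal (η / (b - a)) ≤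
      ((ENNReal.ofReal (b - a))⁻¹ • volume.restrict (Set.Icc a b)) (Set.Icc (m - η) (m + η)) := by
  rw [Measure.smul_apply, Measure.restrict_apply measurableSet_Icc, smul_eq_mul,
    ENNReal.ofReal_div_of_pos (by linarith), ENNReal.div_eq_inv_mul]
  gcongr
  exact ofReal_le_volume_Icc_inter_Icc hm hη0 hη

theorem ProbabilityTheory.iIndepFun.pow_card_le_measure_biInter_preimage {Ω ι E : Type*}
    [MeasurableSpace Ω] [MeasurableSpace E] {P : Measure Ω} {u : ι → Ω → E} (hu : iIndepFun u P)
    (S : Finset ι) {t : ι → Set E}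
    (ht : ∀ i, MeasurableSet (t i)) {q : ℝ≥0∞} (hq : ∀ i ∈ S, q ≤ P (u i ⁻¹' t i)) :
    q ^ #S ≤ P (⋂ i ∈ S, u i ⁻¹' t i) := by
  rw [hu.meas_biInter fun i _ => ⟨t i, ht i, rfl⟩]
  exact pow_card_le_prod S _ q hq

theorem ofReal_pow_le_measure_tsum_levelSqDist_le {α δ γ B : ℝ} (hαδ : 0 < α + δ) (hδγ : δ ≤ γ)
    (hB : 0 < B) {β : ℕ → ℕ → ℝ}
    (hβ : ∀ l k : ℕ, k < 2 ^ l → |β l k| ≤ B * (2 : ℝ) ^ (-(l : ℝ) * (γ + 1 / 2)))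
    {Ω : Type*} [MeasurableSpace Ω] {P : Measure Ω} {u : ℕ × ℕ → Ω → ℝ}
    (humeas : ∀ p, Measurable (u p)) (huindep : iIndepFun u P)
    (hudist : ∀ p, Measure.map (u p) P
      = (ENNReal.ofReal (2 * B))⁻¹ • volume.restrict (Set.Icc (-B) B))
    (N : ℕ) {η : ℝ} (hη0 : 0 ≤ η) (hη : η ≤ 2 * B) :
    ENNReal.ofReal (η / (2 * B)) ^ 2 ^ N ≤ P {ω | ∑' l, levelSqDist α δ β (fun p => u p ω) l
      ≤ (η ^ 2 + (2 * B) ^ 2 * ((2 : ℝ) ^ (-(2 * (α + δ)))) ^ N) / (1 - 2 ^ (-(2 * (α + δ))))} := by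
  set I : ℕ × ℕ → Set ℝ := fun p => Set.Icc (rescaledCoeff δ β p - η) (rescaledCoeff δ β p + η)
  have hsingle : ∀ p ∈ levelIndices N, ENNReal.ofReal (η / (2 * B)) ≤ P (u p ⁻¹' I p) := by
    intro p hp
    have hm : rescaledCoeff δ β p ∈ Set.Icc (-B) B :=
      abs_le.1 (abs_rescaledCoeff_le hδγ hB.le hβ (mem_levelIndices.1 hp).2)
    have := ofReal_div_le_uniform_Icc (by linarith) hm hη0 (by linarith)
    rwa [sub_neg_eq_add, ← two_mul, ← hudist p, Measure.map_apply (humeas p) measurableSet_Icc]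
      at this
  have hbdd : ∀ᵐ ω ∂P, ∀ p, u p ω ∈ Set.Icc (-B) B := ae_all_iff.2 fun p =>
    ae_mem_of_map_eq_smul_restrict (humeas p).aemeasurable measurableSet_Icc (hudist p)
  calc ENNReal.ofReal (η / (2 * B)) ^ 2 ^ N
      ≤ ENNReal.ofReal (η / (2 * B)) ^ #(levelIndices N) :=
        pow_le_pow_right_of_le_one' (ENNReal.ofReal_le_one.2 ((div_le_one (by linarith)).2 hη))
          (card_levelIndices_le N)
    _ ≤ P (⋂ p ∈ levelIndices N, u p ⁻¹' I p) :=
        huindep.pow_card_le_measure_biInter_preimage _ (fun _ => measurableSet_Icc) hsingle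
    _ ≤ _ := by
        refine measure_mono_ae ?_
        filter_upwards [hbdd] with ω hω hclose
        refine tsum_levelSqDist_le hαδ hδγ hB.le hβ (fun p => abs_le.2 (hω p)) fun p hp => ?_
        have := Set.mem_iInter₂.1 hclose p hp
        exact abs_sub_le_iff.2 ⟨by linarith [this.2], by linarith [this.1]⟩

theorem exists_two_pow_near {t a : ℝ} (ht : 1 ≤ t) (ha : 0 < a) :
    ∃ N : ℕ, ((2 : ℝ) ^ (-(2 * a))) ^ N ≤ (t⁻¹) ^ 2 ∧ (2 : ℝ) ^ N ≤ 2 * t ^ (1 / a) := by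
  obtain ⟨n, hle, hlt⟩ :=
    exists_nat_pow_near (one_le_rpow (z := 1 / a) ht (by positivity)) one_lt_two
  refine ⟨n + 1, ?_, by rw [pow_succ']; gcongr⟩
  have ht_lt : t < ((2 : ℝ) ^ (n + 1)) ^ a := by
    calc t = (t ^ (1 / a)) ^ a := by
          rw [← rpow_mul (by linarith), one_div_mul_cancel ha.ne', rpow_one]
      _ < _ := by gcongr
  calc ((2 : ℝ) ^ (-(2 * a))) ^ (n + 1) = ((((2 : ℝ) ^ (n + 1)) ^ a)⁻¹) ^ 2 := by
        rw [← rpow_natCast, ← rpow_natCast _ (n + 1), ← rpow_natCast _ 2, ← rpow_mul zero_le_two,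
          ← rpow_mul zero_le_two, ← rpow_neg (by positivity), ← rpow_mul (by positivity)]
        push_cast; ring_nf
    _ ≤ (t⁻¹) ^ 2 := by gcongr

theorem exp_neg_le_div_pow {a K ε : ℝ} (hε : 0 < ε) (hK : 1 ≤ K) (hKε : K ≤ 1 / ε)
    {n : ℕ} (hn : (n : ℝ) ≤ 2 * (K / ε) ^ (1 / a)) :
    exp (-(4 * K ^ (1 / a)) * ε ^ (-1 / a) * log (1 / ε)) ≤ (ε / K) ^ n := by
  have hK0 : 0 < K := by linarith
  have hlogK : 0 ≤ log K := log_nonneg hK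
  have hlog_le : log K ≤ log (1 / ε) := log_le_log hK0 hKε
  have hroot : (K / ε) ^ (1 / a) = K ^ (1 / a) * ε ^ (-1 / a) := by
    rw [div_rpow hK0.le hε.le, neg_div, rpow_neg hε.le, div_eq_mul_inv]
  rw [← exp_log (pow_pos (div_pos hε hK0) n), log_pow, exp_le_exp,
    show log (ε / K) = -(log K + log (1 / ε)) by
      rw [log_div hε.ne' hK0.ne', one_div, log_inv]; ring]
  have := mul_le_mul hn (show log K + log (1 / ε) ≤ 2 * log (1 / ε) by linarith) (by linarith)
    (by positivity)
  rw [hroot] at this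
  linarith

theorem uniform_wavelet_small_ball_general
    (α δ γ B : ℝ) (hα : 0 ≤ α) (hδ : 0 < δ) (hδγ : δ ≤ γ) (hB : 0 < B)
    (β : ℕ → ℕ → ℝ)
    (hβ : ∀ l k : ℕ, k < 2 ^ l → |β l k| ≤ B * (2 : ℝ) ^ (-(l : ℝ) * (γ + 1 / 2)))
    {Ω : Type*} [MeasurableSpace Ω] (P : Measure Ω)
    (u : ℕ × ℕ → Ω → ℝ) (humeas : ∀ p, Measurable (u p))
    (huindep : iIndepFun u P)
    (hudist : ∀ p, Measure.map (u p) P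
      = (ENNReal.ofReal (2 * B))⁻¹ • volume.restrict (Set.Icc (-B) B)) :
    ∃ c ε0 : ℝ, 0 < c ∧ 0 < ε0 ∧ ε0 < 1 ∧ ∀ ε : ℝ, 0 < ε → ε < ε0 →
      ENNReal.ofReal (Real.exp (-c * ε ^ (-1 / (α + δ)) * Real.log (1 / ε)))
        ≤ P {ω | ∑' l : ℕ, (2 : ℝ) ^ (-2 * (l : ℝ) * α) *
              ∑ k ∈ Finset.range (2 ^ l),
                (β l k - (2 : ℝ) ^ (-(l : ℝ) * (δ + 1 / 2)) * u (l, k) ω) ^ 2 ≤ ε ^ 2} := by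
  have hαδ : 0 < α + δ := by linarith
  set r : ℝ := 2 ^ (-(2 * (α + δ)))
  have hr : r < 1 := rpow_lt_one_of_one_lt_of_neg one_lt_two (by linarith)
  set K : ℝ := 1 + 8 * B ^ 2 / (1 - r)
  have hK : 1 < K := lt_add_of_pos_right 1 (div_pos (by positivity) (by linarith))
  refine ⟨4 * K ^ (1 / (α + δ)), 1 / K, by positivity, by positivity,
    (div_lt_one (by linarith)).2 hK, fun ε hε hεK => ?_⟩
  have hKε : K < 1 / ε := (lt_one_div hε (by linarith)).1 hεK
  have hε1 : ε < 1 := hεK.trans ((div_lt_one (by linarith)).2 hK)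
  have hεK_le : ε / K ≤ 1 := (div_le_one (by linarith)).2 (by linarith)
  obtain ⟨N, hrN, h2N⟩ := exists_two_pow_near (t := K / ε) ((one_le_div hε).2 (by linarith)) hαδ
  rw [inv_div] at hrN
  have hradius : ((2 * B * (ε / K)) ^ 2 + (2 * B) ^ 2 * r ^ N) / (1 - r) ≤ ε ^ 2 :=
    calc ((2 * B * (ε / K)) ^ 2 + (2 * B) ^ 2 * r ^ N) / (1 - r)
        ≤ ((2 * B * (ε / K)) ^ 2 + (2 * B) ^ 2 * (ε / K) ^ 2) / (1 - r) := by gcongr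
      _ = 8 * B ^ 2 / (1 - r) * (ε / K) ^ 2 := by ring
      _ ≤ K * (ε / K) ^ 2 := by gcongr; exact le_add_of_nonneg_left zero_le_one
      _ = ε ^ 2 / K := by field_simp
      _ ≤ ε ^ 2 := div_le_self (sq_nonneg ε) hK.le
  calc ENNReal.ofReal (exp (-(4 * K ^ (1 / (α + δ))) * ε ^ (-1 / (α + δ)) * log (1 / ε)))
      ≤ ENNReal.ofReal (2 * B * (ε / K) / (2 * B)) ^ 2 ^ N := by
        rw [← ENNReal.ofReal_pow (by positivity), mul_div_cancel_left₀ _ (by positivity)]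
        exact ENNReal.ofReal_le_ofReal
          (exp_neg_le_div_pow hε hK.le hKε.le (by exact_mod_cast h2N))
    _ ≤ _ := ofReal_pow_le_measure_tsum_levelSqDist_le hαδ hδγ hB hβ humeas huindep hudist N
        (by positivity) (mul_le_of_le_one_right (by positivity) hεK_le)
    _ ≤ _ := measure_mono fun ω hω => hω.trans hradius

/-- small-ball lower bound for the uniform wavelet series.  With
`|β_{lk}| ≤ B 2^{−l(γ+1/2)}` and `u_{lk}` i.i.d. uniform on `[−B,B]`, for `0 < δ ≤ γ`, `α ≥ 0`:
`P(Σ_l 2^{−2lα} Σ_{k<2^l} |β_{lk} − 2^{−l(δ+1/2)} u_{lk}|² ≤ ε²) ≥ exp(−c ε^{−1/(α+δ)} log(1/ε))`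
for all sufficiently small `ε > 0`. -/
theorem uniform_wavelet_small_ball
    (α δ γ B : ℝ) (hα : 0 ≤ α) (hδ : 0 < δ) (hδγ : δ ≤ γ) (hB : 0 < B)
    (β : ℕ → ℕ → ℝ)
    (hβ : ∀ l k : ℕ, k < 2 ^ l → |β l k| ≤ B * (2 : ℝ) ^ (-(l : ℝ) * (γ + 1 / 2)))
    {Ω : Type*} [MeasurableSpace Ω] (P : Measure Ω) [IsProbabilityMeasure P]
    (u : ℕ × ℕ → Ω → ℝ) (humeas : ∀ p, Measurable (u p))
    (huindep : iIndepFun u P)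
    (hudist : ∀ p, Measure.map (u p) P
      = (ENNReal.ofReal (2 * B))⁻¹ • volume.restrict (Set.Icc (-B) B)) :
    ∃ c ε0 : ℝ, 0 < c ∧ 0 < ε0 ∧ ε0 < 1 ∧ ∀ ε : ℝ, 0 < ε → ε < ε0 →
      ENNReal.ofReal (Real.exp (-c * ε ^ (-1 / (α + δ)) * Real.log (1 / ε)))
        ≤ P {ω | ∑' l : ℕ, (2 : ℝ) ^ (-2 * (l : ℝ) * α) *
              ∑ k ∈ Finset.range (2 ^ l),
                (β l k - (2 : ℝ) ^ (-(l : ℝ) * (δ + 1 / 2)) * u (l, k) ω) ^ 2 ≤ ε ^ 2} :=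
  uniform_wavelet_small_ball_general α δ γ B hα hδ hδγ hB β hβ P u humeas huindep hudist
end
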